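/- arXiv:2511.04885 — 7 statements merged into one kernel-verified Lean document; each statement's English description precedes it below -/
import Mathlib

section
/- Let d ≥ 1, let p : ℝ^d × ℝ^d → ℂ be smooth with p(x,ξ) ≠ 0 for all (x,ξ), let τ ≥ 1 be a natural number, and let θ, σ ∈ ℕ^d be multi-indices with |θ| + |σ| ≥ 1. Then there exist smooth functions P_1, …, P_{|θ|+|σ|} : ℝ^d × ℝ^d → ℂ such that ∂_x^θ ∂_ξ^σ (p(x,ξ)^{−τ}) = Σ_{j=1}^{|θ|+|σ|} P_j(x,ξ) / p(x,ξ)^{τ+j}, where each P_j is a finite ℂ-linear combination of products ∂_x^{θ₁}∂_ξ^{σ₁}p(x,ξ) ⋯ ∂_x^{θ_j}∂_ξ^{σ_j}p(x,ξ) over multi-indices with θ₁+⋯+θ_j = θ and σ₁+⋯+σ_j = σ. Moreover, if in addition there are constants c > 0 and m′, μ′ ∈ ℝ with |p(x,ξ)| ≥ c⟨x⟩^{m′}⟨ξ⟩^{μ′} for all (x,ξ), and constants C_{ab} > 0 with |∂_x^a ∂_ξ^b p(x,ξ)| ≤ C_{ab}|p(x,ξ)|⟨x⟩^{−|a|}⟨ξ⟩^{−|b|}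 for all multi-indices a, b with |a|+|b| ≥ 1 and all (x,ξ), then for each j there is a constant C > 0 with |P_j(x,ξ)/p(x,ξ)^{τ+j}| ≤ C ⟨x⟩^{−τ m′ −|θ|} ⟨ξ⟩^{−τ μ′ −|σ|} for all (x,ξ). -/
open MeasureTheory

/-- Partial derivative of a function on ℝ^d × ℝ^d in the i-th x-direction. -/
noncomputable def pderivFst {d : ℕ} (i : Fin d)
    (f : EuclideanSpace ℝ (Fin d) × EuclideanSpace ℝ (Fin d) → ℂ) :
    EuclideanSpace ℝ (Fin d) × EuclideanSpace ℝ (Fin d) → ℂ :=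
  fun z => fderiv ℝ f z (EuclideanSpace.single i 1, 0)

/-- Partial derivative of a function on ℝ^d × ℝ^d in the i-th ξ-direction. -/
noncomputable def pderivSnd {d : ℕ} (i : Fin d)
    (f : EuclideanSpace ℝ (Fin d) × EuclideanSpace ℝ (Fin d) → ℂ) :
    EuclideanSpace ℝ (Fin d) × EuclideanSpace ℝ (Fin d) → ℂ :=
  fun z => fderiv ℝ f z (0, EuclideanSpace.single i 1)

/-- Multi-index derivative ∂_x^θ ∂_ξ^σ of a function on ℝ^d × ℝ^d. -/
noncomputable def mderiv {d : ℕ} (θ σ : Fin d → ℕ)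
    (f : EuclideanSpace ℝ (Fin d) × EuclideanSpace ℝ (Fin d) → ℂ) :
    EuclideanSpace ℝ (Fin d) × EuclideanSpace ℝ (Fin d) → ℂ :=
  ((List.ofFn fun i : Fin d => (pderivFst i)^[θ i]).foldr (· ∘ ·) id)
    (((List.ofFn fun i : Fin d => (pderivSnd i)^[σ i]).foldr (· ∘ ·) id) f)

/-- The "Japanese bracket" ⟨x⟩ = (1 + |x|²)^{1/2}. -/
noncomputable def jb {d : ℕ} (x : EuclideanSpace ℝ (Fin d)) : ℝ :=
  Real.sqrt (1 + ‖x‖ ^ 2)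

noncomputable section
namespace DIPS


variable {E : Type*} [NormedAddCommGroup E] [NormedSpace ℝ E]

/-- Directional derivative operator. -/
def Dv (v : E) (f : E → ℂ) : E → ℂ := fun z => fderiv ℝ f z v

lemma Dv_contDiff {f : E → ℂ} (hf : ContDiff ℝ (⊤ : ℕ∞) f) (v : E) : ContDiff ℝ (⊤ : ℕ∞) (Dv v f) :=
  (ContinuousLinearMap.apply ℝ ℂ v).contDiff.comp (hf.fderiv_right (by simp))

lemma Dv_comm {f : E → ℂ} (hf : ContDiff ℝ (⊤ : ℕ∞) f) (v w : E) : Dv v (Dv w f) = Dv w (Dv v f) := by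
  funext x
  have hdiff : Differentiable ℝ (fderiv ℝ f) :=
    (hf.fderiv_right (by simp : ((⊤ : ℕ∞) : WithTop ℕ∞) + 1 ≤ ((⊤ : ℕ∞) : WithTop ℕ∞))).differentiable (by simp)
  have key : ∀ u : E, fderiv ℝ (fun y => fderiv ℝ f y u) x =
      (ContinuousLinearMap.apply ℝ ℂ u).comp (fderiv ℝ (fderiv ℝ f) x) := by
    intro u
    exact (((ContinuousLinearMap.apply ℝ ℂ u).hasFDerivAt).comp x
      (hdiff x).hasFDerivAt).fderiv
  have hsymm := (hf.contDiffAt (x := x)).isSymmSndFDerivAt (by norm_num; exact WithTop.coe_le_coe.mpr (le_top : (2 : ℕ∞) ≤ ⊤))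
  show fderiv ℝ (fun y => fderiv ℝ f y w) x v = fderiv ℝ (fun y => fderiv ℝ f y v) x w
  rw [key w, key v]
  simpa using hsymm v w

/-- Apply a list of directional derivatives, first entry outermost. -/
def DL (L : List E) (f : E → ℂ) : E → ℂ := L.foldr (fun v g => Dv v g) f

@[simp] lemma DL_nil (f : E → ℂ) : DL ([] : List E) f = f := rfl

@[simp] lemma DL_cons (v : E) (L : List E) (f : E → ℂ) : DL (v :: L) f = Dv v (DL L f) := rfl

lemma DL_append (L₁ L₂ : List E) (f : E → ℂ) : DL (L₁ ++ L₂) f = DL L₁ (DL L₂ f) :=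
  List.foldr_append ..

lemma DL_contDiff {f : E → ℂ} (hf : ContDiff ℝ (⊤ : ℕ∞) f) (L : List E) : ContDiff ℝ (⊤ : ℕ∞) (DL L f) := by
  induction L with
  | nil => exact hf
  | cons v L ih => exact Dv_contDiff ih v

lemma DL_perm {f : E → ℂ} (hf : ContDiff ℝ (⊤ : ℕ∞) f) {L₁ L₂ : List E} (h : L₁.Perm L₂) :
    DL L₁ f = DL L₂ f := by
  induction h with
  | nil => rfl
  | cons v _ ih => simp [DL_cons, ih]
  | swap v w L => simp [DL_cons, Dv_comm (DL_contDiff hf L) v w]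
  | trans _ _ ih₁ ih₂ => rw [ih₁, ih₂]

lemma DL_replicate (n : ℕ) (v : E) (f : E → ℂ) : DL (List.replicate n v) f = (Dv v)^[n] f := by
  induction n with
  | zero => rfl
  | succ n ih => rw [List.replicate_succ, DL_cons, ih, Function.iterate_succ_apply']

lemma DL_flatten_ofFn : ∀ (n : ℕ) (F : Fin n → List E) (g : E → ℂ),
    DL (List.ofFn F).flatten g =
      ((List.ofFn fun i => fun h => DL (F i) h).foldr (· ∘ ·) id) g := by
  intro n
  induction n with
  | zero => intro F g; simp [DL]
  | succ n ih =>
    intro F g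
    rw [List.ofFn_succ, List.ofFn_succ, List.flatten_cons, DL_append,
      List.foldr_cons]
    exact congrArg _ (ih _ g)

lemma ofFn_update_flatten_perm : ∀ (n : ℕ) (F : Fin n → List E) (i : Fin n) (a : E),
    (List.ofFn (Function.update F i (a :: F i))).flatten.Perm
      (a :: (List.ofFn F).flatten) := by
  intro n
  induction n with
  | zero => intro F i a; exact absurd i.2 (by simp)
  | succ n ih =>
    intro F i a
    rcases Fin.eq_zero_or_eq_succ i with rfl | ⟨j, rfl⟩
    · rw [List.ofFn_succ, List.ofFn_succ, Function.update_self, List.flatten_cons,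
        List.flatten_cons]
      have : (fun k : Fin n => Function.update F 0 (a :: F 0) k.succ) = fun k => F k.succ := by
        funext k; exact Function.update_of_ne (by simp [Fin.succ_ne_zero]) _ _
      rw [this]
      exact List.Perm.refl _
    · rw [List.ofFn_succ, List.ofFn_succ, List.flatten_cons, List.flatten_cons]
      have h0 : Function.update F j.succ (a :: F j.succ) 0 = F 0 :=
        Function.update_of_ne (by simp [(Fin.succ_ne_zero j).symm]) _ _
      have h1 : (fun k : Fin n => Function.update F j.succ (a :: F j.succ) k.succ) =
          Function.update (fun k : Fin n => F k.succ) j (a :: F j.succ) := by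
        funext k
        by_cases hk : k = j
        · subst hk; simp [Function.update_self]
        · rw [Function.update_of_ne (fun h => hk (Fin.succ_injective _ h)),
            Function.update_of_ne hk]
      rw [h0, h1]
      exact (List.Perm.append_left (F 0) (ih _ j _)).trans List.perm_middle



abbrev E2 (d : ℕ) := EuclideanSpace ℝ (Fin d) × EuclideanSpace ℝ (Fin d)

variable {d : ℕ}

def vF (i : Fin d) : E2 d := (EuclideanSpace.single i 1, 0)
def vS (i : Fin d) : E2 d := (0, EuclideanSpace.single i 1)

def LF (θ : Fin d → ℕ) : List (E2 d) :=
  (List.ofFn fun i => List.replicate (θ i) (vF i)).flatten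
def LS (σ : Fin d → ℕ) : List (E2 d) :=
  (List.ofFn fun i => List.replicate (σ i) (vS i)).flatten

lemma foldF (θ : Fin d → ℕ) (g : E2 d → ℂ) :
    ((List.ofFn fun i : Fin d => (pderivFst i)^[θ i]).foldr (· ∘ ·) id) g = DL (LF θ) g := by
  rw [LF, DL_flatten_ofFn]
  have : (List.ofFn fun i : Fin d => (pderivFst i)^[θ i]) =
      (List.ofFn fun i => fun h => DL (List.replicate (θ i) (vF i)) h) := by
    apply congrArg
    funext i h
    rw [DL_replicate]
    rfl
  rw [this]

lemma foldS (σ : Fin d → ℕ) (g : E2 d → ℂ) :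
    ((List.ofFn fun i : Fin d => (pderivSnd i)^[σ i]).foldr (· ∘ ·) id) g = DL (LS σ) g := by
  rw [LS, DL_flatten_ofFn]
  have : (List.ofFn fun i : Fin d => (pderivSnd i)^[σ i]) =
      (List.ofFn fun i => fun h => DL (List.replicate (σ i) (vS i)) h) := by
    apply congrArg
    funext i h
    rw [DL_replicate]
    rfl
  rw [this]

lemma mderiv_eq_DL (θ σ : Fin d → ℕ) (f : E2 d → ℂ) :
    mderiv θ σ f = DL (LF θ ++ LS σ) f := by
  rw [DL_append, mderiv, foldS, foldF]

lemma mderiv_contDiff {f : E2 d → ℂ} (hf : ContDiff ℝ (⊤ : ℕ∞) f) (θ σ : Fin d → ℕ) :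
    ContDiff ℝ (⊤ : ℕ∞) (mderiv θ σ f) := by
  rw [mderiv_eq_DL]; exact DL_contDiff hf _

lemma mderiv_zero (f : E2 d → ℂ) : mderiv (fun _ => 0) (fun _ => 0) f = f := by
  rw [mderiv_eq_DL]
  have h1 : LF (d := d) (fun _ => 0) = [] := by
    simp [LF]
  have h2 : LS (d := d) (fun _ => 0) = [] := by
    simp [LS]
  rw [h1, h2]
  rfl

lemma mderiv_update_fst {f : E2 d → ℂ} (hf : ContDiff ℝ (⊤ : ℕ∞) f) (θ σ : Fin d → ℕ) (i : Fin d) :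
    mderiv (Function.update θ i (θ i + 1)) σ f = pderivFst i (mderiv θ σ f) := by
  rw [mderiv_eq_DL, mderiv_eq_DL]
  have hlist : LF (Function.update θ i (θ i + 1)) =
      (List.ofFn (Function.update (fun j => List.replicate (θ j) (vF j)) i
        (vF i :: List.replicate (θ i) (vF i)))).flatten := by
    rw [LF]
    congr 1
    apply congrArg
    funext j
    by_cases h : j = i
    · subst h; simp [List.replicate_succ]
    · simp [Function.update_of_ne h]
  rw [hlist]
  have hperm := (ofFn_update_flatten_perm d (fun j => List.replicate (θ j) (vF j)) i
    (vF i)).append_right (LS σ)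
  rw [DL_perm hf hperm, List.cons_append, DL_cons]
  rfl

lemma mderiv_update_snd {f : E2 d → ℂ} (hf : ContDiff ℝ (⊤ : ℕ∞) f) (θ σ : Fin d → ℕ) (i : Fin d) :
    mderiv θ (Function.update σ i (σ i + 1)) f = pderivSnd i (mderiv θ σ f) := by
  rw [mderiv_eq_DL, mderiv_eq_DL]
  have hlist : LS (Function.update σ i (σ i + 1)) =
      (List.ofFn (Function.update (fun j => List.replicate (σ j) (vS j)) i
        (vS i :: List.replicate (σ i) (vS i)))).flatten := by
    rw [LS]
    congr 1
    apply congrArg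
    funext j
    by_cases h : j = i
    · subst h; simp [List.replicate_succ]
    · simp [Function.update_of_ne h]
  rw [hlist]
  have hperm := ((ofFn_update_flatten_perm d (fun j => List.replicate (σ j) (vS j)) i
    (vS i)).append_left (LF θ)).trans List.perm_middle
  rw [DL_perm hf hperm, DL_cons]
  rfl

lemma mderiv_single_fst {p : E2 d → ℂ} (hp : ContDiff ℝ (⊤ : ℕ∞) p) (i : Fin d) :
    mderiv (Function.update (fun _ => 0) i 1 : Fin d → ℕ) (fun _ => 0) p = pderivFst i p := by
  have := mderiv_update_fst hp (fun _ => 0) (fun _ => 0) i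
  rw [mderiv_zero] at this
  simpa using this

lemma mderiv_single_snd {p : E2 d → ℂ} (hp : ContDiff ℝ (⊤ : ℕ∞) p) (i : Fin d) :
    mderiv (fun _ => 0) (Function.update (fun _ => 0) i 1 : Fin d → ℕ) p = pderivSnd i p := by
  have := mderiv_update_snd hp (fun _ => 0) (fun _ => 0) i
  rw [mderiv_zero] at this
  simpa using this

section SpanMachinery

variable {d : ℕ} {p : E2 d → ℂ}

/-- The generating set of products of derivatives of `p`. -/
def SGen (p : E2 d → ℂ) (j : ℕ) (θ σ : Fin d → ℕ) : Set (E2 d → ℂ) :=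
  {g : E2 d → ℂ |
    ∃ θs σs : Fin j → (Fin d → ℕ),
      (∀ i, (∑ k, θs k i) = θ i) ∧ (∀ i, (∑ k, σs k i) = σ i) ∧
      g = fun z => ∏ k, mderiv (θs k) (σs k) p z}

lemma contDiff_finprod {ι : Type*} (s : Finset ι) (F : ι → E2 d → ℂ)
    (h : ∀ k, ContDiff ℝ (⊤ : ℕ∞) (F k)) : ContDiff ℝ (⊤ : ℕ∞) (fun z => ∏ k ∈ s, F k z) := by
  classical
  induction s using Finset.induction_on with
  | empty => simpa using contDiff_const
  | @insert a s' hk ih =>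
    simpa only [Finset.prod_insert hk] using (h a).mul ih

lemma span_smooth (hp : ContDiff ℝ (⊤ : ℕ∞) p) {j : ℕ} {θ σ : Fin d → ℕ} {g : E2 d → ℂ}
    (hg : g ∈ Submodule.span ℂ (SGen p j θ σ)) : ContDiff ℝ (⊤ : ℕ∞) g := by
  induction hg using Submodule.span_induction with
  | mem x hx =>
    obtain ⟨θs, σs, -, -, rfl⟩ := hx
    exact contDiff_finprod _ _ fun k => mderiv_contDiff hp _ _
  | zero => exact contDiff_const
  | add x y hx hy ihx ihy => exact ihx.add ihy
  | smul a x hx ih => exact ih.const_smul a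

lemma Dv_zero_fun (v : E2 d) : Dv v (0 : E2 d → ℂ) = 0 := by
  funext z
  show fderiv ℝ (fun _ => (0 : ℂ)) z v = 0
  simp [fderiv_const]

lemma Dv_add_fun (v : E2 d) {x y : E2 d → ℂ} (hx : ContDiff ℝ (⊤ : ℕ∞) x) (hy : ContDiff ℝ (⊤ : ℕ∞) y) :
    Dv v (x + y) = Dv v x + Dv v y := by
  funext z
  show fderiv ℝ (fun w => x w + y w) z v = fderiv ℝ x z v + fderiv ℝ y z v
  rw [fderiv_fun_add (hx.differentiable (by simp)).differentiableAt
    (hy.differentiable (by simp)).differentiableAt]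
  rfl

lemma Dv_smul_fun (v : E2 d) (a : ℂ) {x : E2 d → ℂ} (hx : ContDiff ℝ (⊤ : ℕ∞) x) :
    Dv v (a • x) = a • Dv v x := by
  funext z
  show fderiv ℝ (fun w => a • x w) z v = a • fderiv ℝ x z v
  rw [fderiv_fun_const_smul (hx.differentiable (by simp)).differentiableAt]
  rfl

/-- Leibniz: directional derivative of a finite product over `Fin j`. -/
lemma Dv_prod (hp : ContDiff ℝ (⊤ : ℕ∞) p) (v : E2 d) {j : ℕ}
    (θs σs : Fin j → (Fin d → ℕ)) (z : E2 d) :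
    Dv v (fun w => ∏ k, mderiv (θs k) (σs k) p w) z =
      ∑ k, (∏ l ∈ Finset.univ.erase k, mderiv (θs l) (σs l) p z) *
        Dv v (mderiv (θs k) (σs k) p) z := by
  classical
  have hder : ∀ k ∈ (Finset.univ : Finset (Fin j)), HasFDerivAt (fun w => mderiv (θs k) (σs k) p w)
      (fderiv ℝ (mderiv (θs k) (σs k) p) z) z := fun k _ =>
    (((mderiv_contDiff hp (θs k) (σs k)).differentiable (by simp)) z).hasFDerivAt
  have h := HasFDerivAt.finset_prod hder
  have := h.fderiv
  show fderiv ℝ (fun w => ∏ k, mderiv (θs k) (σs k) p w) z v = _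
  rw [this]
  simp only [ContinuousLinearMap.sum_apply, ContinuousLinearMap.smul_apply, smul_eq_mul]
  rfl

lemma span_deriv_fst (hp : ContDiff ℝ (⊤ : ℕ∞) p) {j : ℕ} {θ σ : Fin d → ℕ} {g : E2 d → ℂ}
    (hg : g ∈ Submodule.span ℂ (SGen p j θ σ)) (i : Fin d) :
    Dv (vF i) g ∈ Submodule.span ℂ (SGen p j (Function.update θ i (θ i + 1)) σ) := by
  classical
  induction hg using Submodule.span_induction with
  | mem x hx =>
    obtain ⟨θs, σs, hθs, hσs, rfl⟩ := hx
    have key : Dv (vF i) (fun w => ∏ k, mderiv (θs k) (σs k) p w) =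
        ∑ k : Fin j, fun z =>
          ∏ l, mderiv (Function.update θs k (Function.update (θs k) i (θs k i + 1)) l)
            (σs l) p z := by
      funext z
      rw [Dv_prod hp (vF i) θs σs z]
      rw [Finset.sum_apply]
      refine Finset.sum_congr rfl fun k _ => ?_
      have hfac : Dv (vF i) (mderiv (θs k) (σs k) p) =
          mderiv (Function.update (θs k) i (θs k i + 1)) (σs k) p :=
        (mderiv_update_fst hp (θs k) (σs k) i).symm
      have hup : (fun l => mderiv (Function.update θs k
            (Function.update (θs k) i (θs k i + 1)) l) (σs l) p z) =
          Function.update (fun l => mderiv (θs l) (σs l) p z) k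
            (mderiv (Function.update (θs k) i (θs k i + 1)) (σs k) p z) := by
        funext l
        by_cases hl : l = k
        · subst hl; simp
        · simp [Function.update_of_ne hl]
      rw [hup, Finset.prod_update_of_mem (Finset.mem_univ k), hfac, Finset.erase_eq]
      ring
    rw [key]
    refine Submodule.sum_mem _ fun k _ => Submodule.subset_span ?_
    refine ⟨Function.update θs k (Function.update (θs k) i (θs k i + 1)), σs, ?_, hσs, rfl⟩
    · intro i'
      have hfun : (fun l => Function.update θs k (Function.update (θs k) i (θs k i + 1)) l i') =
          Function.update (fun l => θs l i') k (Function.update (θs k) i (θs k i + 1) i') := by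
        funext l
        by_cases hl : l = k
        · subst hl; simp
        · simp [Function.update_of_ne hl]
      rw [hfun, Finset.sum_update_of_mem (Finset.mem_univ k)]
      have hsplit : θs k i' + ∑ x ∈ Finset.univ \ {k}, θs x i' = θ i' := by
        rw [← Finset.erase_eq]
        simpa [hθs i'] using Finset.add_sum_erase Finset.univ (fun x => θs x i') (Finset.mem_univ k)
      by_cases hi' : i' = i
      · subst hi'
        rw [Function.update_self, Function.update_self]
        omega
      · rw [Function.update_of_ne hi', Function.update_of_ne hi']
        omega
  | zero => rw [Dv_zero_fun]; exact Submodule.zero_mem _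
  | add x y hx hy ihx ihy =>
    rw [Dv_add_fun _ (span_smooth hp hx) (span_smooth hp hy)]
    exact Submodule.add_mem _ ihx ihy
  | smul a x hx ih =>
    rw [Dv_smul_fun _ a (span_smooth hp hx)]
    exact Submodule.smul_mem _ a ih

lemma span_deriv_snd (hp : ContDiff ℝ (⊤ : ℕ∞) p) {j : ℕ} {θ σ : Fin d → ℕ} {g : E2 d → ℂ}
    (hg : g ∈ Submodule.span ℂ (SGen p j θ σ)) (i : Fin d) :
    Dv (vS i) g ∈ Submodule.span ℂ (SGen p j θ (Function.update σ i (σ i + 1))) := by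
  classical
  induction hg using Submodule.span_induction with
  | mem x hx =>
    obtain ⟨θs, σs, hθs, hσs, rfl⟩ := hx
    have key : Dv (vS i) (fun w => ∏ k, mderiv (θs k) (σs k) p w) =
        ∑ k : Fin j, fun z =>
          ∏ l, mderiv (θs l)
            (Function.update σs k (Function.update (σs k) i (σs k i + 1)) l) p z := by
      funext z
      rw [Dv_prod hp (vS i) θs σs z]
      rw [Finset.sum_apply]
      refine Finset.sum_congr rfl fun k _ => ?_
      have hfac : Dv (vS i) (mderiv (θs k) (σs k) p) =
          mderiv (θs k) (Function.update (σs k) i (σs k i + 1)) p :=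
        (mderiv_update_snd hp (θs k) (σs k) i).symm
      have hup : (fun l => mderiv (θs l) (Function.update σs k
            (Function.update (σs k) i (σs k i + 1)) l) p z) =
          Function.update (fun l => mderiv (θs l) (σs l) p z) k
            (mderiv (θs k) (Function.update (σs k) i (σs k i + 1)) p z) := by
        funext l
        by_cases hl : l = k
        · subst hl; simp
        · simp [Function.update_of_ne hl]
      rw [hup, Finset.prod_update_of_mem (Finset.mem_univ k), hfac, Finset.erase_eq]
      ring
    rw [key]
    refine Submodule.sum_mem _ fun k _ => Submodule.subset_span ?_
    refine ⟨θs, Function.update σs k (Function.update (σs k) i (σs k i + 1)), hθs, ?_, rfl⟩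
    · intro i'
      have hfun : (fun l => Function.update σs k (Function.update (σs k) i (σs k i + 1)) l i') =
          Function.update (fun l => σs l i') k (Function.update (σs k) i (σs k i + 1) i') := by
        funext l
        by_cases hl : l = k
        · subst hl; simp
        · simp [Function.update_of_ne hl]
      rw [hfun, Finset.sum_update_of_mem (Finset.mem_univ k)]
      have hsplit : σs k i' + ∑ x ∈ Finset.univ \ {k}, σs x i' = σ i' := by
        rw [← Finset.erase_eq]
        simpa [hσs i'] using Finset.add_sum_erase Finset.univ (fun x => σs x i') (Finset.mem_univ k)
      by_cases hi' : i' = i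
      · subst hi'
        rw [Function.update_self, Function.update_self]
        omega
      · rw [Function.update_of_ne hi', Function.update_of_ne hi']
        omega
  | zero => rw [Dv_zero_fun]; exact Submodule.zero_mem _
  | add x y hx hy ihx ihy =>
    rw [Dv_add_fun _ (span_smooth hp hx) (span_smooth hp hy)]
    exact Submodule.add_mem _ ihx ihy
  | smul a x hx ih =>
    rw [Dv_smul_fun _ a (span_smooth hp hx)]
    exact Submodule.smul_mem _ a ih

lemma span_mul_mderiv {j : ℕ} {θ σ θ' σ' : Fin d → ℕ} {g : E2 d → ℂ}
    (hg : g ∈ Submodule.span ℂ (SGen p j θ σ)) (a b : Fin d → ℕ)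
    (hθ' : ∀ i, θ' i = θ i + a i) (hσ' : ∀ i, σ' i = σ i + b i) :
    (fun z => g z * mderiv a b p z) ∈ Submodule.span ℂ (SGen p (j + 1) θ' σ') := by
  classical
  induction hg using Submodule.span_induction with
  | mem x hx =>
    obtain ⟨θs, σs, hθs, hσs, rfl⟩ := hx
    refine Submodule.subset_span ⟨(Fin.snoc θs a : Fin (j+1) → Fin d → ℕ), (Fin.snoc σs b : Fin (j+1) → Fin d → ℕ), ?_, ?_, ?_⟩
    · intro i
      have hfun : (fun k : Fin (j+1) => (Fin.snoc θs a : Fin (j+1) → Fin d → ℕ) k i) =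
          Fin.snoc (fun k => θs k i) (a i) := by
        funext k
        induction k using Fin.lastCases with
        | last => simp
        | cast k => simp
      rw [hfun, Fin.sum_snoc, hθs i, hθ' i]
    · intro i
      have hfun : (fun k : Fin (j+1) => (Fin.snoc σs b : Fin (j+1) → Fin d → ℕ) k i) =
          Fin.snoc (fun k => σs k i) (b i) := by
        funext k
        induction k using Fin.lastCases with
        | last => simp
        | cast k => simp
      rw [hfun, Fin.sum_snoc, hσs i, hσ' i]
    · funext z
      have hfun : (fun k : Fin (j+1) => mderiv ((Fin.snoc θs a : Fin (j+1) → Fin d → ℕ) k) ((Fin.snoc σs b : Fin (j+1) → Fin d → ℕ) k) p z) =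
          Fin.snoc (fun k => mderiv (θs k) (σs k) p z) (mderiv a b p z) := by
        funext k
        induction k using Fin.lastCases with
        | last => simp
        | cast k => simp
      show (∏ k, mderiv (θs k) (σs k) p z) * mderiv a b p z = _
      rw [hfun, Fin.prod_snoc]
  | zero =>
    have : (fun z => (0 : E2 d → ℂ) z * mderiv a b p z) = 0 := by
      funext z; simp
    rw [this]; exact Submodule.zero_mem _
  | add x y hx hy ihx ihy =>
    have : (fun z => (x + y) z * mderiv a b p z) =
        (fun z => x z * mderiv a b p z) + fun z => y z * mderiv a b p z := by
      funext z; simp [add_mul]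
    rw [this]; exact Submodule.add_mem _ ihx ihy
  | smul c x hx ih =>
    have : (fun z => (c • x) z * mderiv a b p z) =
        c • fun z => x z * mderiv a b p z := by
      funext z; simp only [Pi.smul_apply, Pi.mul_apply, smul_eq_mul]; ring
    rw [this]; exact Submodule.smul_mem _ c ih

end SpanMachinery

section MainRep

variable {d : ℕ} {p : E2 d → ℂ}

lemma pderivFst_eq_Dv (i : Fin d) (g : E2 d → ℂ) : pderivFst i g = Dv (vF i) g := rfl
lemma pderivSnd_eq_Dv (i : Fin d) (g : E2 d → ℂ) : pderivSnd i g = Dv (vS i) g := rfl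

lemma Dv_term (hp : ContDiff ℝ (⊤ : ℕ∞) p) (hpne : ∀ z, p z ≠ 0) {g : E2 d → ℂ}
    (hg : ContDiff ℝ (⊤ : ℕ∞) g) (n : ℕ) (v : E2 d) (z : E2 d) :
    Dv v (fun w => g w / p w ^ n) z =
      Dv v g z / p z ^ n - ((n : ℕ) : ℂ) * g z * Dv v p z / p z ^ (n + 1) := by
  have hrw : (fun w => g w / p w ^ n) = fun w => g w * p w ^ (-(n : ℤ)) := by
    funext w
    rw [div_eq_mul_inv, ← zpow_natCast (p w) n, ← zpow_neg]
  have hq : HasFDerivAt (fun w => p w ^ (-(n : ℤ)))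
      ((((-(n : ℤ)) : ℂ) * p z ^ (-(n : ℤ) - 1)) • fderiv ℝ p z) z := by
    have h := (hasDerivAt_zpow (-(n : ℤ)) (p z) (Or.inl (hpne z))).comp_hasFDerivAt z
      ((hp.differentiable (by simp) z).hasFDerivAt)
    rw [← Int.cast_neg]
    exact h
  have hfd := fderiv_fun_mul ((hg.differentiable (by simp)).differentiableAt)
    hq.differentiableAt (x := z)
  rw [hrw]
  show fderiv ℝ (fun w => g w * p w ^ (-(n : ℤ))) z v = _
  rw [hfd, hq.fderiv]
  have h1 : p z ^ (-(n : ℤ)) = (p z ^ n)⁻¹ := by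
    rw [zpow_neg, zpow_natCast]
  have h2 : p z ^ (-(n : ℤ) - 1) = (p z ^ (n + 1))⁻¹ := by
    rw [show -(n : ℤ) - 1 = -((n + 1 : ℕ) : ℤ) by push_cast; ring, zpow_neg, zpow_natCast]
  simp only [ContinuousLinearMap.add_apply, ContinuousLinearMap.smul_apply, smul_eq_mul,
    h1, h2]
  show g z * ((-(n : ℤ) : ℂ) * (p z ^ (n + 1))⁻¹ * fderiv ℝ p z v) +
      (p z ^ n)⁻¹ * fderiv ℝ g z v =
    fderiv ℝ g z v / p z ^ n - ((n : ℕ) : ℂ) * g z * fderiv ℝ p z v / p z ^ (n + 1)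
  have hpz : p z ≠ 0 := hpne z
  push_cast
  field_simp
  ring

lemma Dv_sum {s : Finset ℕ} {F : ℕ → E2 d → ℂ} (h : ∀ j ∈ s, ContDiff ℝ (⊤ : ℕ∞) (F j))
    (v z : E2 d) :
    Dv v (fun w => ∑ j ∈ s, F j w) z = ∑ j ∈ s, Dv v (F j) z := by
  show fderiv ℝ _ z v = _
  rw [fderiv_fun_sum fun j hj => ((h j hj).differentiable (by simp)).differentiableAt]
  rw [ContinuousLinearMap.sum_apply]
  rfl

lemma inv_pow_smooth (hp : ContDiff ℝ (⊤ : ℕ∞) p) (hpne : ∀ z, p z ≠ 0) (τ : ℕ) :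
    ContDiff ℝ (⊤ : ℕ∞) (fun w => (p w) ^ (-(τ : ℤ))) := by
  have : (fun w => (p w) ^ (-(τ : ℤ))) = fun w => ((p w) ^ τ)⁻¹ := by
    funext w; rw [zpow_neg, zpow_natCast]
  rw [this]
  exact (hp.pow τ).inv fun w => pow_ne_zero τ (hpne w)

lemma sum_Icc_shift (N : ℕ) (f : ℕ → ℂ) :
    ∑ j ∈ Finset.Icc 1 (N + 1), f j = ∑ j ∈ Finset.Icc 0 N, f (j + 1) := by
  have h : Finset.Icc 1 (N + 1) = (Finset.Icc 0 N).map (addRightEmbedding 1) := by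
    rw [Finset.map_add_right_Icc]
  rw [h, Finset.sum_map]
  rfl

/-- The single induction step, shared between the `x`- and `ξ`-derivative cases. -/
lemma rep_step (hp : ContDiff ℝ (⊤ : ℕ∞) p) (hpne : ∀ z, p z ≠ 0) (τ N : ℕ)
    (θ σ θ₀ σ₀ : Fin d → ℕ) (v : E2 d)
    (hpeel : mderiv θ σ (fun w => p w ^ (-(τ : ℤ))) =
      Dv v (mderiv θ₀ σ₀ (fun w => p w ^ (-(τ : ℤ)))))
    (hspanD : ∀ (j : ℕ) (g : E2 d → ℂ), g ∈ Submodule.span ℂ (SGen p j θ₀ σ₀) →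
      Dv v g ∈ Submodule.span ℂ (SGen p j θ σ))
    (hspanM : ∀ (j : ℕ) (g : E2 d → ℂ), g ∈ Submodule.span ℂ (SGen p j θ₀ σ₀) →
      (fun z => g z * Dv v p z) ∈ Submodule.span ℂ (SGen p (j + 1) θ σ))
    (P₀ : ℕ → (E2 d → ℂ))
    (hmem₀ : ∀ j ∈ Finset.Icc 0 N, P₀ j ∈ Submodule.span ℂ (SGen p j θ₀ σ₀))
    (heq₀ : ∀ z, mderiv θ₀ σ₀ (fun w => p w ^ (-(τ : ℤ))) z =
      ∑ j ∈ Finset.Icc 0 N, P₀ j z / (p z) ^ (τ + j)) :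
    ∃ P : ℕ → (E2 d → ℂ),
      (∀ j ∈ Finset.Icc 0 (N + 1), P j ∈ Submodule.span ℂ (SGen p j θ σ)) ∧
      (∀ z, mderiv θ σ (fun w => (p w) ^ (-(τ : ℤ))) z =
        ∑ j ∈ Finset.Icc 0 (N + 1), P j z / (p z) ^ (τ + j)) := by
  classical
  set P : ℕ → (E2 d → ℂ) := fun j =>
    (if j ≤ N then Dv v (P₀ j) else 0) +
    (if 1 ≤ j then (-(((τ + (j - 1)) : ℕ) : ℂ)) • (fun z => P₀ (j - 1) z * Dv v p z) else 0)
    with hP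
  refine ⟨P, ?_, ?_⟩
  · intro j hj
    refine Submodule.add_mem _ ?_ ?_
    · by_cases hjN : j ≤ N
      · rw [if_pos hjN]
        exact hspanD j _ (hmem₀ j (Finset.mem_Icc.mpr ⟨Nat.zero_le _, hjN⟩))
      · rw [if_neg hjN]; exact Submodule.zero_mem _
    · by_cases hj1 : 1 ≤ j
      · rw [if_pos hj1]
        refine Submodule.smul_mem _ _ ?_
        have hjm : j - 1 ∈ Finset.Icc 0 N := by
          simp only [Finset.mem_Icc] at hj ⊢
          omega
        have h := hspanM (j - 1) _ (hmem₀ (j - 1) hjm)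
        rwa [Nat.sub_add_cancel hj1] at h
      · rw [if_neg hj1]; exact Submodule.zero_mem _
  · intro z
    rw [hpeel]
    have hrw : mderiv θ₀ σ₀ (fun w => p w ^ (-(τ : ℤ))) =
        fun w => ∑ j ∈ Finset.Icc 0 N, P₀ j w / (p w) ^ (τ + j) := funext heq₀
    rw [hrw]
    have hsm : ∀ j ∈ Finset.Icc 0 N, ContDiff ℝ (⊤ : ℕ∞) (fun w => P₀ j w / (p w) ^ (τ + j)) := by
      intro j hj
      have hrw2 : (fun w => P₀ j w / (p w) ^ (τ + j)) =
          fun w => P₀ j w * ((p w ^ (τ + j))⁻¹) := funext fun w => div_eq_mul_inv _ _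
      rw [hrw2]
      exact (span_smooth hp (hmem₀ j hj)).mul
        ((hp.pow (τ + j)).inv fun w => pow_ne_zero _ (hpne w))
    rw [Dv_sum hsm v z]
    have hterm : ∀ j ∈ Finset.Icc 0 N,
        Dv v (fun w => P₀ j w / (p w) ^ (τ + j)) z =
          Dv v (P₀ j) z / p z ^ (τ + j) -
            ((τ + j : ℕ) : ℂ) * P₀ j z * Dv v p z / p z ^ (τ + j + 1) :=
      fun j hj => Dv_term hp hpne (span_smooth hp (hmem₀ j hj)) (τ + j) v z
    rw [Finset.sum_congr rfl hterm]
    -- now compute the RHS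
    have hPapp : ∀ j, P j z / p z ^ (τ + j) =
        (if j ≤ N then Dv v (P₀ j) z else 0) / p z ^ (τ + j) +
        (if 1 ≤ j then (-(((τ + (j - 1)) : ℕ) : ℂ)) * (P₀ (j - 1) z * Dv v p z) else 0) /
          p z ^ (τ + j) := by
      intro j
      rw [hP]
      simp only [Pi.add_apply]
      rw [add_div]
      congr 1
      · congr 1
        split_ifs <;> rfl
      · congr 1
        split_ifs <;> simp
    rw [Finset.sum_congr rfl fun j _ => hPapp j, Finset.sum_add_distrib]
    have hSA : ∑ j ∈ Finset.Icc 0 (N + 1),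
        (if j ≤ N then Dv v (P₀ j) z else 0) / p z ^ (τ + j) =
        ∑ j ∈ Finset.Icc 0 N, Dv v (P₀ j) z / p z ^ (τ + j) := by
      rw [← Finset.sum_subset (Finset.Icc_subset_Icc_right (Nat.le_succ N))]
      · exact Finset.sum_congr rfl fun j hj => by
          rw [if_pos (Finset.mem_Icc.mp hj).2]
      · intro x hx hnx
        have : ¬ x ≤ N := fun h => hnx (Finset.mem_Icc.mpr ⟨Nat.zero_le _, h⟩)
        rw [if_neg this, zero_div]
    have hSB : ∑ j ∈ Finset.Icc 0 (N + 1),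
        (if 1 ≤ j then (-(((τ + (j - 1)) : ℕ) : ℂ)) * (P₀ (j - 1) z * Dv v p z) else 0) /
          p z ^ (τ + j) =
        ∑ j ∈ Finset.Icc 0 N,
          (-(((τ + j) : ℕ) : ℂ)) * (P₀ j z * Dv v p z) / p z ^ (τ + j + 1) := by
      rw [← Finset.sum_subset (show Finset.Icc 1 (N+1) ⊆ Finset.Icc 0 (N+1) from
          Finset.Icc_subset_Icc_left (Nat.zero_le 1))]
      · rw [sum_Icc_shift]
        refine Finset.sum_congr rfl fun j hj => ?_
        rw [if_pos (Nat.le_add_left 1 j)]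
        simp only [Nat.add_sub_cancel]
        ring_nf
      · intro x hx hnx
        have hx1 : ¬ 1 ≤ x := by
          simp only [Finset.mem_Icc] at hx hnx
          omega
        rw [if_neg hx1, zero_div]
    rw [hSA, hSB, ← Finset.sum_add_distrib]
    refine Finset.sum_congr rfl fun j hj => ?_
    push_cast
    ring

end MainRep

section MainRep2

variable {d : ℕ} {p : E2 d → ℂ}

lemma main_rep (hp : ContDiff ℝ (⊤ : ℕ∞) p) (hpne : ∀ z, p z ≠ 0) (τ : ℕ) :
    ∀ (N : ℕ) (θ σ : Fin d → ℕ), (∑ i, θ i) + (∑ i, σ i) = N →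
    ∃ P : ℕ → (E2 d → ℂ),
      (∀ j ∈ Finset.Icc 0 N, P j ∈ Submodule.span ℂ (SGen p j θ σ)) ∧
      (∀ z, mderiv θ σ (fun w => (p w) ^ (-(τ : ℤ))) z =
        ∑ j ∈ Finset.Icc 0 N, P j z / (p z) ^ (τ + j)) := by
  have hp₀ : ContDiff ℝ (⊤ : ℕ∞) (fun w => (p w) ^ (-(τ : ℤ))) := inv_pow_smooth hp hpne τ
  intro N
  induction N with
  | zero =>
    intro θ σ hsum
    have hθz : ∀ i, θ i = 0 := by
      intro i
      have h1 : (∑ i, θ i) = 0 := by omega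
      exact Finset.sum_eq_zero_iff.mp h1 i (Finset.mem_univ i)
    have hσz : ∀ i, σ i = 0 := by
      intro i
      have h1 : (∑ i, σ i) = 0 := by omega
      exact Finset.sum_eq_zero_iff.mp h1 i (Finset.mem_univ i)
    have hθ : θ = fun _ => 0 := funext hθz
    have hσ : σ = fun _ => 0 := funext hσz
    refine ⟨fun _ => fun _ => (1 : ℂ), ?_, ?_⟩
    · intro j hj
      simp only [Finset.mem_Icc, Nat.le_zero] at hj
      rcases hj with ⟨-, rfl⟩
      refine Submodule.subset_span ⟨(fun x => x.elim0), (fun x => x.elim0), ?_, ?_, ?_⟩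
      · intro i; simp [hθz i]
      · intro i; simp [hσz i]
      · funext z; simp
    · intro z
      rw [hθ, hσ, mderiv_zero]
      simp only [Finset.Icc_self, Finset.sum_singleton]
      rw [zpow_neg, zpow_natCast, Nat.add_zero, one_div]
  | succ N ih =>
    intro θ σ hsum
    by_cases hθex : ∃ i, θ i ≠ 0
    · obtain ⟨i, hi⟩ := hθex
      set θ₀ : Fin d → ℕ := Function.update θ i (θ i - 1) with hθ₀
      have hupdate : Function.update θ₀ i (θ₀ i + 1) = θ := by
        funext j
        by_cases hj : j = i
        · subst hj
          rw [Function.update_self, hθ₀, Function.update_self]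
          omega
        · rw [Function.update_of_ne hj, hθ₀, Function.update_of_ne hj]
      have hsum₀ : (∑ i', θ₀ i') + (∑ i', σ i') = N := by
        have h1 : ∑ x, θ₀ x = (θ i - 1) + ∑ x ∈ Finset.univ \ {i}, θ x := by
          rw [hθ₀]
          exact Finset.sum_update_of_mem (Finset.mem_univ i) θ (θ i - 1)
        have h2 : θ i + ∑ x ∈ Finset.univ \ {i}, θ x = ∑ x, θ x := by
          rw [← Finset.erase_eq]
          simpa using Finset.add_sum_erase Finset.univ θ (Finset.mem_univ i)
        omega
      obtain ⟨P₀, hmem₀, heq₀⟩ := ih θ₀ σ hsum₀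
      have hpeel : mderiv θ σ (fun w => p w ^ (-(τ : ℤ))) =
          Dv (vF i) (mderiv θ₀ σ (fun w => p w ^ (-(τ : ℤ)))) := by
        conv_lhs => rw [← hupdate]
        rw [mderiv_update_fst hp₀ θ₀ σ i, pderivFst_eq_Dv]
      have hspanD : ∀ (j : ℕ) (g : E2 d → ℂ), g ∈ Submodule.span ℂ (SGen p j θ₀ σ) →
          Dv (vF i) g ∈ Submodule.span ℂ (SGen p j θ σ) := by
        intro j g hg
        have h := span_deriv_fst hp hg i
        rwa [hupdate] at h
      have hspanM : ∀ (j : ℕ) (g : E2 d → ℂ), g ∈ Submodule.span ℂ (SGen p j θ₀ σ) →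
          (fun z => g z * Dv (vF i) p z) ∈ Submodule.span ℂ (SGen p (j + 1) θ σ) := by
        intro j g hg
        have h := span_mul_mderiv hg (Function.update (fun _ => 0) i 1) (fun _ => 0)
          (θ' := θ) (σ' := σ) ?_ ?_
        · rwa [mderiv_single_fst hp i, pderivFst_eq_Dv] at h
        · intro i'
          by_cases hii : i' = i
          · subst hii
            rw [hθ₀]
            simp only [Function.update_self]
            omega
          · rw [hθ₀, Function.update_of_ne hii, Function.update_of_ne hii]
            omega
        · intro i'; simp
      exact rep_step hp hpne τ N θ σ θ₀ σ (vF i) hpeel hspanD hspanM P₀ hmem₀ heq₀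
    · push_neg at hθex
      have hσex : ∃ i, σ i ≠ 0 := by
        by_contra hc
        push_neg at hc
        have h1 : (∑ i, θ i) = 0 := Finset.sum_eq_zero fun i _ => hθex i
        have h2 : (∑ i, σ i) = 0 := Finset.sum_eq_zero fun i _ => hc i
        omega
      obtain ⟨i, hi⟩ := hσex
      set σ₀ : Fin d → ℕ := Function.update σ i (σ i - 1) with hσ₀
      have hupdate : Function.update σ₀ i (σ₀ i + 1) = σ := by
        funext j
        by_cases hj : j = i
        · subst hj
          rw [Function.update_self, hσ₀, Function.update_self]
          omega
        · rw [Function.update_of_ne hj, hσ₀, Function.update_of_ne hj]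
      have hsum₀ : (∑ i', θ i') + (∑ i', σ₀ i') = N := by
        have h1 : ∑ x, σ₀ x = (σ i - 1) + ∑ x ∈ Finset.univ \ {i}, σ x := by
          rw [hσ₀]
          exact Finset.sum_update_of_mem (Finset.mem_univ i) σ (σ i - 1)
        have h2 : σ i + ∑ x ∈ Finset.univ \ {i}, σ x = ∑ x, σ x := by
          rw [← Finset.erase_eq]
          simpa using Finset.add_sum_erase Finset.univ σ (Finset.mem_univ i)
        omega
      obtain ⟨P₀, hmem₀, heq₀⟩ := ih θ σ₀ hsum₀
      have hpeel : mderiv θ σ (fun w => p w ^ (-(τ : ℤ))) =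
          Dv (vS i) (mderiv θ σ₀ (fun w => p w ^ (-(τ : ℤ)))) := by
        conv_lhs => rw [← hupdate]
        rw [mderiv_update_snd hp₀ θ σ₀ i, pderivSnd_eq_Dv]
      have hspanD : ∀ (j : ℕ) (g : E2 d → ℂ), g ∈ Submodule.span ℂ (SGen p j θ σ₀) →
          Dv (vS i) g ∈ Submodule.span ℂ (SGen p j θ σ) := by
        intro j g hg
        have h := span_deriv_snd hp hg i
        rwa [hupdate] at h
      have hspanM : ∀ (j : ℕ) (g : E2 d → ℂ), g ∈ Submodule.span ℂ (SGen p j θ σ₀) →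
          (fun z => g z * Dv (vS i) p z) ∈ Submodule.span ℂ (SGen p (j + 1) θ σ) := by
        intro j g hg
        have h := span_mul_mderiv hg (fun _ => 0) (Function.update (fun _ => 0) i 1)
          (θ' := θ) (σ' := σ) ?_ ?_
        · rwa [mderiv_single_snd hp i, pderivSnd_eq_Dv] at h
        · intro i'; simp
        · intro i'
          by_cases hii : i' = i
          · subst hii
            rw [hσ₀]
            simp only [Function.update_self]
            omega
          · rw [hσ₀, Function.update_of_ne hii, Function.update_of_ne hii]
            omega
      exact rep_step hp hpne τ N θ σ θ σ₀ (vS i) hpeel hspanD hspanM P₀ hmem₀ heq₀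

end MainRep2

section Bounds

variable {d : ℕ} {p : E2 d → ℂ}

lemma jb_pos (x : EuclideanSpace ℝ (Fin d)) : 0 < jb x :=
  Real.sqrt_pos.mpr (by positivity)

lemma span_bound (hub : ∀ a b : Fin d → ℕ, 1 ≤ (∑ i, a i) + (∑ i, b i) →
      ∃ Cab > (0 : ℝ), ∀ z,
        ‖mderiv a b p z‖ ≤
          Cab * ‖p z‖ *
            jb z.1 ^ (-((∑ i, a i : ℕ) : ℝ)) *
            jb z.2 ^ (-((∑ i, b i : ℕ) : ℝ)))
    {j : ℕ} {θ σ : Fin d → ℕ} {g : E2 d → ℂ}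
    (hg : g ∈ Submodule.span ℂ (SGen p j θ σ)) :
    ∃ C ≥ (0 : ℝ), ∀ z,
      ‖g z‖ ≤ C * ‖p z‖ ^ j *
        jb z.1 ^ (-((∑ i, θ i : ℕ) : ℝ)) * jb z.2 ^ (-((∑ i, σ i : ℕ) : ℝ)) := by
  induction hg using Submodule.span_induction with
  | mem x hx =>
    obtain ⟨θs, σs, hθs, hσs, rfl⟩ := hx
    have hfac : ∀ k : Fin j, ∃ C > (0 : ℝ), ∀ z,
        ‖mderiv (θs k) (σs k) p z‖ ≤
          C * ‖p z‖ * jb z.1 ^ (-((∑ i, θs k i : ℕ) : ℝ)) *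
            jb z.2 ^ (-((∑ i, σs k i : ℕ) : ℝ)) := by
      intro k
      by_cases hk : 1 ≤ (∑ i, θs k i) + (∑ i, σs k i)
      · exact hub (θs k) (σs k) hk
      · refine ⟨1, one_pos, fun z => ?_⟩
        have hθk : θs k = fun _ => 0 := by
          funext i'
          have h1 : (∑ i, θs k i) = 0 := by omega
          exact Finset.sum_eq_zero_iff.mp h1 i' (Finset.mem_univ i')
        have hσk : σs k = fun _ => 0 := by
          funext i'
          have h1 : (∑ i, σs k i) = 0 := by omega
          exact Finset.sum_eq_zero_iff.mp h1 i' (Finset.mem_univ i')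
        rw [hθk, hσk, mderiv_zero]
        simp [hθk, hσk]
    choose C hCpos hC using hfac
    refine ⟨∏ k, C k, Finset.prod_nonneg fun k _ => (hCpos k).le, fun z => ?_⟩
    set X := jb z.1 with hXdef
    set Y := jb z.2 with hYdef
    have hX : (0 : ℝ) < X := jb_pos _
    have hY : (0 : ℝ) < Y := jb_pos _
    have habs : ‖∏ k, mderiv (θs k) (σs k) p z‖ =
        ∏ k, ‖mderiv (θs k) (σs k) p z‖ := norm_prod _ _
    rw [habs]
    calc ∏ k, ‖mderiv (θs k) (σs k) p z‖
        ≤ ∏ k, (C k * ‖p z‖ * X ^ (-((∑ i, θs k i : ℕ) : ℝ)) *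
            Y ^ (-((∑ i, σs k i : ℕ) : ℝ))) :=
          Finset.prod_le_prod (fun k _ => norm_nonneg _) (fun k _ => hC k z)
      _ = (∏ k, C k) * ‖p z‖ ^ j *
            X ^ (-((∑ i, θ i : ℕ) : ℝ)) * Y ^ (-((∑ i, σ i : ℕ) : ℝ)) := by
          rw [Finset.prod_mul_distrib, Finset.prod_mul_distrib, Finset.prod_mul_distrib]
          have hA : ∏ _k : Fin j, ‖p z‖ = ‖p z‖ ^ j := by
            rw [Finset.prod_const, Finset.card_univ, Fintype.card_fin]
          have hXs : ∏ k, X ^ (-((∑ i, θs k i : ℕ) : ℝ)) = X ^ (-((∑ i, θ i : ℕ) : ℝ)) := by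
            have h1 : ∀ k : Fin j, X ^ (-((∑ i, θs k i : ℕ) : ℝ)) =
                (X ^ (∑ i, θs k i))⁻¹ := fun k => by
              rw [← Real.rpow_natCast X (∑ i, θs k i), ← Real.rpow_neg hX.le]
            rw [Finset.prod_congr rfl fun k _ => h1 k, Finset.prod_inv_distrib,
              Finset.prod_pow_eq_pow_sum]
            have h2 : ∑ k : Fin j, ∑ i, θs k i = ∑ i, θ i := by
              rw [Finset.sum_comm]
              exact Finset.sum_congr rfl fun i _ => hθs i
            rw [h2, ← Real.rpow_natCast X (∑ i, θ i), ← Real.rpow_neg hX.le]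
          have hYs : ∏ k, Y ^ (-((∑ i, σs k i : ℕ) : ℝ)) = Y ^ (-((∑ i, σ i : ℕ) : ℝ)) := by
            have h1 : ∀ k : Fin j, Y ^ (-((∑ i, σs k i : ℕ) : ℝ)) =
                (Y ^ (∑ i, σs k i))⁻¹ := fun k => by
              rw [← Real.rpow_natCast Y (∑ i, σs k i), ← Real.rpow_neg hY.le]
            rw [Finset.prod_congr rfl fun k _ => h1 k, Finset.prod_inv_distrib,
              Finset.prod_pow_eq_pow_sum]
            have h2 : ∑ k : Fin j, ∑ i, σs k i = ∑ i, σ i := by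
              rw [Finset.sum_comm]
              exact Finset.sum_congr rfl fun i _ => hσs i
            rw [h2, ← Real.rpow_natCast Y (∑ i, σ i), ← Real.rpow_neg hY.le]
          rw [hA, hXs, hYs]
  | zero =>
    exact ⟨0, le_refl 0, fun z => by simp⟩
  | add x y hx hy ihx ihy =>
    obtain ⟨C₁, hC₁, h₁⟩ := ihx
    obtain ⟨C₂, hC₂, h₂⟩ := ihy
    refine ⟨C₁ + C₂, by linarith, fun z => ?_⟩
    have := (h₁ z).trans_eq rfl
    calc ‖(x + y) z‖ ≤ ‖x z‖ + ‖y z‖ := by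
          simpa using norm_add_le (x z) (y z)
      _ ≤ (C₁ + C₂) * ‖p z‖ ^ j *
            jb z.1 ^ (-((∑ i, θ i : ℕ) : ℝ)) * jb z.2 ^ (-((∑ i, σ i : ℕ) : ℝ)) := by
          have hz1 := h₁ z
          have hz2 := h₂ z
          nlinarith [hz1, hz2]
  | smul a x hx ih =>
    obtain ⟨C₁, hC₁, h₁⟩ := ih
    refine ⟨‖a‖ * C₁, mul_nonneg (norm_nonneg _) hC₁, fun z => ?_⟩
    have : ‖(a • x) z‖ = ‖a‖ * ‖x z‖ := by
      simp [norm_mul]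
    rw [this]
    have hz := h₁ z
    have habs : (0 : ℝ) ≤ ‖a‖ := norm_nonneg _
    nlinarith [hz, habs]

lemma bound_final (hub : ∀ a b : Fin d → ℕ, 1 ≤ (∑ i, a i) + (∑ i, b i) →
      ∃ Cab > (0 : ℝ), ∀ z,
        ‖mderiv a b p z‖ ≤
          Cab * ‖p z‖ *
            jb z.1 ^ (-((∑ i, a i : ℕ) : ℝ)) *
            jb z.2 ^ (-((∑ i, b i : ℕ) : ℝ)))
    (c m' μ' : ℝ) (hc : 0 < c)
    (hlow : ∀ z, c * jb z.1 ^ m' * jb z.2 ^ μ' ≤ ‖p z‖)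
    (τ j : ℕ) {θ σ : Fin d → ℕ} {g : E2 d → ℂ}
    (hg : g ∈ Submodule.span ℂ (SGen p j θ σ)) :
    ∃ C > (0 : ℝ), ∀ z,
      ‖g z / (p z) ^ (τ + j)‖ ≤
        C * jb z.1 ^ (-(τ : ℝ) * m' - ((∑ i, θ i : ℕ) : ℝ)) *
          jb z.2 ^ (-(τ : ℝ) * μ' - ((∑ i, σ i : ℕ) : ℝ)) := by
  obtain ⟨C₀, hC₀nn, hC₀⟩ := span_bound hub hg
  refine ⟨C₀ * (c ^ τ)⁻¹ + 1, by positivity, fun z => ?_⟩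
  set C := C₀ * (c ^ τ)⁻¹ + 1 with hCdef
  set X := jb z.1 with hXdef
  set Y := jb z.2 with hYdef
  have hX : (0 : ℝ) < X := jb_pos _
  have hY : (0 : ℝ) < Y := jb_pos _
  set A := ‖p z‖ with hAdef
  have hL : (0 : ℝ) < c * X ^ m' * Y ^ μ' := by positivity
  have hA : (0 : ℝ) < A := lt_of_lt_of_le hL (hlow z)
  set a := X ^ (-((∑ i, θ i : ℕ) : ℝ)) with hadef
  set b := Y ^ (-((∑ i, σ i : ℕ) : ℝ)) with hbdef
  have ha : (0 : ℝ) < a := Real.rpow_pos_of_pos hX _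
  have hb : (0 : ℝ) < b := Real.rpow_pos_of_pos hY _
  have hstep1 : ‖g z / (p z) ^ (τ + j)‖ ≤ (C₀ * A ^ j * a * b) / A ^ (τ + j) := by
    rw [norm_div, norm_pow]
    gcongr
    exact hC₀ z
  have hstep2 : (C₀ * A ^ j * a * b) / A ^ (τ + j) = (C₀ * a * b) / A ^ τ := by
    rw [pow_add]
    field_simp
  have hstep3 : (C₀ * a * b) / A ^ τ ≤ (C₀ * a * b) / (c * X ^ m' * Y ^ μ') ^ τ := by
    have hAA := hlow z
    gcongr
  have hLpow : (c * X ^ m' * Y ^ μ') ^ τ = c ^ τ * X ^ (m' * (τ : ℝ)) * Y ^ (μ' * (τ : ℝ)) := by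
    rw [mul_pow, mul_pow, ← Real.rpow_natCast (X ^ m') τ, ← Real.rpow_natCast (Y ^ μ') τ,
      ← Real.rpow_mul hX.le, ← Real.rpow_mul hY.le]
  have hXe : X ^ (-(τ : ℝ) * m' - ((∑ i, θ i : ℕ) : ℝ)) = a * (X ^ (m' * (τ : ℝ)))⁻¹ := by
    rw [hadef, ← Real.rpow_neg hX.le, ← Real.rpow_add hX]
    ring_nf
  have hYe : Y ^ (-(τ : ℝ) * μ' - ((∑ i, σ i : ℕ) : ℝ)) = b * (Y ^ (μ' * (τ : ℝ)))⁻¹ := by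
    rw [hbdef, ← Real.rpow_neg hY.le, ← Real.rpow_add hY]
    ring_nf
  have hXp : (0 : ℝ) < X ^ (m' * (τ : ℝ)) := Real.rpow_pos_of_pos hX _
  have hYp : (0 : ℝ) < Y ^ (μ' * (τ : ℝ)) := Real.rpow_pos_of_pos hY _
  have hC2 : C₀ ≤ C * c ^ τ := by
    have hcp : (0 : ℝ) < c ^ τ := pow_pos hc τ
    rw [hCdef]
    rw [add_mul, one_mul]
    have : C₀ * (c ^ τ)⁻¹ * c ^ τ = C₀ := by field_simp
    nlinarith [this, hcp]
  have hstep4 : (C₀ * a * b) / (c * X ^ m' * Y ^ μ') ^ τ ≤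
      C * X ^ (-(τ : ℝ) * m' - ((∑ i, θ i : ℕ) : ℝ)) *
        Y ^ (-(τ : ℝ) * μ' - ((∑ i, σ i : ℕ) : ℝ)) := by
    rw [hLpow, hXe, hYe]
    have hre : C * (a * (X ^ (m' * (τ:ℝ)))⁻¹) * (b * (Y ^ (μ' * (τ:ℝ)))⁻¹) =
        (C * c ^ τ * a * b) / (c ^ τ * X ^ (m' * (τ:ℝ)) * Y ^ (μ' * (τ:ℝ))) := by
      field_simp
    rw [hre]
    gcongr
  calc ‖g z / (p z) ^ (τ + j)‖ ≤ (C₀ * A ^ j * a * b) / A ^ (τ + j) := hstep1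
    _ = (C₀ * a * b) / A ^ τ := hstep2
    _ ≤ (C₀ * a * b) / (c * X ^ m' * Y ^ μ') ^ τ := hstep3
    _ ≤ _ := hstep4

end Bounds

end DIPS
end

/-- **Lemma on derivatives of powers of a non-vanishing symbol.**
Let p : ℝ^d × ℝ^d → ℂ be smooth and non-vanishing, τ ≥ 1 a natural number, and
θ, σ multi-indices with |θ| + |σ| ≥ 1. Then there exist smooth functions
P_1, …, P_{|θ|+|σ|} with
∂_x^θ ∂_ξ^σ (p^{−τ}) = Σ_{j=1}^{|θ|+|σ|} P_j / p^{τ+j},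
where each P_j is a finite ℂ-linear combination of products
∂_x^{θ₁}∂_ξ^{σ₁}p ⋯ ∂_x^{θ_j}∂_ξ^{σ_j}p with θ₁+⋯+θ_j = θ and σ₁+⋯+σ_j = σ.
Moreover, under SG-hypoellipticity hypotheses on p, each quotient P_j/p^{τ+j}
satisfies the bound |P_j(x,ξ)/p(x,ξ)^{τ+j}| ≤ C ⟨x⟩^{−τm′−|θ|} ⟨ξ⟩^{−τμ′−|σ|}. -/

theorem deriv_of_inverse_power_of_symbol
    (d : ℕ) (hd : 1 ≤ d)
    (p : EuclideanSpace ℝ (Fin d) × EuclideanSpace ℝ (Fin d) → ℂ)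
    (hp : ContDiff ℝ (⊤ : ℕ∞) p) (hpne : ∀ z, p z ≠ 0)
    (τ : ℕ) (hτ : 1 ≤ τ)
    (θ σ : Fin d → ℕ) (hθσ : 1 ≤ (∑ i, θ i) + (∑ i, σ i)) :
    ∃ P : ℕ → (EuclideanSpace ℝ (Fin d) × EuclideanSpace ℝ (Fin d) → ℂ),
      (∀ j ∈ Finset.Icc 1 ((∑ i, θ i) + (∑ i, σ i)), ContDiff ℝ (⊤ : ℕ∞) (P j)) ∧
      (∀ z, mderiv θ σ (fun w => (p w) ^ (-(τ : ℤ))) z =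
        ∑ j ∈ Finset.Icc 1 ((∑ i, θ i) + (∑ i, σ i)),
          P j z / (p z) ^ (τ + j)) ∧
      (∀ j ∈ Finset.Icc 1 ((∑ i, θ i) + (∑ i, σ i)),
        P j ∈ Submodule.span ℂ
          {g : EuclideanSpace ℝ (Fin d) × EuclideanSpace ℝ (Fin d) → ℂ |
            ∃ θs σs : Fin j → (Fin d → ℕ),
              (∀ i, (∑ k, θs k i) = θ i) ∧ (∀ i, (∑ k, σs k i) = σ i) ∧
              g = fun z => ∏ k, mderiv (θs k) (σs k) p z}) ∧
      (∀ (c m' μ' : ℝ), 0 < c →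
        (∀ z, c * jb z.1 ^ m' * jb z.2 ^ μ' ≤ ‖p z‖) →
        (∀ a b : Fin d → ℕ, 1 ≤ (∑ i, a i) + (∑ i, b i) →
          ∃ Cab > (0 : ℝ), ∀ z,
            ‖mderiv a b p z‖ ≤
              Cab * ‖p z‖ *
                jb z.1 ^ (-((∑ i, a i : ℕ) : ℝ)) *
                jb z.2 ^ (-((∑ i, b i : ℕ) : ℝ))) →
        ∀ j ∈ Finset.Icc 1 ((∑ i, θ i) + (∑ i, σ i)),
          ∃ C > (0 : ℝ), ∀ z,
            ‖P j z / (p z) ^ (τ + j)‖ ≤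
              C * jb z.1 ^ (-(τ : ℝ) * m' - ((∑ i, θ i : ℕ) : ℝ)) *
                jb z.2 ^ (-(τ : ℝ) * μ' - ((∑ i, σ i : ℕ) : ℝ))) := by
  obtain ⟨P, hmem, heq⟩ := DIPS.main_rep hp hpne τ ((∑ i, θ i) + (∑ i, σ i)) θ σ rfl
  have hP0 : P 0 = 0 := by
    have h0 := hmem 0 (by simp)
    have hempty : DIPS.SGen p 0 θ σ = ∅ := by
      rw [Set.eq_empty_iff_forall_notMem]
      rintro g ⟨θs, σs, hθs, hσs, -⟩
      have h1 : ∀ i, θ i = 0 := fun i => by simpa using (hθs i).symm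
      have h2 : ∀ i, σ i = 0 := fun i => by simpa using (hσs i).symm
      have h3 : (∑ i, θ i) + (∑ i, σ i) = 0 := by
        rw [Finset.sum_eq_zero (fun i _ => h1 i), Finset.sum_eq_zero (fun i _ => h2 i)]
        rfl
      omega
    rw [hempty, Submodule.span_empty, Submodule.mem_bot] at h0
    exact h0
  refine ⟨P, ?_, ?_, ?_, ?_⟩
  · intro j hj
    exact DIPS.span_smooth hp
      (hmem j (Finset.mem_Icc.mpr ⟨Nat.zero_le _, (Finset.mem_Icc.mp hj).2⟩))
  · intro z
    rw [heq z]
    refine (Finset.sum_subset (Finset.Icc_subset_Icc_left (Nat.zero_le 1)) ?_).symm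
    intro x hx hnx
    have hx0 : x = 0 := by
      simp only [Finset.mem_Icc] at hx hnx
      omega
    subst hx0
    rw [hP0]
    simp
  · intro j hj
    exact hmem j (Finset.mem_Icc.mpr ⟨Nat.zero_le _, (Finset.mem_Icc.mp hj).2⟩)
  · intro c m' μ' hc hlow hub j hj
    exact DIPS.bound_final hub c m' μ' hc hlow τ j
      (hmem j (Finset.mem_Icc.mpr ⟨Nat.zero_le _, (Finset.mem_Icc.mp hj).2⟩))
end

section
/- Let α ∈ (0,1) and β < 1+α. Then for every k ∈ ℕ there exists a constant C_k > 0, depending only on α, β and k, such that for all real s ∈ (0,1]: |∫₀^∞ ω^k e^{−sω} ψ_{α,β}(ω) dω| ≤ C_k s^{−max(k−β+1, 0)} if β ≠ 1, and |∫₀^∞ ω^k e^{−sω} ψ_{α,1}(ω) dω| ≤ C_k s^{−max(k−α, 0)} if β = 1; in particular the integrals converge absolutely for every s > 0. -/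
open MeasureTheory

/-- The function ψ_{α,β}(ω) = (ω^{2α−β} sin(πβ) − ω^{α−β} sin(π(β−α)))
/ (ω^{2α} + 2ω^α cos(πα) + 1) for ω > 0. -/
noncomputable def psiml (α β : ℝ) (ω : ℝ) : ℝ :=
  (ω ^ (2 * α - β) * Real.sin (Real.pi * β) -
      ω ^ (α - β) * Real.sin (Real.pi * (β - α))) /
    (ω ^ (2 * α) + 2 * ω ^ α * Real.cos (Real.pi * α) + 1)

open Real Set

/-!
The denominator of `psiml α β` equals `(ω ^ α + cos πα) ^ 2 + sin² πα` and also
`(ω ^ α cos πα + 1) ^ 2 + ω ^ (2α) sin² πα`, so it is at least `sin² πα` and at least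
`ω ^ (2α) sin² πα`. Hence `ψ_{α,β}(ω) = O(ω ^ (α - β))` as `ω → 0`, integrable since `β < 1 + α`,
and `ψ_{α,β}(ω) = O(ω ^ (-β))` as `ω → ∞`, improving to `O(ω ^ (-1 - α))` for `β = 1` because
`sin (π β)` then kills the leading term of the numerator. For `g` with power bounds `ω ^ p` at `0`
and `ω ^ q` at `∞`, the part of `∫₀^∞ ω ^ k e^{-sω} g` over `(0, 1]` is bounded uniformly in `s`,
and the part over `(1, ∞)` by `∫₁^∞ ω ^ (k + q) e^{-sω}`, which is bounded when `k + q < -1` and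
at most `Γ(k + q + 1) s ^ (-(k + q + 1))` when `k + q > -1`.
-/

section RpowExp

variable {q s : ℝ}

lemma integrableOn_Ioi_one_rpow_mul_exp_neg_mul (q : ℝ) (hs : 0 < s) :
    IntegrableOn (fun ω : ℝ => ω ^ q * exp (-s * ω)) (Ioi 1) := by
  have h_dom : IntegrableOn (fun ω : ℝ => ω ^ max q 0 * exp (-s * ω)) (Ioi 1) := by
    simpa only [rpow_one] using (integrableOn_rpow_mul_exp_neg_mul_rpow
      (neg_one_lt_zero.trans_le (le_max_right q 0)) one_pos hs).mono_set
        (Ioi_subset_Ioi zero_le_one)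
  refine h_dom.mono' (by fun_prop) ?_
  filter_upwards [ae_restrict_mem measurableSet_Ioi] with ω (hω : 1 < ω)
  rw [norm_of_nonneg (by positivity)]
  gcongr
  exacts [hω.le, le_max_left q 0]

lemma setIntegral_Ioi_one_rpow_mul_exp_neg_mul_le_of_lt (hq : q < -1) (hs : 0 < s) :
    ∫ ω in Ioi 1, ω ^ q * exp (-s * ω) ≤ -1 / (q + 1) := by
  calc ∫ ω in Ioi 1, ω ^ q * exp (-s * ω) ≤ ∫ ω in Ioi (1 : ℝ), ω ^ q := by
        refine setIntegral_mono_on (integrableOn_Ioi_one_rpow_mul_exp_neg_mul q hs)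
          (integrableOn_Ioi_rpow_of_lt hq one_pos) measurableSet_Ioi fun ω (hω : 1 < ω) => ?_
        have : exp (-s * ω) ≤ 1 := exp_le_one_iff.mpr (by nlinarith)
        have : 0 ≤ ω ^ q := by positivity
        nlinarith
    _ = -1 / (q + 1) := by rw [integral_Ioi_rpow_of_lt hq one_pos, one_rpow]

lemma setIntegral_Ioi_one_rpow_mul_exp_neg_mul_le_Gamma (hq : -1 < q) (hs : 0 < s) :
    ∫ ω in Ioi 1, ω ^ q * exp (-s * ω) ≤ Gamma (q + 1) * s ^ (-(q + 1)) := by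
  calc ∫ ω in Ioi 1, ω ^ q * exp (-s * ω) ≤ ∫ ω in Ioi 0, ω ^ q * exp (-s * ω) := by
        refine setIntegral_mono_set ?_ ?_ (Ioi_subset_Ioi zero_le_one).eventuallyLE
        · simpa only [rpow_one] using integrableOn_rpow_mul_exp_neg_mul_rpow hq one_pos hs
        · filter_upwards [ae_restrict_mem measurableSet_Ioi] with ω (hω : 0 < ω)
          positivity
    _ = Gamma (q + 1) * s ^ (-(q + 1)) := by
        have := integral_rpow_mul_exp_neg_mul_Ioi (by linarith : 0 < q + 1) hs
        simp only [add_sub_cancel_right, ← neg_mul] at this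
        rw [this, one_div, inv_rpow hs.le, rpow_neg hs.le, mul_comm]

lemma exists_setIntegral_Ioi_one_rpow_mul_exp_neg_mul_le (hq : q ≠ -1) :
    ∃ B, ∀ s, 0 < s → s ≤ 1 →
      ∫ ω in Ioi 1, ω ^ q * exp (-s * ω) ≤ B * s ^ (-max (q + 1) 0) := by
  rcases hq.lt_or_gt with hq | hq
  · refine ⟨-1 / (q + 1), fun s hs _ => ?_⟩
    rw [max_eq_right (by linarith), neg_zero, rpow_zero, mul_one]
    exact setIntegral_Ioi_one_rpow_mul_exp_neg_mul_le_of_lt hq hs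
  · refine ⟨Gamma (q + 1), fun s hs _ => ?_⟩
    rw [max_eq_left (by linarith)]
    exact setIntegral_Ioi_one_rpow_mul_exp_neg_mul_le_Gamma hq hs

end RpowExp

section LaplaceMoment

variable {g : ℝ → ℝ} {a b p q s : ℝ} (k : ℕ)

lemma abs_pow_mul_exp_neg_mul_mul_le (hs : 0 ≤ s) {ω : ℝ} (hω₀ : 0 ≤ ω) (hω₁ : ω ≤ 1)
    (x : ℝ) :
    |ω ^ k * exp (-s * ω) * x| ≤ |x| := by
  rw [abs_mul, abs_mul, abs_of_nonneg (by positivity), abs_of_pos (exp_pos _)]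
  have : ω ^ k * exp (-s * ω) ≤ 1 :=
    mul_le_one₀ (pow_le_one₀ hω₀ hω₁) (exp_pos _).le (exp_le_one_iff.mpr (by nlinarith))
  exact mul_le_of_le_one_left (abs_nonneg x) this

lemma abs_pow_mul_exp_neg_mul_mul_le_rpow {ω x : ℝ} (hω : 0 < ω) (hx : |x| ≤ b * ω ^ q) :
    |ω ^ k * exp (-s * ω) * x| ≤ b * (ω ^ ((k : ℝ) + q) * exp (-s * ω)) := by
  rw [abs_mul, abs_mul, abs_of_nonneg (by positivity), abs_of_pos (exp_pos _),
    rpow_add hω, rpow_natCast]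
  calc ω ^ k * exp (-s * ω) * |x| ≤ ω ^ k * exp (-s * ω) * (b * ω ^ q) := by gcongr
    _ = _ := by ring

lemma integrableOn_pow_mul_exp_neg_mul_mul
    (hg : AEStronglyMeasurable g (volume.restrict (Ioi 0))) (hp : -1 < p)
    (h_small : ∀ ω ∈ Ioc 0 1, |g ω| ≤ a * ω ^ p) (h_large : ∀ ω, 1 ≤ ω → |g ω| ≤ b * ω ^ q)
    (hs : 0 < s) :
    IntegrableOn (fun ω => ω ^ k * exp (-s * ω) * g ω) (Ioi 0) := by
  have h_meas : AEStronglyMeasurable (fun ω => ω ^ k * exp (-s * ω) * g ω)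
      (volume.restrict (Ioi 0)) := by fun_prop
  rw [← Ioc_union_Ioi_eq_Ioi zero_le_one]
  refine IntegrableOn.union ?_ ?_
  · refine (((intervalIntegral.intervalIntegrable_rpow' hp).1).const_mul a).mono'
      (h_meas.mono_measure (Measure.restrict_mono Ioc_subset_Ioi_self le_rfl)) ?_
    filter_upwards [ae_restrict_mem measurableSet_Ioc] with ω hω
    exact (abs_pow_mul_exp_neg_mul_mul_le k hs.le hω.1.le hω.2 _).trans (h_small ω hω)
  · refine ((integrableOn_Ioi_one_rpow_mul_exp_neg_mul ((k : ℝ) + q) hs).const_mul b).mono'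
      (h_meas.mono_measure (Measure.restrict_mono (Ioi_subset_Ioi zero_le_one) le_rfl)) ?_
    filter_upwards [ae_restrict_mem measurableSet_Ioi] with ω (hω : 1 < ω)
    exact abs_pow_mul_exp_neg_mul_mul_le_rpow k (by linarith) (h_large ω hω.le)

lemma exists_abs_setIntegral_pow_mul_exp_neg_mul_mul_le
    (hg : AEStronglyMeasurable g (volume.restrict (Ioi 0))) (hp : -1 < p)
    (hkq : (k : ℝ) + q ≠ -1) (h_small : ∀ ω ∈ Ioc 0 1, |g ω| ≤ a * ω ^ p)
    (h_large : ∀ ω, 1 ≤ ω → |g ω| ≤ b * ω ^ q) :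
    ∃ C > 0, (∀ s, 0 < s → IntegrableOn (fun ω => ω ^ k * exp (-s * ω) * g ω) (Ioi 0)) ∧
      ∀ s, 0 < s → s ≤ 1 →
        |∫ ω in Ioi 0, ω ^ k * exp (-s * ω) * g ω| ≤ C * s ^ (-max ((k : ℝ) + q + 1) 0) := by
  have ha : 0 ≤ a := by simpa using (abs_nonneg _).trans (h_small 1 ⟨one_pos, le_rfl⟩)
  have hb : 0 ≤ b := by simpa using (abs_nonneg _).trans (h_large 1 le_rfl)
  obtain ⟨B, hB⟩ := exists_setIntegral_Ioi_one_rpow_mul_exp_neg_mul_le hkq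
  refine ⟨max (a / (p + 1) + b * B) 1, by positivity,
    fun s hs => integrableOn_pow_mul_exp_neg_mul_mul k hg hp h_small h_large hs,
    fun s hs hs₁ => ?_⟩
  set m := max ((k : ℝ) + q + 1) 0
  have h_int := integrableOn_pow_mul_exp_neg_mul_mul k hg hp h_small h_large hs
  have h_one_le : 1 ≤ s ^ (-m) := one_le_rpow_of_pos_of_le_one_of_nonpos hs hs₁ (by simp [m])
  have h_near : |∫ ω in Ioc 0 1, ω ^ k * exp (-s * ω) * g ω| ≤ a / (p + 1) := by
    rw [← Real.norm_eq_abs]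
    refine (norm_integral_le_of_norm_le
      ((intervalIntegral.intervalIntegrable_rpow' hp).1.const_mul a) ?_).trans_eq ?_
    · filter_upwards [ae_restrict_mem measurableSet_Ioc] with ω hω
      exact (abs_pow_mul_exp_neg_mul_mul_le k hs.le hω.1.le hω.2 _).trans (h_small ω hω)
    · rw [integral_const_mul, ← intervalIntegral.integral_of_le zero_le_one,
        integral_rpow (.inl hp), one_rpow, zero_rpow (by linarith), sub_zero, mul_one_div]
  have h_far : |∫ ω in Ioi 1, ω ^ k * exp (-s * ω) * g ω| ≤ b * B * s ^ (-m) := by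
    rw [← Real.norm_eq_abs]
    refine (norm_integral_le_of_norm_le
      ((integrableOn_Ioi_one_rpow_mul_exp_neg_mul ((k : ℝ) + q) hs).const_mul b) ?_).trans ?_
    · filter_upwards [ae_restrict_mem measurableSet_Ioi] with ω (hω : 1 < ω)
      exact abs_pow_mul_exp_neg_mul_mul_le_rpow k (by linarith) (h_large ω hω.le)
    · rw [integral_const_mul, mul_assoc]
      exact mul_le_mul_of_nonneg_left (hB s hs hs₁) hb
  rw [← Ioc_union_Ioi_eq_Ioi zero_le_one, setIntegral_union (Ioc_disjoint_Ioi le_rfl)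
    measurableSet_Ioi (h_int.mono_set Ioc_subset_Ioi_self)
    (h_int.mono_set (Ioi_subset_Ioi zero_le_one))]
  calc _ ≤ a / (p + 1) + b * B * s ^ (-m) := (abs_add_le _ _).trans (add_le_add h_near h_far)
    _ ≤ (a / (p + 1) + b * B) * s ^ (-m) := by
        have : 0 ≤ a / (p + 1) := div_nonneg ha (by linarith)
        nlinarith
    _ ≤ max (a / (p + 1) + b * B) 1 * s ^ (-m) := by gcongr; exact le_max_left _ _

end LaplaceMoment

section Psiml

variable {α β ω : ℝ}

lemma measurable_psiml (α β : ℝ) : Measurable (psiml α β) := by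
  unfold psiml
  fun_prop

lemma sin_sq_le_psiml_denom (hω : 0 ≤ ω) :
    sin (π * α) ^ 2 ≤ ω ^ (2 * α) + 2 * ω ^ α * cos (π * α) + 1 := by
  rw [mul_comm 2 α, rpow_mul hω, rpow_two]
  nlinarith [sin_sq_add_cos_sq (π * α), sq_nonneg (ω ^ α + cos (π * α))]

lemma sin_sq_mul_rpow_le_psiml_denom (hω : 0 ≤ ω) :
    sin (π * α) ^ 2 * ω ^ (2 * α) ≤ ω ^ (2 * α) + 2 * ω ^ α * cos (π * α) + 1 := by
  rw [mul_comm 2 α, rpow_mul hω, rpow_two]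
  nlinarith [sin_sq_add_cos_sq (π * α), sq_nonneg (cos (π * α) * ω ^ α + 1)]

lemma abs_psiml_numer_le (hω : 0 ≤ ω) :
    |ω ^ (2 * α - β) * sin (π * β) - ω ^ (α - β) * sin (π * (β - α))| ≤
      |sin (π * β)| * ω ^ (2 * α - β) + ω ^ (α - β) := by
  refine (abs_sub _ _).trans (add_le_add ?_ ?_)
  · rw [abs_mul, abs_of_nonneg (by positivity), mul_comm]
  · rw [abs_mul, abs_of_nonneg (by positivity)]
    exact mul_le_of_le_one_right (by positivity) (abs_sin_le_one _)

lemma abs_psiml_le_rpow_add_rpow (hsin : sin (π * α) ≠ 0) (hω : 0 < ω) :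
    |psiml α β ω| ≤ (ω ^ (2 * α - β) + ω ^ (α - β)) / sin (π * α) ^ 2 := by
  have hD := sin_sq_le_psiml_denom (α := α) hω.le
  rw [psiml, abs_div, abs_of_pos ((by positivity : 0 < sin (π * α) ^ 2).trans_le hD)]
  refine div_le_div₀ (by positivity) ((abs_psiml_numer_le hω.le).trans ?_) (by positivity) hD
  gcongr
  exact mul_le_of_le_one_left (by positivity) (abs_sin_le_one _)

lemma abs_psiml_le_rpow_neg_add_rpow_neg (hsin : sin (π * α) ≠ 0) (hω : 0 < ω) :
    |psiml α β ω| ≤ (|sin (π * β)| * ω ^ (-β) + ω ^ (-α - β)) / sin (π * α) ^ 2 := by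
  have hD := sin_sq_mul_rpow_le_psiml_denom (α := α) hω.le
  have hD_pos : 0 < sin (π * α) ^ 2 * ω ^ (2 * α) := by positivity
  rw [psiml, abs_div, abs_of_pos (hD_pos.trans_le hD)]
  refine (div_le_div₀ (by positivity) (abs_psiml_numer_le hω.le) (by positivity) hD).trans_eq ?_
  rw [show 2 * α - β = 2 * α + -β by ring, show α - β = 2 * α + (-α - β) by ring,
    rpow_add hω, rpow_add hω]
  field_simp

lemma abs_psiml_le_of_le_one (hα : 0 ≤ α) (hsin : sin (π * α) ≠ 0) (hω : ω ∈ Ioc 0 1) :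
    |psiml α β ω| ≤ 2 / sin (π * α) ^ 2 * ω ^ (α - β) := by
  have h_le : ω ^ (2 * α - β) ≤ ω ^ (α - β) :=
    rpow_le_rpow_of_exponent_ge hω.1 hω.2 (by linarith)
  refine (abs_psiml_le_rpow_add_rpow hsin hω.1).trans ?_
  rw [div_mul_eq_mul_div]
  gcongr
  linarith

lemma abs_psiml_le_of_one_le (hα : 0 ≤ α) (hsin : sin (π * α) ≠ 0) (hω : 1 ≤ ω) :
    |psiml α β ω| ≤ 2 / sin (π * α) ^ 2 * ω ^ (-β) := by
  have h₁ : |sin (π * β)| * ω ^ (-β) ≤ ω ^ (-β) :=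
    mul_le_of_le_one_left (by positivity) (abs_sin_le_one _)
  have h₂ : ω ^ (-α - β) ≤ ω ^ (-β) := rpow_le_rpow_of_exponent_le hω (by linarith)
  refine (abs_psiml_le_rpow_neg_add_rpow_neg hsin (by linarith)).trans ?_
  rw [div_mul_eq_mul_div]
  gcongr
  linarith

lemma abs_psiml_one_le (hsin : sin (π * α) ≠ 0) (hω : 0 < ω) :
    |psiml α 1 ω| ≤ 1 / sin (π * α) ^ 2 * ω ^ (-α - 1) := by
  refine (abs_psiml_le_rpow_neg_add_rpow_neg hsin hω).trans_eq ?_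
  rw [mul_one, sin_pi, abs_zero, zero_mul, zero_add, div_mul_eq_mul_div, one_mul]

end Psiml

/-- For α ∈ (0,1), β < 1+α and k ∈ ℕ there exists C_k > 0
(depending only on α, β, k) such that the integrals ∫₀^∞ ω^k e^{−sω} ψ_{α,β}(ω) dω
converge absolutely for every s > 0 and, for all s ∈ (0,1]:
|∫₀^∞ ω^k e^{−sω} ψ_{α,β}(ω) dω| ≤ C_k s^{−max(k−β+1,0)} if β ≠ 1, and
|∫₀^∞ ω^k e^{−sω} ψ_{α,1}(ω) dω| ≤ C_k s^{−max(k−α,0)} if β = 1. -/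
theorem psiml_laplace_deriv_bound_small_s
    (α β : ℝ) (hα : α ∈ Set.Ioo (0 : ℝ) 1) (hβ : β < 1 + α) (k : ℕ) :
    ∃ C > (0 : ℝ),
      (∀ s : ℝ, 0 < s →
        IntegrableOn (fun ω : ℝ => ω ^ k * Real.exp (-s * ω) * psiml α β ω)
          (Set.Ioi 0)) ∧
      (∀ s : ℝ, 0 < s → s ≤ 1 →
        (β ≠ 1 →
          |∫ ω in Set.Ioi (0 : ℝ), ω ^ k * Real.exp (-s * ω) * psiml α β ω| ≤
            C * s ^ (-(max ((k : ℝ) - β + 1) 0))) ∧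
        (β = 1 →
          |∫ ω in Set.Ioi (0 : ℝ), ω ^ k * Real.exp (-s * ω) * psiml α β ω| ≤
            C * s ^ (-(max ((k : ℝ) - α) 0)))) := by
  obtain ⟨hα₀, hα₁⟩ := hα
  have hsin : sin (π * α) ≠ 0 :=
    (sin_pos_of_pos_of_lt_pi (by positivity) (by nlinarith [pi_pos])).ne'
  have hψ := (measurable_psiml α β).aestronglyMeasurable (μ := volume.restrict (Ioi 0))
  have hp : -1 < α - β := by linarith
  have h_small := fun ω (hω : ω ∈ Ioc 0 1) => abs_psiml_le_of_le_one (β := β) hα₀.le hsin hω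
  rcases eq_or_ne β 1 with rfl | hβ₁
  · have hkq : (k : ℝ) + (-α - 1) ≠ -1 := fun h => by
      have h₀ : (0 : ℝ) < k := by linarith
      have h₁ : (k : ℝ) < 1 := by linarith
      norm_cast at h₀ h₁
      omega
    obtain ⟨C, hC, h_int, h_bound⟩ := exists_abs_setIntegral_pow_mul_exp_neg_mul_mul_le k hψ hp
      hkq h_small fun ω hω => abs_psiml_one_le hsin (one_pos.trans_le hω)
    refine ⟨C, hC, h_int, fun s hs hs₁ => ⟨absurd rfl, fun _ => ?_⟩⟩
    convert h_bound s hs hs₁ using 5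
    ring
  · have hkq : (k : ℝ) + -β ≠ -1 := fun h => by
      have h₁ : (k : ℝ) < 1 := by linarith
      norm_cast at h₁
      obtain rfl : k = 0 := by omega
      exact hβ₁ (by simpa using h)
    obtain ⟨C, hC, h_int, h_bound⟩ := exists_abs_setIntegral_pow_mul_exp_neg_mul_mul_le k hψ hp
      hkq h_small fun ω hω => abs_psiml_le_of_one_le hα₀.le hsin hω
    refine ⟨C, hC, h_int, fun s hs hs₁ => ⟨fun _ => ?_, fun h => absurd h hβ₁⟩⟩
    convert h_bound s hs hs₁ using 5
    ring
end

section
/- Let f : (0,∞) → ℂ be measurable and integrable on (0,M) for every M > 0, and suppose there exist B ∈ ℂ and σ > −1 such that f(t)/t^σ → B as t → +∞. Then for every s ∈ ℂ with Re s > 0 the function t ↦ e^{−st} f(t) is absolutely integrable on (0,∞), and for every θ ∈ (0, π/2): for each ε > 0 there is δ > 0 such that every s ∈ ℂ with 0 < |s| ≤ δ and |arg(s)| ≤ θ satisfies |s^{σ+1} ∫₀^∞ e^{−st} f(t) dt − B·Γ(σ+1)| ≤ ε. In other words, ∫₀^∞ e^{−st} f(t) dt is asymptotically B·Γ(σ+1)/s^{σ+1}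 as s → 0 within the angular region |arg(s)| ≤ θ < π/2. -/
/-!
Write `f t = B t^σ + g t` with `g = o(t^σ)`. The Laplace transform of `t^σ` is exactly
`Γ(σ+1) / s^(σ+1)`: both sides are holomorphic on `Re s > 0` and agree on the positive reals
(the real Gamma integral), so the identity theorem applies. For `g`, fix `M` with
`‖g t‖ ≤ η t^σ` beyond `M`. The integral over `(0, M]` is bounded by `∫ ‖g‖`, which the factor
`|s|^(σ+1)` sends to `0`; the tail is at most `η Γ(σ+1) / (Re s)^(σ+1)`, and in the sector
`|arg s| ≤ θ` we have `Re s ≥ |s| cos θ`, so after multiplying by `|s|^(σ+1)` it stays below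
`η Γ(σ+1) / (cos θ)^(σ+1)`, which is small with `η`.
-/

open MeasureTheory Set Filter Topology Asymptotics

noncomputable def laplace (g : ℝ → ℂ) (s : ℂ) : ℂ :=
  ∫ t in Ioi (0 : ℝ), Complex.exp (-s * t) * g t

lemma norm_cexp_neg_mul_ofReal (s : ℂ) (t : ℝ) :
    ‖Complex.exp (-s * t)‖ = Real.exp (-(s.re * t)) := by
  simp [Complex.norm_exp]

lemma norm_cexp_neg_mul_ofReal_le_one {s : ℂ} {t : ℝ} (hs : 0 ≤ s.re) (ht : 0 ≤ t) :
    ‖Complex.exp (-s * t)‖ ≤ 1 := by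
  rw [norm_cexp_neg_mul_ofReal, Real.exp_le_one_iff, neg_nonpos]
  positivity

lemma integrableOn_rpow_mul_exp_neg_mul {σ a : ℝ} (hσ : -1 < σ) (ha : 0 < a) :
    IntegrableOn (fun t : ℝ => t ^ σ * Real.exp (-(a * t))) (Ioi 0) := by
  simpa [Real.rpow_one, neg_mul] using integrableOn_rpow_mul_exp_neg_mul_rpow hσ one_pos ha

lemma integral_rpow_mul_exp_neg_mul {σ a : ℝ} (hσ : -1 < σ) (ha : 0 < a) :
    ∫ t in Ioi (0 : ℝ), t ^ σ * Real.exp (-(a * t)) = Real.Gamma (σ + 1) / a ^ (σ + 1) := by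
  simpa [Real.inv_rpow ha.le, div_eq_inv_mul] using
    Real.integral_rpow_mul_exp_neg_mul_Ioi (by linarith : 0 < σ + 1) ha

lemma integrableOn_cexp_neg_mul_mul {g : ℝ → ℂ} {S : Set ℝ} (hg : IntegrableOn g S)
    (hS : MeasurableSet S) (hS0 : S ⊆ Ici 0) {s : ℂ} (hs : 0 ≤ s.re) :
    IntegrableOn (fun t : ℝ => Complex.exp (-s * t) * g t) S := by
  refine hg.bdd_mul (c := 1) (by fun_prop) ?_
  filter_upwards [ae_restrict_mem hS] with t ht
  exact norm_cexp_neg_mul_ofReal_le_one hs (hS0 ht)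

lemma norm_setIntegral_cexp_neg_mul_mul_le {g : ℝ → ℂ} {S : Set ℝ} (hg : IntegrableOn g S)
    (hS : MeasurableSet S) (hS0 : S ⊆ Ici 0) {s : ℂ} (hs : 0 ≤ s.re) :
    ‖∫ t in S, Complex.exp (-s * t) * g t‖ ≤ ∫ t in S, ‖g t‖ := by
  refine norm_integral_le_of_norm_le hg.norm ?_
  filter_upwards [ae_restrict_mem hS] with t ht
  rw [norm_mul]
  exact mul_le_of_le_one_left (norm_nonneg _) (norm_cexp_neg_mul_ofReal_le_one hs (hS0 ht))

lemma integrableOn_Ioi_cexp_neg_mul_mul_of_norm_le {g : ℝ → ℂ} {σ C M : ℝ} (hσ : -1 < σ)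
    (hM : 0 ≤ M) (hg : AEStronglyMeasurable g (volume.restrict (Ioi M)))
    (hb : ∀ t > M, ‖g t‖ ≤ C * t ^ σ) {s : ℂ} (hs : 0 < s.re) :
    IntegrableOn (fun t : ℝ => Complex.exp (-s * t) * g t) (Ioi M) := by
  have hdom : IntegrableOn (fun t : ℝ => C * (t ^ σ * Real.exp (-(s.re * t)))) (Ioi M) :=
    IntegrableOn.mono_set ((integrableOn_rpow_mul_exp_neg_mul hσ hs).const_mul C)
      (Ioi_subset_Ioi hM)
  refine hdom.mono' ((by fun_prop : Continuous _).aestronglyMeasurable.mul hg) ?_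
  filter_upwards [ae_restrict_mem measurableSet_Ioi] with t ht
  rw [norm_mul, norm_cexp_neg_mul_ofReal]
  calc Real.exp (-(s.re * t)) * ‖g t‖ ≤ Real.exp (-(s.re * t)) * (C * t ^ σ) := by
        gcongr; exact hb t ht
    _ = C * (t ^ σ * Real.exp (-(s.re * t))) := by ring

lemma norm_setIntegral_Ioi_cexp_neg_mul_mul_le {g : ℝ → ℂ} {σ η M : ℝ} (hσ : -1 < σ)
    (hM : 0 ≤ M) (hη : 0 ≤ η) (hb : ∀ t > M, ‖g t‖ ≤ η * t ^ σ) {s : ℂ} (hs : 0 < s.re) :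
    ‖∫ t in Ioi M, Complex.exp (-s * t) * g t‖ ≤ η * Real.Gamma (σ + 1) / s.re ^ (σ + 1) := by
  have hdom : IntegrableOn (fun t : ℝ => η * (t ^ σ * Real.exp (-(s.re * t)))) (Ioi 0) :=
    (integrableOn_rpow_mul_exp_neg_mul hσ hs).const_mul η
  calc ‖∫ t in Ioi M, Complex.exp (-s * t) * g t‖
      ≤ ∫ t in Ioi M, η * (t ^ σ * Real.exp (-(s.re * t))) := by
        refine norm_integral_le_of_norm_le (hdom.mono_set (Ioi_subset_Ioi hM)) ?_
        filter_upwards [ae_restrict_mem measurableSet_Ioi] with t ht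
        rw [norm_mul, norm_cexp_neg_mul_ofReal]
        calc Real.exp (-(s.re * t)) * ‖g t‖ ≤ Real.exp (-(s.re * t)) * (η * t ^ σ) := by
              gcongr; exact hb t ht
          _ = η * (t ^ σ * Real.exp (-(s.re * t))) := by ring
    _ ≤ ∫ t in Ioi 0, η * (t ^ σ * Real.exp (-(s.re * t))) := by
        refine setIntegral_mono_set hdom ?_ (Ioi_subset_Ioi hM).eventuallyLE
        filter_upwards [ae_restrict_mem measurableSet_Ioi] with t (ht : 0 < t)
        positivity
    _ = η * Real.Gamma (σ + 1) / s.re ^ (σ + 1) := by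
        rw [integral_const_mul, integral_rpow_mul_exp_neg_mul hσ hs, mul_div_assoc]

lemma integrableOn_laplace_of_norm_le {g : ℝ → ℂ} {σ C M : ℝ} (hσ : -1 < σ) (hM : 0 ≤ M)
    (hg : AEStronglyMeasurable g (volume.restrict (Ioi M))) (hloc : IntegrableOn g (Ioc 0 M))
    (hb : ∀ t > M, ‖g t‖ ≤ C * t ^ σ) {s : ℂ} (hs : 0 < s.re) :
    IntegrableOn (fun t : ℝ => Complex.exp (-s * t) * g t) (Ioi 0) := by
  rw [← Ioc_union_Ioi_eq_Ioi hM]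
  exact (integrableOn_cexp_neg_mul_mul hloc measurableSet_Ioc
    (Ioc_subset_Ioi_self.trans Ioi_subset_Ici_self) hs.le).union
    (integrableOn_Ioi_cexp_neg_mul_mul_of_norm_le hσ hM hg hb hs)

lemma norm_laplace_le {g : ℝ → ℂ} {σ η M : ℝ} (hσ : -1 < σ) (hM : 0 ≤ M) (hη : 0 ≤ η)
    (hg : AEStronglyMeasurable g (volume.restrict (Ioi M))) (hloc : IntegrableOn g (Ioc 0 M))
    (hb : ∀ t > M, ‖g t‖ ≤ η * t ^ σ) {s : ℂ} (hs : 0 < s.re) :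
    ‖laplace g s‖ ≤ (∫ t in Ioc 0 M, ‖g t‖) + η * Real.Gamma (σ + 1) / s.re ^ (σ + 1) := by
  have hS0 : Ioc 0 M ⊆ Ici 0 := Ioc_subset_Ioi_self.trans Ioi_subset_Ici_self
  rw [laplace, ← Ioc_union_Ioi_eq_Ioi hM, setIntegral_union (Ioc_disjoint_Ioi le_rfl)
    measurableSet_Ioi (integrableOn_cexp_neg_mul_mul hloc measurableSet_Ioc hS0 hs.le)
    (integrableOn_Ioi_cexp_neg_mul_mul_of_norm_le hσ hM hg hb hs)]
  exact (norm_add_le _ _).trans (add_le_add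
    (norm_setIntegral_cexp_neg_mul_mul_le hloc measurableSet_Ioc hS0 hs.le)
    (norm_setIntegral_Ioi_cexp_neg_mul_mul_le hσ hM hη hb hs))

lemma Asymptotics.IsBigOWith.exists_forall_gt_norm_le_mul_rpow {g : ℝ → ℂ} {c σ : ℝ}
    (h : IsBigOWith c atTop g fun t => ((t ^ σ : ℝ) : ℂ)) :
    ∃ M > 0, ∀ t > M, ‖g t‖ ≤ c * t ^ σ := by
  obtain ⟨M, hM⟩ := eventually_atTop.1 h.bound
  refine ⟨max M 1, by positivity, fun t ht => ?_⟩
  have ht0 : 0 ≤ t := zero_le_one.trans ((le_max_right _ _).trans ht.le)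
  simpa [abs_of_nonneg (Real.rpow_nonneg ht0 σ)] using hM t ((le_max_left _ _).trans ht.le)

lemma eventually_ofReal_rpow_ne_zero (σ : ℝ) : ∀ᶠ t : ℝ in atTop, ((t ^ σ : ℝ) : ℂ) ≠ 0 := by
  filter_upwards [eventually_gt_atTop 0] with t ht
  exact Complex.ofReal_ne_zero.2 (Real.rpow_pos_of_pos ht σ).ne'

lemma integrableOn_laplace_of_isBigO {g : ℝ → ℂ} {σ : ℝ} (hσ : -1 < σ)
    (hg : AEStronglyMeasurable g) (hloc : ∀ M > 0, IntegrableOn g (Ioc 0 M))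
    (hO : g =O[atTop] fun t => ((t ^ σ : ℝ) : ℂ)) {s : ℂ} (hs : 0 < s.re) :
    IntegrableOn (fun t : ℝ => Complex.exp (-s * t) * g t) (Ioi 0) := by
  obtain ⟨c, hc⟩ := hO.isBigOWith
  obtain ⟨M, hM, hb⟩ := hc.exists_forall_gt_norm_le_mul_rpow
  exact integrableOn_laplace_of_norm_le hσ hM.le hg.restrict (hloc M hM) hb hs

lemma laplace_add {f g : ℝ → ℂ} {s : ℂ}
    (hf : IntegrableOn (fun t : ℝ => Complex.exp (-s * t) * f t) (Ioi 0))
    (hg : IntegrableOn (fun t : ℝ => Complex.exp (-s * t) * g t) (Ioi 0)) :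
    laplace (f + g) s = laplace f s + laplace g s := by
  simp only [laplace, Pi.add_apply, mul_add]
  exact integral_add hf hg

lemma laplace_const_mul (c : ℂ) (f : ℝ → ℂ) (s : ℂ) :
    laplace (fun t => c * f t) s = c * laplace f s := by
  simp only [laplace, mul_left_comm _ c]
  exact integral_const_mul c _

lemma mul_exp_neg_mul_le {r t : ℝ} (hr : 0 < r) :
    t * Real.exp (-(r * t)) ≤ 2 / r * Real.exp (-(r / 2 * t)) := by
  have ht : t ≤ 2 / r * Real.exp (r / 2 * t) := by
    rw [div_mul_eq_mul_div, le_div_iff₀ hr]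
    linarith [Real.add_one_le_exp (r / 2 * t)]
  calc t * Real.exp (-(r * t)) ≤ 2 / r * Real.exp (r / 2 * t) * Real.exp (-(r * t)) := by
        gcongr
    _ = 2 / r * Real.exp (-(r / 2 * t)) := by
        rw [mul_assoc, ← Real.exp_add]
        ring_nf

lemma differentiableOn_laplace {g : ℝ → ℂ}
    (hg : AEStronglyMeasurable g (volume.restrict (Ioi 0)))
    (hint : ∀ s : ℂ, 0 < s.re → IntegrableOn (fun t : ℝ => Complex.exp (-s * t) * g t) (Ioi 0)) :
    DifferentiableOn ℂ (laplace g) {s | 0 < s.re} := by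
  intro z (hz : 0 < z.re)
  set r := z.re / 2 with hr_def
  have hr : 0 < r := half_pos hz
  have hball : ∀ w ∈ Metric.ball z r, r ≤ w.re := fun w hw => by
    have := (Complex.abs_re_le_norm (w - z)).trans (mem_ball_iff_norm.1 hw).le
    rw [Complex.sub_re, abs_le] at this
    linarith [hr_def]
  have hdom : IntegrableOn (fun t : ℝ => 2 / r * (Real.exp (-(r / 2 * t)) * ‖g t‖)) (Ioi 0) := by
    refine ((hint (r / 2 : ℝ) (by simpa using half_pos hr)).norm.const_mul (2 / r)).congr ?_
    refine Eventually.of_forall fun t => ?_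
    simp only [norm_mul, norm_cexp_neg_mul_ofReal, Complex.ofReal_re]
  refine (hasDerivAt_integral_of_dominated_loc_of_deriv_le (Metric.ball_mem_nhds z hr)
    (F' := fun w t => -(t : ℂ) * Complex.exp (-w * t) * g t) (Eventually.of_forall fun w =>
      (by fun_prop : Continuous fun t : ℝ => Complex.exp (-w * t)).aestronglyMeasurable.mul hg)
    (hint z hz) ((by fun_prop : Continuous fun t : ℝ => -(t : ℂ) * Complex.exp (-z * t)
      ).aestronglyMeasurable.mul hg)
    ?_ hdom ?_).2.differentiableAt.differentiableWithinAt
  · filter_upwards [ae_restrict_mem measurableSet_Ioi] with t (ht : 0 < t) w hw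
    calc ‖-(t : ℂ) * Complex.exp (-w * t) * g t‖ = t * Real.exp (-(w.re * t)) * ‖g t‖ := by
          rw [norm_mul, norm_mul, norm_neg, Complex.norm_real, Real.norm_of_nonneg ht.le,
            norm_cexp_neg_mul_ofReal]
      _ ≤ t * Real.exp (-(r * t)) * ‖g t‖ := by gcongr; exact hball w hw
      _ ≤ 2 / r * Real.exp (-(r / 2 * t)) * ‖g t‖ :=
          mul_le_mul_of_nonneg_right (mul_exp_neg_mul_le hr) (norm_nonneg _)
      _ = 2 / r * (Real.exp (-(r / 2 * t)) * ‖g t‖) := mul_assoc _ _ _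
  · refine Eventually.of_forall fun t w _ => ?_
    exact ((((hasDerivAt_neg w).mul_const (t : ℂ)).cexp).mul_const (g t)).congr_deriv
      (by ring)

lemma eqOn_re_pos_of_forall_ofReal_eq {F G : ℂ → ℂ} (hF : DifferentiableOn ℂ F {z | 0 < z.re})
    (hG : DifferentiableOn ℂ G {z | 0 < z.re}) (h : ∀ r : ℝ, 0 < r → F r = G r) :
    EqOn F G {z | 0 < z.re} := by
  have hU : IsOpen {z : ℂ | 0 < z.re} := isOpen_lt continuous_const Complex.continuous_re
  have hreal : Tendsto ((↑) : ℝ → ℂ) (𝓝[≠] 1) (𝓝[≠] 1) := by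
    rw [tendsto_nhdsWithin_iff]
    exact ⟨tendsto_nhdsWithin_of_tendsto_nhds Complex.continuous_ofReal.continuousAt,
      eventually_nhdsWithin_iff.2 (Eventually.of_forall fun t ht => Complex.ofReal_ne_one.2 ht)⟩
  refine (hF.analyticOnNhd hU).eqOn_of_preconnected_of_frequently_eq (hG.analyticOnNhd hU)
    (convex_halfSpace_re_gt 0).isPreconnected (z₀ := 1) (by simp)
    (hreal.frequently (Eventually.frequently (Eventually.filter_mono nhdsWithin_le_nhds ?_)))
  filter_upwards [eventually_gt_nhds zero_lt_one] with r hr using h r hr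

theorem laplace_rpow {σ : ℝ} (hσ : -1 < σ) {s : ℂ} (hs : 0 < s.re) :
    laplace (fun t => ((t ^ σ : ℝ) : ℂ)) s = Real.Gamma (σ + 1) / s ^ ((σ : ℂ) + 1) := by
  have hmeas : Measurable fun t : ℝ => ((t ^ σ : ℝ) : ℂ) := by fun_prop
  have hint (s : ℂ) (hs : 0 < s.re) :
      IntegrableOn (fun t : ℝ => Complex.exp (-s * t) * ((t ^ σ : ℝ) : ℂ)) (Ioi 0) :=
    integrableOn_laplace_of_norm_le (C := 1) hσ le_rfl hmeas.aestronglyMeasurable (by simp)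
      (fun t ht => by simp [abs_of_pos (Real.rpow_pos_of_pos ht σ)]) hs
  have hpow : DifferentiableOn ℂ (fun z : ℂ => Real.Gamma (σ + 1) / z ^ ((σ : ℂ) + 1))
      {z | 0 < z.re} := fun z (hz : 0 < z.re) =>
    ((differentiableAt_const _).div (differentiableAt_id.cpow_const (Or.inl hz))
      (by simp [Complex.cpow_eq_zero_iff, Complex.ne_zero_of_re_pos hz])).differentiableWithinAt
  refine eqOn_re_pos_of_forall_ofReal_eq
    (differentiableOn_laplace hmeas.aestronglyMeasurable hint) hpow (fun r hr => ?_) hs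
  have hcast : ((σ : ℂ) + 1) = ((σ + 1 : ℝ) : ℂ) := by push_cast; ring
  rw [laplace, hcast, ← Complex.ofReal_cpow hr.le, ← Complex.ofReal_div,
    ← integral_rpow_mul_exp_neg_mul hσ hr, ← integral_complex_ofReal]
  refine setIntegral_congr_fun measurableSet_Ioi fun t _ => ?_
  push_cast
  rw [neg_mul, mul_comm]

lemma norm_mul_cos_le_re {s : ℂ} {θ : ℝ} (h : |s.arg| ≤ θ) (hθ : θ ≤ Real.pi) :
    ‖s‖ * Real.cos θ ≤ s.re := by
  rw [← Complex.norm_mul_cos_arg s, ← Real.cos_abs s.arg]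
  exact mul_le_mul_of_nonneg_left (Real.cos_le_cos_of_nonneg_of_le_pi (abs_nonneg _) hθ h)
    (norm_nonneg _)

lemma norm_rpow_le_re_rpow_div {s : ℂ} {θ p : ℝ} (h : |s.arg| ≤ θ) (hθ : θ ≤ Real.pi)
    (hcos : 0 < Real.cos θ) (hp : 0 ≤ p) : ‖s‖ ^ p ≤ s.re ^ p / Real.cos θ ^ p := by
  rw [le_div_iff₀ (Real.rpow_pos_of_pos hcos p), ← Real.mul_rpow (norm_nonneg s) hcos.le]
  exact Real.rpow_le_rpow (by positivity) (norm_mul_cos_le_re h hθ) hp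

theorem tendsto_cpow_mul_laplace_of_isLittleO {g : ℝ → ℂ} {σ θ : ℝ} (hσ : -1 < σ)
    (hθ₀ : 0 ≤ θ) (hθ : θ < Real.pi / 2) (hg : AEStronglyMeasurable g)
    (hloc : ∀ M > 0, IntegrableOn g (Ioc 0 M)) (ho : g =o[atTop] fun t => ((t ^ σ : ℝ) : ℂ)) :
    Tendsto (fun s : ℂ => s ^ ((σ : ℂ) + 1) * laplace g s)
      (𝓝[{s | |s.arg| ≤ θ} \ {0}] 0) (𝓝 0) := by
  have hσ1 : 0 < σ + 1 := by linarith
  have hθπ : θ ≤ Real.pi := by linarith [Real.pi_pos]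
  have hcos : 0 < Real.cos θ := Real.cos_pos_of_mem_Ioo ⟨by linarith [Real.pi_pos], hθ⟩
  rw [Metric.tendsto_nhds]
  intro ε hε
  set η := ε * Real.cos θ ^ (σ + 1) / (2 * Real.Gamma (σ + 1)) with hη_def
  have hη : 0 < η := by positivity
  obtain ⟨M, hM, hb⟩ := (ho.forall_isBigOWith hη).exists_forall_gt_norm_le_mul_rpow
  set K := ∫ t in Ioc 0 M, ‖g t‖
  have hhead : ∀ᶠ s : ℂ in 𝓝 0, ‖s‖ ^ (σ + 1) * K < ε / 2 := by
    have hcont : Continuous fun s : ℂ => ‖s‖ ^ (σ + 1) * K :=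
      (continuous_norm.rpow_const fun _ => Or.inr hσ1.le).mul continuous_const
    refine hcont.continuousAt.eventually_lt continuousAt_const ?_
    simpa [Real.zero_rpow hσ1.ne'] using half_pos hε
  filter_upwards [nhdsWithin_le_nhds hhead, self_mem_nhdsWithin] with s hsK ⟨hs_arg, hs0⟩
  have hs0 : s ≠ 0 := hs0
  have hre : 0 < s.re :=
    (Complex.abs_arg_lt_pi_div_two_iff.1 (hs_arg.trans_lt hθ)).resolve_right hs0
  have hcast : (σ : ℂ) + 1 = ((σ + 1 : ℝ) : ℂ) := by push_cast; ring
  rw [dist_zero_right, norm_mul, hcast, Complex.norm_cpow_real]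
  calc ‖s‖ ^ (σ + 1) * ‖laplace g s‖
      ≤ ‖s‖ ^ (σ + 1) * (K + η * Real.Gamma (σ + 1) / s.re ^ (σ + 1)) := by
        gcongr
        exact norm_laplace_le hσ hM.le hη.le hg.restrict (hloc M hM) hb hre
    _ = ‖s‖ ^ (σ + 1) * K + ‖s‖ ^ (σ + 1) * (η * Real.Gamma (σ + 1) / s.re ^ (σ + 1)) := by
        ring
    _ ≤ ‖s‖ ^ (σ + 1) * K + s.re ^ (σ + 1) / Real.cos θ ^ (σ + 1) *
          (η * Real.Gamma (σ + 1) / s.re ^ (σ + 1)) := by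
        gcongr
        exact norm_rpow_le_re_rpow_div hs_arg hθπ hcos hσ1.le
    _ = ‖s‖ ^ (σ + 1) * K + ε / 2 := by
        rw [hη_def]
        field_simp
    _ < ε := by linarith

theorem tendsto_cpow_mul_laplace {f : ℝ → ℂ} {B : ℂ} {σ θ : ℝ} (hσ : -1 < σ)
    (hθ₀ : 0 ≤ θ) (hθ : θ < Real.pi / 2) (hf : AEStronglyMeasurable f)
    (hloc : ∀ M > 0, IntegrableOn f (Ioc 0 M))
    (hasymp : Tendsto (fun t => f t / ((t ^ σ : ℝ) : ℂ)) atTop (𝓝 B)) :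
    Tendsto (fun s : ℂ => s ^ ((σ : ℂ) + 1) * laplace f s)
      (𝓝[{s | |s.arg| ≤ θ} \ {0}] 0) (𝓝 (B * Real.Gamma (σ + 1))) := by
  set p : ℝ → ℂ := fun t => ((t ^ σ : ℝ) : ℂ)
  set g : ℝ → ℂ := fun t => f t - B * p t
  have hp_meas : Measurable p := by fun_prop
  have hp_loc (M : ℝ) (hM : 0 < M) : IntegrableOn p (Ioc 0 M) :=
    ((intervalIntegrable_iff_integrableOn_Ioc_of_le hM.le).1
      (intervalIntegral.intervalIntegrable_rpow' hσ)).ofReal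
  have hp_ne : ∀ᶠ t in atTop, p t ≠ 0 := eventually_ofReal_rpow_ne_zero σ
  have hg_meas : AEStronglyMeasurable g := hf.sub (hp_meas.aestronglyMeasurable.const_mul B)
  have hg_loc (M : ℝ) (hM : 0 < M) : IntegrableOn g (Ioc 0 M) :=
    (hloc M hM).sub ((hp_loc M hM).const_mul B)
  have hg_o : g =o[atTop] p := by
    refine (isLittleO_iff_tendsto' (hp_ne.mono fun t ht h => absurd h ht)).2 ?_
    refine (sub_self B ▸ hasymp.sub_const B).congr' ?_
    filter_upwards [hp_ne] with t ht
    simp only [g, sub_div, mul_div_cancel_right₀ B ht]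
    rfl
  have hlim := (tendsto_cpow_mul_laplace_of_isLittleO hσ hθ₀ hθ hg_meas hg_loc hg_o).add_const
    (B * Real.Gamma (σ + 1))
  rw [zero_add] at hlim
  refine hlim.congr' ?_
  filter_upwards [self_mem_nhdsWithin] with s ⟨hs_arg, hs0⟩
  have hs0 : s ≠ 0 := hs0
  have hre : 0 < s.re :=
    (Complex.abs_arg_lt_pi_div_two_iff.1 (hs_arg.trans_lt hθ)).resolve_right hs0
  have hf_eq : f = g + fun t => B * p t := by ext t; simp [g]
  have hpow_ne : s ^ ((σ : ℂ) + 1) ≠ 0 := by simp [Complex.cpow_eq_zero_iff, hs0]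
  rw [hf_eq, laplace_add (integrableOn_laplace_of_isBigO hσ hg_meas hg_loc hg_o.isBigO hre)
    (integrableOn_laplace_of_isBigO hσ (hp_meas.aestronglyMeasurable.const_mul B)
      (fun M hM => (hp_loc M hM).const_mul B) ((isBigO_refl p atTop).const_mul_left B) hre),
    laplace_const_mul, laplace_rpow hσ hre]
  field_simp

/-- **Watson-type lemma at 0.** Let f : (0,∞) → ℂ be measurable,
integrable on (0,M) for every M > 0, and suppose f(t)/t^σ → B as t → +∞ for some
B ∈ ℂ and σ > −1. Then for every s with Re s > 0 the function t ↦ e^{−st} f(t) is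
absolutely integrable on (0,∞), and for every θ ∈ (0,π/2):
s^{σ+1} ∫₀^∞ e^{−st} f(t) dt → B·Γ(σ+1) as s → 0 in the sector |arg s| ≤ θ. -/
theorem laplace_asymptotics_at_zero
    (f : ℝ → ℂ) (hmeas : Measurable f)
    (hloc : ∀ M > (0 : ℝ), IntegrableOn f (Set.Ioo 0 M))
    (B : ℂ) (σ : ℝ) (hσ : -1 < σ)
    (hasymp : Filter.Tendsto (fun t : ℝ => f t / ((t ^ σ : ℝ) : ℂ))
      Filter.atTop (nhds B)) :
    (∀ s : ℂ, 0 < s.re →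
      IntegrableOn (fun t : ℝ => Complex.exp (-s * t) * f t) (Set.Ioi 0)) ∧
    (∀ θ : ℝ, 0 < θ → θ < Real.pi / 2 → ∀ ε > (0 : ℝ), ∃ δ > (0 : ℝ),
      ∀ s : ℂ, s ≠ 0 → ‖s‖ ≤ δ → |Complex.arg s| ≤ θ →
        ‖
          (s ^ ((σ : ℂ) + 1) *
              (∫ t in Set.Ioi (0 : ℝ), Complex.exp (-s * t) * f t) -
            B * (Real.Gamma (σ + 1) : ℂ))‖ ≤ ε) := by
  have hloc' : ∀ M > (0 : ℝ), IntegrableOn f (Ioc 0 M) :=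
    fun M hM => (integrableOn_Ioc_iff_integrableOn_Ioo).2 (hloc M hM)
  have hO : f =O[atTop] fun t => ((t ^ σ : ℝ) : ℂ) :=
    isBigO_of_div_tendsto_nhds
      ((eventually_ofReal_rpow_ne_zero σ).mono fun t ht h => absurd h ht) B hasymp
  refine ⟨fun s hs => integrableOn_laplace_of_isBigO hσ hmeas.aestronglyMeasurable hloc' hO hs,
    fun θ hθ₀ hθ ε hε => ?_⟩
  obtain ⟨δ, hδ, hclose⟩ := Metric.tendsto_nhdsWithin_nhds.1
    (tendsto_cpow_mul_laplace hσ hθ₀.le hθ hmeas.aestronglyMeasurable hloc' hasymp) ε hε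
  refine ⟨δ / 2, half_pos hδ, fun s hs0 hsδ hs_arg => ?_⟩
  rw [← dist_eq_norm]
  exact (hclose ⟨hs_arg, hs0⟩ (by rw [dist_zero_right]; linarith)).le
end

section
/- Let f : (0,∞) → ℂ be measurable such that t ↦ e^{−λt} f(t) is absolutely integrable on (0,∞) for every λ > 0, and suppose there exist A ∈ ℂ and δ > −1 such that f(t)/t^δ → A as t → 0⁺. Then for every θ ∈ (0, π/2): for each ε > 0 there is R > 0 such that every s ∈ ℂ with |s| ≥ R and |arg(s)| ≤ θ satisfies |s^{δ+1} ∫₀^∞ e^{−st} f(t) dt − A·Γ(δ+1)| ≤ ε. In other words, ∫₀^∞ e^{−st} f(t) dt is asymptotically A·Γ(δ+1)/s^{δ+1} as s → ∞ within the angular region |arg(s)| ≤ θ < π/2. -/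
/-!
Write `f = A t^δ + g` with `g = o(t^δ)` as `t → 0⁺`. For `Re s > 0` the Laplace transform of
`t^δ` is `Γ(δ+1) / s^(δ+1)` (the Gamma integral for real `s`, then analytic continuation), so
it suffices that `|s|^(δ+1) |ℒg(s)| → 0` in the sector, where `Re s ≥ cos θ · |s|`. Splitting the
integral at a small `η`, the part over `(0, η)`, where `|g t| ≤ ε t^δ`, contributes at most
`ε Γ(δ+1) / (cos θ)^(δ+1)`, and the tail is `O(exp (-η cos θ |s|))`, which beats every power
of `|s|`.
-/

open MeasureTheory Set Filter Topology Asymptotics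

noncomputable def laplaceTransform (g : ℝ → ℂ) (s : ℂ) : ℂ :=
  ∫ t in Ioi (0 : ℝ), Complex.exp (-s * t) * g t

lemma cexp_neg_mul_ofReal_eq (s : ℂ) (lam t : ℝ) :
    Complex.exp (-s * t) = Complex.exp (-(s - lam) * t) * (Real.exp (-lam * t) : ℂ) := by
  rw [Complex.ofReal_exp, ← Complex.exp_add]
  push_cast
  ring_nf

lemma mul_exp_neg_mul_le_inv {r : ℝ} (hr : 0 < r) (t : ℝ) : t * Real.exp (-(r * t)) ≤ r⁻¹ := by
  rw [Real.exp_neg, ← div_eq_mul_inv, div_le_iff₀ (Real.exp_pos _), ← div_eq_inv_mul,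
    le_div_iff₀' hr]
  linarith [Real.add_one_le_exp (r * t)]

section LaplaceIntegrand

variable {g : ℝ → ℂ} {lam : ℝ}

lemma aestronglyMeasurable_laplace_integrand
    (hg : IntegrableOn (fun t : ℝ => (Real.exp (-lam * t) : ℂ) * g t) (Ioi 0)) (s : ℂ) :
    AEStronglyMeasurable (fun t : ℝ => Complex.exp (-s * t) * g t) (volume.restrict (Ioi 0)) := by
  simp_rw [cexp_neg_mul_ofReal_eq s lam, mul_assoc]
  exact (Continuous.aestronglyMeasurable (by fun_prop)).mul hg.aestronglyMeasurable

lemma integrableOn_laplace_integrand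
    (hg : IntegrableOn (fun t : ℝ => (Real.exp (-lam * t) : ℂ) * g t) (Ioi 0))
    {s : ℂ} (hs : lam ≤ s.re) :
    IntegrableOn (fun t : ℝ => Complex.exp (-s * t) * g t) (Ioi 0) := by
  simp_rw [cexp_neg_mul_ofReal_eq s lam, mul_assoc]
  refine hg.bdd_mul (c := 1) (Continuous.aestronglyMeasurable (by fun_prop)) ?_
  filter_upwards [ae_restrict_mem measurableSet_Ioi] with t (ht : 0 < t)
  rw [norm_cexp_neg_mul_ofReal, Real.exp_le_one_iff, Complex.sub_re, Complex.ofReal_re]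
  nlinarith

lemma differentiableAt_laplaceTransform
    (hg : IntegrableOn (fun t : ℝ => (Real.exp (-lam * t) : ℂ) * g t) (Ioi 0))
    {z : ℂ} (hz : lam < z.re) :
    DifferentiableAt ℂ (laplaceTransform g) z := by
  set r := (z.re - lam) / 2 with hr_def
  have hr : 0 < r := by linarith
  have hball : ∀ w ∈ Metric.ball z r, lam + r ≤ w.re := fun w hw => by
    have := (Complex.abs_re_le_norm (w - z)).trans (mem_ball_iff_norm.1 hw).le
    rw [Complex.sub_re, abs_le] at this
    linarith
  refine (hasDerivAt_integral_of_dominated_loc_of_deriv_le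
    (F' := fun w t => -(t : ℂ) * (Complex.exp (-w * t) * g t))
    (bound := fun t => r⁻¹ * ‖(Real.exp (-lam * t) : ℂ) * g t‖)
    (Metric.ball_mem_nhds z hr)
    (Eventually.of_forall (aestronglyMeasurable_laplace_integrand hg))
    (integrableOn_laplace_integrand hg hz.le)
    ((Continuous.aestronglyMeasurable (by fun_prop)).mul
      (aestronglyMeasurable_laplace_integrand hg z))
    ?_ (hg.norm.const_mul _) ?_).2.differentiableAt
  · filter_upwards [ae_restrict_mem measurableSet_Ioi] with t (ht : 0 < t) w hw
    rw [cexp_neg_mul_ofReal_eq w lam, mul_assoc, norm_mul, norm_mul, ← mul_assoc,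
      norm_cexp_neg_mul_ofReal, norm_neg, Complex.norm_real, Real.norm_of_nonneg ht.le]
    refine mul_le_mul_of_nonneg_right ?_ (norm_nonneg _)
    calc t * Real.exp (-((w - lam).re * t)) ≤ t * Real.exp (-(r * t)) := by
          gcongr
          rw [Complex.sub_re, Complex.ofReal_re]
          linarith [hball w hw]
      _ ≤ r⁻¹ := mul_exp_neg_mul_le_inv hr t
  · refine Eventually.of_forall fun t w _ => ?_
    have : HasDerivAt (fun w : ℂ => -w * t) (-(t : ℂ)) w := by
      simpa using ((hasDerivAt_id w).neg.mul_const (t : ℂ))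
    simpa [mul_comm, mul_left_comm, mul_assoc] using this.cexp.mul_const (g t)

end LaplaceIntegrand

lemma integrableOn_exp_neg_mul_mul_rpow {δ lam : ℝ} (hδ : -1 < δ) (hlam : 0 < lam) :
    IntegrableOn (fun t : ℝ => (Real.exp (-lam * t) : ℂ) * ((t ^ δ : ℝ) : ℂ)) (Ioi 0) := by
  refine IntegrableOn.congr_fun
    ((integrableOn_rpow_mul_exp_neg_mul_rpow hδ one_pos hlam).ofReal (𝕜 := ℂ))
    (fun t _ => ?_) measurableSet_Ioi
  simp [mul_comm]

lemma laplaceTransform_rpow_ofReal {δ : ℝ} (hδ : -1 < δ) {r : ℝ} (hr : 0 < r) :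
    laplaceTransform (fun t => ((t ^ δ : ℝ) : ℂ)) r =
      Real.Gamma (δ + 1) / (r : ℂ) ^ ((δ : ℂ) + 1) := by
  calc laplaceTransform (fun t => ((t ^ δ : ℝ) : ℂ)) r
      = ∫ t in Ioi (0 : ℝ), ((t ^ (δ + 1 - 1) * Real.exp (-(r * t)) : ℝ) : ℂ) := by
        refine setIntegral_congr_fun measurableSet_Ioi fun t _ => ?_
        simp [Complex.ofReal_exp, mul_comm]
    _ = (((1 / r) ^ (δ + 1) * Real.Gamma (δ + 1) : ℝ) : ℂ) := by
        rw [integral_complex_ofReal, Real.integral_rpow_mul_exp_neg_mul_Ioi (by linarith) hr]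
    _ = Real.Gamma (δ + 1) / (r : ℂ) ^ ((δ : ℂ) + 1) := by
        rw [Real.div_rpow zero_le_one hr.le, Real.one_rpow]
        push_cast
        rw [Complex.ofReal_cpow hr.le]
        push_cast
        ring

lemma laplaceTransform_rpow {δ : ℝ} (hδ : -1 < δ) {s : ℂ} (hs : 0 < s.re) :
    laplaceTransform (fun t => ((t ^ δ : ℝ) : ℂ)) s = Real.Gamma (δ + 1) / s ^ ((δ : ℂ) + 1) := by
  let U : Set ℂ := {z | 0 < z.re}
  have hU : IsOpen U := isOpen_lt continuous_const Complex.continuous_re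
  have hL : DifferentiableOn ℂ (laplaceTransform fun t => ((t ^ δ : ℝ) : ℂ)) U := fun z hz =>
    (differentiableAt_laplaceTransform (integrableOn_exp_neg_mul_mul_rpow hδ (half_pos hz))
      (half_lt_self hz)).differentiableWithinAt
  have hΓ : DifferentiableOn ℂ (fun z : ℂ => (Real.Gamma (δ + 1) : ℂ) / z ^ ((δ : ℂ) + 1)) U :=
    fun z (hz : 0 < z.re) => by
      have hz₀ : z ≠ 0 := by rintro rfl; simp at hz
      exact ((differentiableAt_const _).div (differentiableAt_id.cpow_const (Or.inl hz))
        (by simp [hz₀])).differentiableWithinAt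
  have hofReal : Tendsto ((↑) : ℝ → ℂ) (𝓝[≠] 1) (𝓝[≠] 1) :=
    tendsto_nhdsWithin_iff.2 ⟨(Complex.continuous_ofReal.tendsto' 1 1 (by simp)).mono_left
      nhdsWithin_le_nhds, eventually_nhdsWithin_of_forall fun x hx => by simpa using hx⟩
  have hreal : ∀ᶠ r : ℝ in 𝓝[≠] 1, 0 < r :=
    eventually_nhdsWithin_of_eventually_nhds (eventually_gt_nhds one_pos)
  refine (hL.analyticOnNhd hU).eqOn_of_preconnected_of_frequently_eq (hΓ.analyticOnNhd hU)
    (convex_halfSpace_re_gt 0).isPreconnected (show (0 : ℝ) < (1 : ℂ).re by simp)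
    (hofReal.frequently (hreal.mono fun r hr => laplaceTransform_rpow_ofReal hδ hr).frequently) hs

lemma cos_mul_norm_le_re {θ : ℝ} {s : ℂ} (hθ : θ ≤ Real.pi) (hs : |s.arg| ≤ θ) :
    Real.cos θ * ‖s‖ ≤ s.re := by
  rw [← Complex.norm_mul_cos_arg s, mul_comm, ← Real.cos_abs s.arg]
  exact mul_le_mul_of_nonneg_left
    (Real.cos_le_cos_of_nonneg_of_le_pi (abs_nonneg _) hθ hs) (norm_nonneg _)

lemma norm_setIntegral_Ioo_laplace_integrand_le {g : ℝ → ℂ} {δ η ε : ℝ} (hδ : -1 < δ)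
    (hε : 0 ≤ ε) (hg : ∀ t ∈ Ioo 0 η, ‖g t‖ ≤ ε * t ^ δ) {s : ℂ} (hs : 0 < s.re) :
    ‖∫ t in Ioo 0 η, Complex.exp (-s * t) * g t‖ ≤ ε * Real.Gamma (δ + 1) / s.re ^ (δ + 1) := by
  have hint : IntegrableOn (fun t => ε * (t ^ δ * Real.exp (-(s.re * t)))) (Ioi 0) := by
    have := (integrableOn_rpow_mul_exp_neg_mul_rpow hδ one_pos hs).const_mul ε
    simp only [Real.rpow_one, neg_mul] at this
    exact this
  have hΓ := Real.integral_rpow_mul_exp_neg_mul_Ioi (a := δ + 1) (by linarith) hs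
  rw [add_sub_cancel_right] at hΓ
  calc ‖∫ t in Ioo 0 η, Complex.exp (-s * t) * g t‖
      ≤ ∫ t in Ioo 0 η, ε * (t ^ δ * Real.exp (-(s.re * t))) := by
        refine norm_integral_le_of_norm_le (hint.mono_set Ioo_subset_Ioi_self)
          (ae_restrict_of_forall_mem measurableSet_Ioo fun t ht => ?_)
        rw [norm_mul, norm_cexp_neg_mul_ofReal, mul_comm, ← mul_assoc]
        exact mul_le_mul_of_nonneg_right (hg t ht) (Real.exp_pos _).le
    _ ≤ ∫ t in Ioi 0, ε * (t ^ δ * Real.exp (-(s.re * t))) :=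
        setIntegral_mono_set hint
          (ae_restrict_of_forall_mem measurableSet_Ioi fun t (ht : 0 < t) => by positivity)
          Ioo_subset_Ioi_self.eventuallyLE
    _ = ε * Real.Gamma (δ + 1) / s.re ^ (δ + 1) := by
        simp_rw [integral_const_mul, hΓ, Real.div_rpow zero_le_one hs.le, Real.one_rpow]
        ring

lemma norm_setIntegral_Ici_laplace_integrand_le {g : ℝ → ℂ} {lam η : ℝ}
    (hg : IntegrableOn (fun t : ℝ => (Real.exp (-lam * t) : ℂ) * g t) (Ioi 0)) (hη : 0 < η)
    {s : ℂ} (hs : lam ≤ s.re) :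
    ‖∫ t in Ici η, Complex.exp (-s * t) * g t‖ ≤
      Real.exp ((lam - s.re) * η) * ∫ t in Ioi 0, ‖(Real.exp (-lam * t) : ℂ) * g t‖ := by
  have hsub : Ici η ⊆ Ioi 0 := Ici_subset_Ioi.2 hη
  calc ‖∫ t in Ici η, Complex.exp (-s * t) * g t‖
      ≤ ∫ t in Ici η, Real.exp ((lam - s.re) * η) * ‖(Real.exp (-lam * t) : ℂ) * g t‖ := by
        refine norm_integral_le_of_norm_le ((IntegrableOn.mono_set hg.norm hsub).const_mul _)
          (ae_restrict_of_forall_mem measurableSet_Ici fun t (ht : η ≤ t) => ?_)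
        rw [cexp_neg_mul_ofReal_eq s lam, mul_assoc, norm_mul, norm_cexp_neg_mul_ofReal]
        gcongr
        rw [Complex.sub_re, Complex.ofReal_re]
        nlinarith
    _ ≤ Real.exp ((lam - s.re) * η) * ∫ t in Ioi 0, ‖(Real.exp (-lam * t) : ℂ) * g t‖ := by
        rw [integral_const_mul]
        exact mul_le_mul_of_nonneg_left (setIntegral_mono_set hg.norm
          (Eventually.of_forall fun t => norm_nonneg _) hsub.eventuallyLE) (Real.exp_pos _).le

lemma rpow_mul_norm_laplaceTransform_le {g : ℝ → ℂ} {lam δ η ε c : ℝ} (hδ : -1 < δ)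
    (hg : IntegrableOn (fun t : ℝ => (Real.exp (-lam * t) : ℂ) * g t) (Ioi 0)) (hη : 0 < η)
    (hε : 0 ≤ ε) (hsmall : ∀ t ∈ Ioo 0 η, ‖g t‖ ≤ ε * t ^ δ) (hc : 0 < c) {s : ℂ}
    (hcs : c * ‖s‖ ≤ s.re) (hs₀ : 0 < s.re) (hs : lam ≤ s.re) :
    ‖s‖ ^ (δ + 1) * ‖laplaceTransform g s‖ ≤
      ε * Real.Gamma (δ + 1) / c ^ (δ + 1) +
        Real.exp (lam * η) * (∫ t in Ioi 0, ‖(Real.exp (-lam * t) : ℂ) * g t‖) *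
          (‖s‖ ^ (δ + 1) * Real.exp (-(c * η) * ‖s‖)) := by
  set M := ∫ t in Ioi 0, ‖(Real.exp (-lam * t) : ℂ) * g t‖
  have hM : 0 ≤ M := setIntegral_nonneg measurableSet_Ioi fun t _ => norm_nonneg _
  have hint := integrableOn_laplace_integrand hg hs
  have hsplit : laplaceTransform g s = (∫ t in Ioo 0 η, Complex.exp (-s * t) * g t) +
      ∫ t in Ici η, Complex.exp (-s * t) * g t := by
    rw [laplaceTransform, ← Ioo_union_Ici_eq_Ioi hη]
    exact setIntegral_union ((Iio_disjoint_Ici le_rfl).mono_left Ioo_subset_Iio_self)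
      measurableSet_Ici (hint.mono_set Ioo_subset_Ioi_self) (hint.mono_set (Ici_subset_Ioi.2 hη))
  have hfront : ‖s‖ ^ (δ + 1) * (ε * Real.Gamma (δ + 1) / s.re ^ (δ + 1)) ≤
      ε * Real.Gamma (δ + 1) / c ^ (δ + 1) := by
    have hΓ : 0 ≤ ε * Real.Gamma (δ + 1) := mul_nonneg hε (Real.Gamma_pos_of_pos (by linarith)).le
    rw [mul_div_assoc', mul_comm, mul_div_assoc, div_eq_mul_one_div _ (c ^ (δ + 1))]
    refine mul_le_mul_of_nonneg_left ?_ hΓ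
    rw [div_le_div_iff₀ (by positivity) (by positivity), one_mul,
      ← Real.mul_rpow (norm_nonneg _) hc.le, mul_comm ‖s‖]
    exact Real.rpow_le_rpow (by positivity) hcs (by linarith)
  have htail : ‖s‖ ^ (δ + 1) * (Real.exp ((lam - s.re) * η) * M) ≤
      Real.exp (lam * η) * M * (‖s‖ ^ (δ + 1) * Real.exp (-(c * η) * ‖s‖)) := by
    have hexp : Real.exp ((lam - s.re) * η) ≤ Real.exp (lam * η) * Real.exp (-(c * η) * ‖s‖) := by
      rw [← Real.exp_add]
      gcongr
      nlinarith
    calc ‖s‖ ^ (δ + 1) * (Real.exp ((lam - s.re) * η) * M)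
        ≤ ‖s‖ ^ (δ + 1) * (Real.exp (lam * η) * Real.exp (-(c * η) * ‖s‖) * M) := by gcongr
      _ = _ := by ring
  calc ‖s‖ ^ (δ + 1) * ‖laplaceTransform g s‖
      ≤ ‖s‖ ^ (δ + 1) * (ε * Real.Gamma (δ + 1) / s.re ^ (δ + 1) +
          Real.exp ((lam - s.re) * η) * M) := by
        rw [hsplit]
        gcongr
        exact (norm_add_le _ _).trans (add_le_add
          (norm_setIntegral_Ioo_laplace_integrand_le hδ hε hsmall hs₀)
          (norm_setIntegral_Ici_laplace_integrand_le hg hη hs))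
    _ ≤ _ := by rw [mul_add]; exact add_le_add hfront htail

theorem exists_rpow_mul_norm_laplaceTransform_le {g : ℝ → ℂ} {lam δ θ ε : ℝ} (hδ : -1 < δ)
    (hg : IntegrableOn (fun t : ℝ => (Real.exp (-lam * t) : ℂ) * g t) (Ioi 0))
    (hgo : g =o[𝓝[>] 0] fun t => t ^ δ) (hθ : θ ∈ Ioo (-(Real.pi / 2)) (Real.pi / 2))
    (hε : 0 < ε) :
    ∃ R > 0, ∀ s : ℂ, R ≤ ‖s‖ → |s.arg| ≤ θ → ‖s‖ ^ (δ + 1) * ‖laplaceTransform g s‖ ≤ ε := by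
  set c := Real.cos θ
  have hc : 0 < c := Real.cos_pos_of_mem_Ioo hθ
  have hΓ : 0 < Real.Gamma (δ + 1) := Real.Gamma_pos_of_pos (by linarith)
  set ε' := ε * c ^ (δ + 1) / (2 * Real.Gamma (δ + 1))
  obtain ⟨η, hη, hsmall⟩ : ∃ η > 0, ∀ t ∈ Ioo 0 η, ‖g t‖ ≤ ε' * t ^ δ := by
    obtain ⟨η, hη, h⟩ := (nhdsGT_basis 0).eventually_iff.1 (hgo.def (c := ε') (by positivity))
    exact ⟨η, hη, fun t ht => by simpa [abs_of_pos (Real.rpow_pos_of_pos ht.1 δ)] using h ht⟩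
  set K := Real.exp (lam * η) * ∫ t in Ioi 0, ‖(Real.exp (-lam * t) : ℂ) * g t‖
  have htail : ∀ᶠ r in atTop, K * (r ^ (δ + 1) * Real.exp (-(c * η) * r)) ≤ ε / 2 := by
    have := (tendsto_rpow_mul_exp_neg_mul_atTop_nhds_zero (δ + 1) (c * η)
      (by positivity)).const_mul K
    rw [mul_zero] at this
    exact this.eventually (ge_mem_nhds (half_pos hε))
  obtain ⟨R, hR⟩ := eventually_atTop.1 (htail.and (eventually_gt_atTop (max 0 lam / c)))
  refine ⟨max R 1, by positivity, fun s hs harg => ?_⟩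
  obtain ⟨hsK, hsc⟩ := hR ‖s‖ ((le_max_left _ _).trans hs)
  have hcs : c * ‖s‖ ≤ s.re := cos_mul_norm_le_re (by linarith [hθ.2, Real.pi_pos]) harg
  have hs_re : max 0 lam < s.re := by
    rw [div_lt_iff₀' hc] at hsc
    linarith
  calc ‖s‖ ^ (δ + 1) * ‖laplaceTransform g s‖
      ≤ ε' * Real.Gamma (δ + 1) / c ^ (δ + 1) + K * (‖s‖ ^ (δ + 1) * Real.exp (-(c * η) * ‖s‖)) :=
        rpow_mul_norm_laplaceTransform_le hδ hg hη (by positivity) hsmall hc hcs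
          (le_max_left _ _ |>.trans_lt hs_re) (le_max_right _ _ |>.trans hs_re.le)
    _ ≤ ε / 2 + ε / 2 := by
        have hfront : ε' * Real.Gamma (δ + 1) / c ^ (δ + 1) = ε / 2 := by
          have : 0 < c ^ (δ + 1) := by positivity
          simp only [ε']
          field_simp
        linarith
    _ = ε := add_halves ε

lemma isLittleO_sub_const_mul_of_tendsto_div {α 𝕜 : Type*} [NormedField 𝕜] {l : Filter α}
    {f φ : α → 𝕜} {A : 𝕜} (h : Tendsto (fun x => f x / φ x) l (𝓝 A)) (hφ : ∀ᶠ x in l, φ x ≠ 0) :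
    (fun x => f x - A * φ x) =o[l] φ := by
  refine (isLittleO_iff_tendsto' (hφ.mono fun x hx h => absurd h hx)).2
    ((tendsto_sub_nhds_zero_iff.2 h).congr' (hφ.mono fun x hx => ?_))
  field_simp

lemma cpow_mul_laplaceTransform_sub_eq {f : ℝ → ℂ} {δ : ℝ} (hδ : -1 < δ) (A : ℂ) {s : ℂ}
    (hs : 0 < s.re) (hf : IntegrableOn (fun t : ℝ => Complex.exp (-s * t) * f t) (Ioi 0)) :
    s ^ ((δ : ℂ) + 1) * laplaceTransform f s - A * Real.Gamma (δ + 1) =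
      s ^ ((δ : ℂ) + 1) * laplaceTransform (fun t => f t - A * ((t ^ δ : ℝ) : ℂ)) s := by
  have hpow := integrableOn_laplace_integrand (integrableOn_exp_neg_mul_mul_rpow hδ hs) le_rfl
  have hs₀ : s ^ ((δ : ℂ) + 1) ≠ 0 := by
    have : s ≠ 0 := by rintro rfl; simp at hs
    simp [this]
  have hsub : laplaceTransform (fun t => f t - A * ((t ^ δ : ℝ) : ℂ)) s =
      laplaceTransform f s - A * laplaceTransform (fun t => ((t ^ δ : ℝ) : ℂ)) s := by
    simp_rw [laplaceTransform, mul_sub, mul_left_comm _ A, integral_sub hf (hpow.const_mul A),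
      integral_const_mul]
  rw [hsub, laplaceTransform_rpow hδ hs]
  field_simp

theorem laplace_asymptotics_at_infinity_general
    (f : ℝ → ℂ)
    (hint : ∀ lam : ℝ, 0 < lam →
      IntegrableOn (fun t : ℝ => (Real.exp (-lam * t) : ℂ) * f t) (Set.Ioi 0))
    (A : ℂ) (δ : ℝ) (hδ : -1 < δ)
    (hasymp : Filter.Tendsto (fun t : ℝ => f t / ((t ^ δ : ℝ) : ℂ))
      (nhdsWithin 0 (Set.Ioi 0)) (nhds A)) :
    ∀ θ : ℝ, 0 < θ → θ < Real.pi / 2 → ∀ ε > (0 : ℝ), ∃ R > (0 : ℝ),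
      ∀ s : ℂ, R ≤ ‖s‖ → |Complex.arg s| ≤ θ →
        ‖(s ^ ((δ : ℂ) + 1) *
              (∫ t in Set.Ioi (0 : ℝ), Complex.exp (-s * t) * f t) -
            A * (Real.Gamma (δ + 1) : ℂ))‖ ≤ ε := by
  intro θ hθ₀ hθ ε hε
  have hg : IntegrableOn (fun t : ℝ => (Real.exp (-1 * t) : ℂ) * (f t - A * ((t ^ δ : ℝ) : ℂ)))
      (Ioi 0) := by
    refine ((hint 1 one_pos).sub
      ((integrableOn_exp_neg_mul_mul_rpow hδ one_pos).const_mul A)).congr_fun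
      (fun t _ => ?_) measurableSet_Ioi
    simp only [Pi.sub_apply]
    ring
  have hgo : (fun t => f t - A * ((t ^ δ : ℝ) : ℂ)) =o[𝓝[>] 0] fun t => t ^ δ := by
    refine (isLittleO_sub_const_mul_of_tendsto_div hasymp ?_).trans_isBigO
      (isBigO_of_le _ fun t => by simp)
    filter_upwards [self_mem_nhdsWithin] with t (ht : 0 < t)
    exact_mod_cast (Real.rpow_pos_of_pos ht δ).ne'
  obtain ⟨R, hR, hRs⟩ :=
    exists_rpow_mul_norm_laplaceTransform_le hδ hg hgo ⟨by linarith, hθ⟩ hε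
  refine ⟨R, hR, fun s hs harg => ?_⟩
  have hs_re : 0 < s.re :=
    (mul_pos (Real.cos_pos_of_mem_Ioo ⟨by linarith, hθ⟩) (hR.trans_le hs)).trans_le
      (cos_mul_norm_le_re (by linarith [Real.pi_pos]) harg)
  rw [← laplaceTransform, cpow_mul_laplaceTransform_sub_eq hδ A hs_re
    (integrableOn_laplace_integrand (hint _ hs_re) le_rfl), norm_mul,
    ← Complex.ofReal_one, ← Complex.ofReal_add, Complex.norm_cpow_real]
  exact hRs s hs harg

/-- **Watson-type lemma at infinity.** Let f : (0,∞) → ℂ be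
measurable with t ↦ e^{−λt} f(t) absolutely integrable on (0,∞) for every λ > 0,
and suppose f(t)/t^δ → A as t → 0⁺ for some A ∈ ℂ and δ > −1. Then for every
θ ∈ (0,π/2): s^{δ+1} ∫₀^∞ e^{−st} f(t) dt → A·Γ(δ+1) as s → ∞ in the sector
|arg s| ≤ θ. -/
theorem laplace_asymptotics_at_infinity
    (f : ℝ → ℂ) (hmeas : Measurable f)
    (hint : ∀ lam : ℝ, 0 < lam →
      IntegrableOn (fun t : ℝ => (Real.exp (-lam * t) : ℂ) * f t) (Set.Ioi 0))
    (A : ℂ) (δ : ℝ) (hδ : -1 < δ)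
    (hasymp : Filter.Tendsto (fun t : ℝ => f t / ((t ^ δ : ℝ) : ℂ))
      (nhdsWithin 0 (Set.Ioi 0)) (nhds A)) :
    ∀ θ : ℝ, 0 < θ → θ < Real.pi / 2 → ∀ ε > (0 : ℝ), ∃ R > (0 : ℝ),
      ∀ s : ℂ, R ≤ ‖s‖ → |Complex.arg s| ≤ θ →
        ‖(s ^ ((δ : ℂ) + 1) *
              (∫ t in Set.Ioi (0 : ℝ), Complex.exp (-s * t) * f t) -
            A * (Real.Gamma (δ + 1) : ℂ))‖ ≤ ε :=
  laplace_asymptotics_at_infinity_general f hint A δ hδ hasymp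
end

section
/- Let λ₀ ∈ ℝ and let f : (0,∞) → ℂ be measurable such that t ↦ e^{−λt} f(t) is absolutely integrable on (0,∞) for every λ > λ₀. Then: (1) for every k ∈ ℕ and every s ∈ ℂ with Re s > λ₀, the function t ↦ t^k e^{−st} f(t) is absolutely integrable on (0,∞); (2) the Laplace transform F(s) = ∫₀^∞ e^{−st} f(t) dt is holomorphic on the half-plane {s ∈ ℂ : Re s > λ₀}; (3) for every k ∈ ℕ and every s with Re s > λ₀, the k-th derivative satisfies F^{(k)}(s) = (−1)^k ∫₀^∞ t^k e^{−st} f(t) dt. -/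
/-!
Write `tᵏ e^{-st} f(t) = (tᵏ e^{-(s-λ)t}) · (e^{-λt} f(t))` with `λ₀ < λ < Re s`. The first
factor is bounded by `k! / (Re s - λ)ᵏ` on `t ≥ 0`, the second is integrable by hypothesis.
This gives integrability and, uniformly for `s` in a small ball, an integrable bound for
differentiating under the integral sign: `s ↦ ∫ tʲ e^{-st} f(t) dt` has derivative
`-∫ tʲ⁺¹ e^{-st} f(t) dt` on the half-plane, and the formula for `F⁽ᵏ⁾` follows by induction.
-/

open MeasureTheory Set Filter Nat

theorem pow_mul_exp_neg_mul_le (n : ℕ) {ε t : ℝ} (hε : 0 < ε) (ht : 0 ≤ t) :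
    t ^ n * Real.exp (-ε * t) ≤ n ! / ε ^ n := by
  have h := Real.pow_div_factorial_le_exp (x := ε * t) (mul_nonneg hε.le ht) n
  rw [div_le_iff₀ (by positivity), mul_pow] at h
  rw [neg_mul, Real.exp_neg, ← div_eq_mul_inv,
    div_le_div_iff₀ (Real.exp_pos _) (by positivity)]
  linarith

theorem norm_pow_mul_cexp_neg_mul_le (n : ℕ) {ε t : ℝ} (hε : 0 < ε) (ht : 0 ≤ t) {w : ℂ}
    (hw : ε ≤ w.re) : ‖(t : ℂ) ^ n * Complex.exp (-w * t)‖ ≤ n ! / ε ^ n := by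
  have hnorm : ‖(t : ℂ) ^ n * Complex.exp (-w * t)‖ = t ^ n * Real.exp (-w.re * t) := by
    simp [Complex.norm_exp, abs_of_nonneg ht]
  calc ‖(t : ℂ) ^ n * Complex.exp (-w * t)‖
      = t ^ n * Real.exp (-w.re * t) := hnorm
    _ ≤ t ^ n * Real.exp (-ε * t) := by gcongr
    _ ≤ n ! / ε ^ n := pow_mul_exp_neg_mul_le n hε ht

theorem pow_mul_cexp_mul_eq (n : ℕ) (s z : ℂ) (lam t : ℝ) :
    (t : ℂ) ^ n * Complex.exp (-(s - lam) * t) * ((Real.exp (-lam * t) : ℂ) * z)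
      = (t : ℂ) ^ n * Complex.exp (-s * t) * z := by
  have hexp : Complex.exp (-(s - lam) * t) * Complex.exp (-lam * t) = Complex.exp (-s * t) := by
    rw [← Complex.exp_add]; ring_nf
  push_cast
  rw [← hexp]; ring

noncomputable def laplaceMoment (f : ℝ → ℂ) (k : ℕ) (s : ℂ) : ℂ :=
  ∫ t in Ioi (0 : ℝ), (t : ℂ) ^ k * Complex.exp (-s * t) * f t

section Laplace

variable {f : ℝ → ℂ} {lam : ℝ}

theorem integrableOn_pow_mul_cexp_mul
    (hf : IntegrableOn (fun t : ℝ => (Real.exp (-lam * t) : ℂ) * f t) (Ioi 0))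
    (k : ℕ) {s : ℂ} (hs : lam < s.re) :
    IntegrableOn (fun t : ℝ => (t : ℂ) ^ k * Complex.exp (-s * t) * f t) (Ioi 0) := by
  have hbound : ∀ᵐ (t : ℝ) ∂volume.restrict (Ioi (0 : ℝ)),
      ‖(t : ℂ) ^ k * Complex.exp (-(s - lam) * t)‖ ≤ k ! / (s.re - lam) ^ k := by
    filter_upwards [ae_restrict_mem measurableSet_Ioi] with t ht
    exact norm_pow_mul_cexp_neg_mul_le k (sub_pos.2 hs) (le_of_lt ht) (by simp)
  have hmeas : AEStronglyMeasurable
      (fun t : ℝ => (t : ℂ) ^ k * Complex.exp (-(s - lam) * t)) (volume.restrict (Ioi 0)) :=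
    (by fun_prop : Continuous fun t : ℝ => (t : ℂ) ^ k * Complex.exp (-(s - lam) * t))
      |>.aestronglyMeasurable
  simpa only [IntegrableOn, pow_mul_cexp_mul_eq] using hf.bdd_mul hmeas hbound

theorem hasDerivAt_laplaceMoment
    (hf : IntegrableOn (fun t : ℝ => (Real.exp (-lam * t) : ℂ) * f t) (Ioi 0))
    (j : ℕ) {s : ℂ} (hs : lam < s.re) :
    HasDerivAt (laplaceMoment f j) (-laplaceMoment f (j + 1) s) s := by
  set ε := (s.re - lam) / 2 with hε_def
  have hε : 0 < ε := by linarith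
  have hball : ∀ x ∈ Metric.ball s ε, ε ≤ (x - lam).re := fun x hx => by
    have := (abs_lt.1 ((Complex.abs_re_le_norm (x - s)).trans_lt (mem_ball_iff_norm.1 hx))).1
    simp only [Complex.sub_re, Complex.ofReal_re] at this ⊢
    linarith
  have hmeas : ∀ᶠ x in nhds s, AEStronglyMeasurable
      (fun t : ℝ => (t : ℂ) ^ j * Complex.exp (-x * t) * f t) (volume.restrict (Ioi 0)) := by
    filter_upwards [(isOpen_lt continuous_const Complex.continuous_re).mem_nhds hs] with x hx
    exact (integrableOn_pow_mul_cexp_mul hf j hx).aestronglyMeasurable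
  have hbound : ∀ᵐ (t : ℝ) ∂volume.restrict (Ioi (0 : ℝ)), ∀ x ∈ Metric.ball s ε,
      ‖-((t : ℂ) ^ (j + 1) * Complex.exp (-x * t) * f t)‖
        ≤ (j + 1)! / ε ^ (j + 1) * ‖(Real.exp (-lam * t) : ℂ) * f t‖ := by
    filter_upwards [ae_restrict_mem measurableSet_Ioi] with t ht x hx
    rw [norm_neg, ← pow_mul_cexp_mul_eq (j + 1) x (f t) lam t, norm_mul]
    gcongr
    exact norm_pow_mul_cexp_neg_mul_le (j + 1) hε (le_of_lt ht) (hball x hx)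
  have hdiff : ∀ᵐ (t : ℝ) ∂volume.restrict (Ioi (0 : ℝ)), ∀ x ∈ Metric.ball s ε,
      HasDerivAt (fun x : ℂ => (t : ℂ) ^ j * Complex.exp (-x * t) * f t)
        (-((t : ℂ) ^ (j + 1) * Complex.exp (-x * t) * f t)) x := by
    refine ae_of_all _ fun t x _ => ?_
    have hlin : HasDerivAt (fun x : ℂ => -x * t) (-1 * t) x :=
      (hasDerivAt_id x).neg.mul_const _
    refine ((hlin.cexp.const_mul ((t : ℂ) ^ j)).mul_const (f t)).congr_deriv ?_
    ring
  have h := hasDerivAt_integral_of_dominated_loc_of_deriv_le (Metric.ball_mem_nhds s hε) hmeas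
    (integrableOn_pow_mul_cexp_mul hf j hs)
    (integrableOn_pow_mul_cexp_mul hf (j + 1) hs).aestronglyMeasurable.neg
    hbound (hf.norm.const_mul _) hdiff
  rw [laplaceMoment, ← integral_neg]
  exact h.2

end Laplace

theorem iteratedDeriv_eq_neg_one_pow_smul_of_hasDerivAt {𝕜 F : Type*}
    [NontriviallyNormedField 𝕜] [NormedAddCommGroup F] [NormedSpace 𝕜 F] {g : ℕ → 𝕜 → F}
    {U : Set 𝕜} (hU : IsOpen U) (hg : ∀ j, ∀ x ∈ U, HasDerivAt (g j) (-g (j + 1) x) x)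
    (k j : ℕ) {x : 𝕜} (hx : x ∈ U) :
    iteratedDeriv k (g j) x = (-1 : 𝕜) ^ k • g (j + k) x := by
  induction k generalizing j with
  | zero => simp
  | succ k ih =>
    have hderiv : deriv (g j) =ᶠ[nhds x] fun y => -g (j + 1) y := by
      filter_upwards [hU.mem_nhds hx] with y hy
      exact (hg j y hy).deriv
    rw [iteratedDeriv_succ', hderiv.iteratedDeriv_eq, iteratedDeriv_fun_neg, ih (j + 1),
      pow_succ, mul_comm, mul_smul, neg_one_smul, Nat.add_right_comm, Nat.add_assoc]

theorem laplace_transform_holomorphic_general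
    (lam0 : ℝ) (f : ℝ → ℂ)
    (hint : ∀ lam : ℝ, lam0 < lam →
      IntegrableOn (fun t : ℝ => (Real.exp (-lam * t) : ℂ) * f t) (Set.Ioi 0)) :
    (∀ k : ℕ, ∀ s : ℂ, lam0 < s.re →
      IntegrableOn (fun t : ℝ => (t : ℂ) ^ k * Complex.exp (-s * t) * f t)
        (Set.Ioi 0)) ∧
    DifferentiableOn ℂ
      (fun s : ℂ => ∫ t in Set.Ioi (0 : ℝ), Complex.exp (-s * t) * f t)
      {s : ℂ | lam0 < s.re} ∧
    (∀ k : ℕ, ∀ s : ℂ, lam0 < s.re →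
      iteratedDeriv k
          (fun s : ℂ => ∫ t in Set.Ioi (0 : ℝ), Complex.exp (-s * t) * f t) s
        = (-1) ^ k *
            ∫ t in Set.Ioi (0 : ℝ), (t : ℂ) ^ k * Complex.exp (-s * t) * f t) := by
  have hU : IsOpen {s : ℂ | lam0 < s.re} := isOpen_lt continuous_const Complex.continuous_re
  have hderiv : ∀ j, ∀ s ∈ {s : ℂ | lam0 < s.re},
      HasDerivAt (laplaceMoment f j) (-laplaceMoment f (j + 1) s) s := fun j s hs => by
    obtain ⟨lam, hlam0, hlam⟩ := exists_between (α := ℝ) hs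
    exact hasDerivAt_laplaceMoment (hint lam hlam0) j hlam
  have hF : (fun s : ℂ => ∫ t in Set.Ioi (0 : ℝ), Complex.exp (-s * t) * f t)
      = laplaceMoment f 0 := by
    funext s
    simp only [laplaceMoment, pow_zero, one_mul]
  refine ⟨fun k s hs => ?_, ?_, fun k s hs => ?_⟩
  · obtain ⟨lam, hlam0, hlam⟩ := exists_between hs
    exact integrableOn_pow_mul_cexp_mul (hint lam hlam0) k hlam
  · rw [hF]
    exact fun s hs => (hderiv 0 s hs).differentiableAt.differentiableWithinAt
  · rw [hF, iteratedDeriv_eq_neg_one_pow_smul_of_hasDerivAt hU hderiv k 0 hs, zero_add,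
      smul_eq_mul, laplaceMoment]

/-- Let lam0 ∈ ℝ and f : (0,∞) → ℂ measurable with e^{−λt} f(t)
absolutely integrable on (0,∞) for every λ > lam0. Then (1) for every k ∈ ℕ and
Re s > lam0, t ↦ t^k e^{−st} f(t) is absolutely integrable on (0,∞); (2) the Laplace
transform F(s) = ∫₀^∞ e^{−st} f(t) dt is holomorphic on {Re s > lam0}; (3) for every
k and Re s > lam0, F^{(k)}(s) = (−1)^k ∫₀^∞ t^k e^{−st} f(t) dt. -/
theorem laplace_transform_holomorphic
    (lam0 : ℝ) (f : ℝ → ℂ) (hmeas : Measurable f)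
    (hint : ∀ lam : ℝ, lam0 < lam →
      IntegrableOn (fun t : ℝ => (Real.exp (-lam * t) : ℂ) * f t) (Set.Ioi 0)) :
    (∀ k : ℕ, ∀ s : ℂ, lam0 < s.re →
      IntegrableOn (fun t : ℝ => (t : ℂ) ^ k * Complex.exp (-s * t) * f t)
        (Set.Ioi 0)) ∧
    DifferentiableOn ℂ
      (fun s : ℂ => ∫ t in Set.Ioi (0 : ℝ), Complex.exp (-s * t) * f t)
      {s : ℂ | lam0 < s.re} ∧
    (∀ k : ℕ, ∀ s : ℂ, lam0 < s.re →
      iteratedDeriv k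
          (fun s : ℂ => ∫ t in Set.Ioi (0 : ℝ), Complex.exp (-s * t) * f t) s
        = (-1) ^ k *
            ∫ t in Set.Ioi (0 : ℝ), (t : ℂ) ^ k * Complex.exp (-s * t) * f t) :=
  laplace_transform_holomorphic_general lam0 f hint
end

section
/- Let (a_n)_{n∈ℕ} ⊂ ℂ and r > 0, and suppose that for every s ∈ ℂ with |s| > r the series Σ_{n=0}^∞ a_n · n! / s^{n+1} converges. Then: (1) for every t ∈ ℝ the series u(t) = Σ_{n=0}^∞ a_n t^n converges absolutely (so u is an entire function restricted to ℝ); (2) for every s ∈ ℂ with Re s > r, the function t ↦ e^{−st} u(t) is absolutely integrable on (0,∞) and ∫₀^∞ e^{−st} u(t) dt = Σ_{n=0}^∞ a_n · n! / s^{n+1}. -/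
/-!
Convergence of `∑ aₙ n!/ρⁿ⁺¹` at a real `ρ > r` forces its terms to be bounded, i.e.
`‖aₙ‖ ≤ C ρⁿ/n!`. Hence `∑ ‖aₙ tⁿ‖ ≤ C e^{ρ|t|}`, which gives (1) and, for `Re s > ρ`, the
integrable majorant `C e^{-(Re s - ρ)t}` of `e^{-st} u(t)`. Moreover
`∫₀^∞ |aₙ e^{-st} tⁿ| dt = ‖aₙ‖ n!/(Re s)ⁿ⁺¹ ≤ (C/Re s)(ρ/Re s)ⁿ` is summable, so the series may be
integrated termwise, and integration by parts gives `∫₀^∞ e^{-st} tⁿ dt = n!/sⁿ⁺¹`.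
-/

open MeasureTheory Filter Finset Set Topology
open scoped Nat

theorem tendsto_zero_of_tendsto_sum_range {G : Type*} [AddCommGroup G] [TopologicalSpace G]
    [IsTopologicalAddGroup G] {f : ℕ → G} {L : G}
    (h : Tendsto (fun N ↦ ∑ n ∈ range N, f n) atTop (𝓝 L)) : Tendsto f atTop (𝓝 0) := by
  simpa [sum_range_succ] using (h.comp (tendsto_add_atTop_nat 1)).sub h

theorem exists_norm_le_pow_div_factorial_of_tendsto {a : ℕ → ℂ} {s : ℂ} {L : ℂ} (hs : s ≠ 0)
    (h : Tendsto (fun N ↦ ∑ n ∈ range N, a n * n ! / s ^ (n + 1)) atTop (𝓝 L)) :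
    ∃ C, ∀ n, ‖a n‖ ≤ C * ‖s‖ ^ n / n ! := by
  obtain ⟨C, hC⟩ := (tendsto_zero_of_tendsto_sum_range h).norm.bddAbove_range
  refine ⟨C * ‖s‖, fun n ↦ ?_⟩
  have hn : ‖a n * n ! / s ^ (n + 1)‖ ≤ C := hC ⟨n, rfl⟩
  rw [norm_div, norm_mul, norm_pow, Complex.norm_natCast, div_le_iff₀ (by positivity)] at hn
  rw [le_div_iff₀ (by positivity)]
  calc ‖a n‖ * n ! ≤ C * ‖s‖ ^ (n + 1) := hn
    _ = C * ‖s‖ * ‖s‖ ^ n := by ring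

section ExponentialType

variable {𝕜 : Type*} [NormedField 𝕜] {a : ℕ → 𝕜} {C R : ℝ}

theorem norm_mul_pow_le_of_norm_le_pow_div_factorial (ha : ∀ n, ‖a n‖ ≤ C * R ^ n / n !)
    (z : 𝕜) (n : ℕ) : ‖a n * z ^ n‖ ≤ C * ((R * ‖z‖) ^ n / n !) := by
  rw [norm_mul, norm_pow, mul_pow, mul_div_assoc', ← mul_assoc, mul_div_right_comm]
  gcongr
  exact ha n

theorem summable_norm_mul_pow_of_norm_le_pow_div_factorial (ha : ∀ n, ‖a n‖ ≤ C * R ^ n / n !)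
    (z : 𝕜) : Summable fun n ↦ ‖a n * z ^ n‖ :=
  .of_nonneg_of_le (fun _ ↦ norm_nonneg _) (norm_mul_pow_le_of_norm_le_pow_div_factorial ha z)
    ((Real.summable_pow_div_factorial _).mul_left C)

theorem norm_tsum_mul_pow_le_of_norm_le_pow_div_factorial (ha : ∀ n, ‖a n‖ ≤ C * R ^ n / n !)
    (z : 𝕜) : ‖∑' n, a n * z ^ n‖ ≤ C * Real.exp (R * ‖z‖) := by
  have hexp : HasSum (fun n ↦ C * ((R * ‖z‖) ^ n / n !)) (C * Real.exp (R * ‖z‖)) :=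
    (Real.exp_eq_exp_ℝ ▸ NormedSpace.expSeries_div_hasSum_exp (R * ‖z‖)).mul_left C
  calc ‖∑' n, a n * z ^ n‖ ≤ ∑' n, ‖a n * z ^ n‖ :=
        norm_tsum_le_tsum_norm (summable_norm_mul_pow_of_norm_le_pow_div_factorial ha z)
    _ ≤ ∑' n, C * ((R * ‖z‖) ^ n / n !) :=
        (summable_norm_mul_pow_of_norm_le_pow_div_factorial ha z).tsum_le_tsum
          (norm_mul_pow_le_of_norm_le_pow_div_factorial ha z) hexp.summable
    _ = C * Real.exp (R * ‖z‖) := hexp.tsum_eq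

end ExponentialType

section LaplaceMonomial

variable {s : ℂ}

theorem norm_cexp_neg_mul_mul_pow (s : ℂ) {t : ℝ} (ht : 0 ≤ t) (n : ℕ) :
    ‖Complex.exp (-s * t) * (t : ℂ) ^ n‖ = t ^ n * Real.exp (-s.re * t) := by
  rw [norm_mul, norm_pow, Complex.norm_exp, Complex.norm_real, Real.norm_of_nonneg ht, mul_comm]
  simp

theorem integrableOn_pow_mul_exp_neg_mul {b : ℝ} (hb : 0 < b) (n : ℕ) :
    IntegrableOn (fun t : ℝ ↦ t ^ n * Real.exp (-b * t)) (Ioi 0) := by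
  simpa [Real.rpow_natCast] using
    integrableOn_rpow_mul_exp_neg_mul_rpow (s := n) (p := 1) (by linarith [n.cast_nonneg (α := ℝ)])
      one_pos hb

theorem integral_pow_mul_exp_neg_mul {b : ℝ} (hb : 0 < b) (n : ℕ) :
    ∫ t in Ioi (0 : ℝ), t ^ n * Real.exp (-b * t) = n ! / b ^ (n + 1) := by
  have := Real.integral_rpow_mul_exp_neg_mul_Ioi (a := n + 1) (by positivity) hb
  simp only [add_sub_cancel_right, Real.rpow_natCast] at this
  simp_rw [neg_mul]
  rw [this, Real.Gamma_nat_eq_factorial, ← Nat.cast_add_one, Real.rpow_natCast, div_pow,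
    one_pow]
  field_simp

theorem integrableOn_cexp_neg_mul_mul_pow (hs : 0 < s.re) (n : ℕ) :
    IntegrableOn (fun t : ℝ ↦ Complex.exp (-s * t) * (t : ℂ) ^ n) (Ioi 0) := by
  refine (integrableOn_pow_mul_exp_neg_mul hs n).mono' (by fun_prop) ?_
  filter_upwards [ae_restrict_mem measurableSet_Ioi] with t ht
  exact (norm_cexp_neg_mul_mul_pow s (le_of_lt ht) n).le

theorem integral_norm_cexp_neg_mul_mul_pow (hs : 0 < s.re) (n : ℕ) :
    ∫ t in Ioi (0 : ℝ), ‖Complex.exp (-s * t) * (t : ℂ) ^ n‖ = n ! / s.re ^ (n + 1) := by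
  rw [← integral_pow_mul_exp_neg_mul hs n]
  exact setIntegral_congr_fun measurableSet_Ioi fun t ht ↦
    norm_cexp_neg_mul_mul_pow s (le_of_lt ht) n

theorem tendsto_pow_mul_cexp_neg_mul_atTop (hs : 0 < s.re) (n : ℕ) :
    Tendsto (fun t : ℝ ↦ (t : ℂ) ^ n * Complex.exp (-s * t)) atTop (𝓝 0) := by
  rw [tendsto_zero_iff_norm_tendsto_zero]
  refine (tendsto_rpow_mul_exp_neg_mul_atTop_nhds_zero n s.re hs).congr' ?_
  filter_upwards [eventually_ge_atTop 0] with t ht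
  rw [Real.rpow_natCast, mul_comm ((t : ℂ) ^ n), norm_cexp_neg_mul_mul_pow s ht, mul_comm]

theorem integral_cexp_neg_mul (hs : 0 < s.re) :
    ∫ t in Ioi (0 : ℝ), Complex.exp (-s * t) = 1 / s := by
  rw [integral_exp_mul_complex_Ioi (by simpa using hs)]
  simp [neg_div]

theorem hasDerivAt_pow_succ_mul_cexp_neg_mul (s : ℂ) (n : ℕ) (t : ℝ) :
    HasDerivAt (fun t : ℝ ↦ (t : ℂ) ^ (n + 1) * Complex.exp (-s * t))
      ((n + 1) * (Complex.exp (-s * t) * (t : ℂ) ^ n)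
        - s * (Complex.exp (-s * t) * (t : ℂ) ^ (n + 1))) t := by
  have hpow : HasDerivAt (fun t : ℝ ↦ (t : ℂ) ^ (n + 1)) ((n + 1) * (t : ℂ) ^ n) t := by
    simpa using (hasDerivAt_pow (n + 1) (t : ℂ)).comp_ofReal
  have hlin : HasDerivAt (fun t : ℝ ↦ -s * t) (-s) t := by
    simpa using (hasDerivAt_id (t : ℂ)).comp_ofReal.const_mul (-s)
  exact (hpow.mul hlin.cexp).congr_deriv (by ring)

theorem integral_cexp_neg_mul_mul_pow_succ (hs : 0 < s.re) (n : ℕ) :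
    s * ∫ t in Ioi (0 : ℝ), Complex.exp (-s * t) * (t : ℂ) ^ (n + 1)
      = (n + 1) * ∫ t in Ioi (0 : ℝ), Complex.exp (-s * t) * (t : ℂ) ^ n := by
  have hint := ((integrableOn_cexp_neg_mul_mul_pow hs n).const_mul (n + 1 : ℂ)).sub
    ((integrableOn_cexp_neg_mul_mul_pow hs (n + 1)).const_mul s)
  have := integral_Ioi_of_hasDerivAt_of_tendsto'
    (fun t _ ↦ hasDerivAt_pow_succ_mul_cexp_neg_mul s n t) hint
    (tendsto_pow_mul_cexp_neg_mul_atTop hs (n + 1))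
  rw [integral_sub ((integrableOn_cexp_neg_mul_mul_pow hs n).const_mul _)
    ((integrableOn_cexp_neg_mul_mul_pow hs (n + 1)).const_mul _), integral_const_mul,
    integral_const_mul] at this
  simp only [Complex.ofReal_zero, ne_eq, Nat.add_one_ne_zero, not_false_eq_true, zero_pow,
    zero_mul, sub_zero] at this
  linear_combination -this

theorem integral_cexp_neg_mul_mul_pow (hs : 0 < s.re) (n : ℕ) :
    ∫ t in Ioi (0 : ℝ), Complex.exp (-s * t) * (t : ℂ) ^ n = n ! / s ^ (n + 1) := by
  have hs0 : s ≠ 0 := by rintro rfl; simp at hs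
  induction n with
  | zero => simpa using integral_cexp_neg_mul hs
  | succ n ih =>
    have := integral_cexp_neg_mul_mul_pow_succ hs n
    rw [ih] at this
    field_simp at this ⊢
    push_cast [Nat.factorial_succ]
    linear_combination this

end LaplaceMonomial

section LaplaceSeries

variable {a : ℕ → ℂ} {C R : ℝ} {s : ℂ}

theorem integrableOn_cexp_neg_mul_mul_tsum (ha : ∀ n, ‖a n‖ ≤ C * R ^ n / n !)
    (hRs : R < s.re) :
    IntegrableOn (fun t : ℝ ↦ Complex.exp (-s * t) * ∑' n, a n * (t : ℂ) ^ n) (Ioi 0) := by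
  have hu : Measurable fun t : ℝ ↦ ∑' n, a n * (t : ℂ) ^ n :=
    measurable_of_tendsto_metrizable
      (f := fun N (t : ℝ) ↦ ∑ n ∈ range N, a n * (t : ℂ) ^ n) (fun N ↦ by fun_prop) <|
        tendsto_pi_nhds.2 fun t ↦ (summable_norm_mul_pow_of_norm_le_pow_div_factorial ha
          (t : ℂ)).of_norm.hasSum.tendsto_sum_nat
  refine ((exp_neg_integrableOn_Ioi 0 (sub_pos.2 hRs)).const_mul C).mono'
    (by fun_prop) ?_
  filter_upwards [ae_restrict_mem measurableSet_Ioi] with t (ht : 0 < t)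
  have hnorm : ‖Complex.exp (-s * t)‖ = Real.exp (-s.re * t) := by simp [Complex.norm_exp]
  calc ‖Complex.exp (-s * t) * ∑' n, a n * (t : ℂ) ^ n‖
    _ = Real.exp (-s.re * t) * ‖∑' n, a n * (t : ℂ) ^ n‖ := by rw [norm_mul, hnorm]
    _ ≤ Real.exp (-s.re * t) * (C * Real.exp (R * t)) := by
      gcongr
      simpa [abs_of_pos ht] using norm_tsum_mul_pow_le_of_norm_le_pow_div_factorial ha (t : ℂ)
    _ = C * Real.exp (-(s.re - R) * t) := by
      rw [mul_left_comm, ← Real.exp_add]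
      ring_nf

theorem hasSum_integral_cexp_neg_mul_mul_tsum (ha : ∀ n, ‖a n‖ ≤ C * R ^ n / n !)
    (hR : 0 ≤ R) (hRs : R < s.re) :
    HasSum (fun n ↦ a n * n ! / s ^ (n + 1))
      (∫ t in Ioi (0 : ℝ), Complex.exp (-s * t) * ∑' n, a n * (t : ℂ) ^ n) := by
  have hs : 0 < s.re := hR.trans_lt hRs
  have hsum : Summable fun n ↦
      ∫ t in Ioi (0 : ℝ), ‖a n * (Complex.exp (-s * t) * (t : ℂ) ^ n)‖ := by
    refine .of_nonneg_of_le (fun n ↦ integral_nonneg fun _ ↦ norm_nonneg _) (fun n ↦ ?_)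
      ((summable_geometric_of_lt_one (by positivity) ((div_lt_one hs).2 hRs)).mul_left
        (C / s.re))
    simp_rw [norm_mul (a n)]
    rw [integral_const_mul, integral_norm_cexp_neg_mul_mul_pow hs]
    calc ‖a n‖ * (n ! / s.re ^ (n + 1)) ≤ C * R ^ n / n ! * (n ! / s.re ^ (n + 1)) := by
          gcongr
          exact ha n
      _ = C / s.re * (R / s.re) ^ n := by
          rw [div_pow, pow_succ]
          field_simp
  have hval (n : ℕ) : ∫ t in Ioi (0 : ℝ), a n * (Complex.exp (-s * t) * (t : ℂ) ^ n)
      = a n * n ! / s ^ (n + 1) := by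
    rw [integral_const_mul, integral_cexp_neg_mul_mul_pow hs, mul_div_assoc]
  have hfun : (fun t : ℝ ↦ Complex.exp (-s * t) * ∑' n, a n * (t : ℂ) ^ n)
      = fun t : ℝ ↦ ∑' n, a n * (Complex.exp (-s * t) * (t : ℂ) ^ n) := by
    ext t
    rw [← tsum_mul_left]
    congr 1 with n
    ring
  rw [hfun]
  simpa only [hval] using hasSum_integral_of_summable_integral_norm
    (fun n ↦ (integrableOn_cexp_neg_mul_mul_pow hs n).const_mul (a n)) hsum

end LaplaceSeries

/-- Let (a_n) ⊂ ℂ and r > 0 be such that for every s with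
|s| > r the series Σ_n a_n·n!/s^{n+1} converges. Then (1) for every t the series
u(t) = Σ_n a_n t^n converges absolutely; (2) for every s with Re s > r, the
function t ↦ e^{−st} u(t) is absolutely integrable on (0,∞) and its Laplace
transform equals the sum of the series Σ_n a_n·n!/s^{n+1}. -/
theorem laplace_transform_of_power_series
    (a : ℕ → ℂ) (r : ℝ) (hr : 0 < r)
    (hconv : ∀ s : ℂ, r < ‖s‖ →
      ∃ L : ℂ, Filter.Tendsto
        (fun N : ℕ => ∑ n ∈ Finset.range N,
          a n * (Nat.factorial n : ℂ) / s ^ (n + 1))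
        Filter.atTop (nhds L)) :
    (∀ t : ℝ, Summable (fun n : ℕ => ‖a n * (t : ℂ) ^ n‖)) ∧
    (∀ s : ℂ, r < s.re →
      IntegrableOn
        (fun t : ℝ => Complex.exp (-s * t) * ∑' n : ℕ, a n * (t : ℂ) ^ n)
        (Set.Ioi 0) ∧
      Filter.Tendsto
        (fun N : ℕ => ∑ n ∈ Finset.range N,
          a n * (Nat.factorial n : ℂ) / s ^ (n + 1))
        Filter.atTop
        (nhds (∫ t in Set.Ioi (0 : ℝ),
          Complex.exp (-s * t) * ∑' n : ℕ, a n * (t : ℂ) ^ n))) := by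
  have coeff_bound (ρ : ℝ) (hρ : r < ρ) : ∃ C, ∀ n, ‖a n‖ ≤ C * ρ ^ n / n ! := by
    have hρ0 : 0 < ρ := hr.trans hρ
    have hnorm : ‖(ρ : ℂ)‖ = ρ := Complex.norm_of_nonneg hρ0.le
    obtain ⟨L, hL⟩ := hconv ρ (by rwa [hnorm])
    simpa only [hnorm] using
      exists_norm_le_pow_div_factorial_of_tendsto (Complex.ofReal_ne_zero.2 hρ0.ne') hL
  refine ⟨fun t ↦ ?_, fun s hs ↦ ?_⟩
  · obtain ⟨C, hC⟩ := coeff_bound (r + 1) (lt_add_one r)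
    exact summable_norm_mul_pow_of_norm_le_pow_div_factorial hC _
  · obtain ⟨ρ, hrρ, hρs⟩ := exists_between hs
    obtain ⟨C, hC⟩ := coeff_bound ρ hrρ
    exact ⟨integrableOn_cexp_neg_mul_mul_tsum hC hρs,
      (hasSum_integral_cexp_neg_mul_mul_tsum hC (hr.trans hrρ).le hρs).tendsto_sum_nat⟩
end

section
/- Let λ ∈ ℝ and let f be holomorphic on the half-plane {s ∈ ℂ : Re s > λ}. Suppose there exist μ ≥ λ, α > 1 and M > 0 such that |f(s)| ≤ M |s|^{−α} for all s with Re s > μ. For x > μ define u(t) = (1/2π) ∫_{−∞}^{∞} e^{(x+iy)t} f(x+iy) dy. Then: (1) for every t ∈ ℝ the defining integral converges absolutely and u is continuous on ℝ; (2) the value u(t) is independent of the choice of x > μ; (3) u(t) = 0 for every t < 0; (4) for every s ∈ ℂ with Re s > μ, the function t ↦ e^{−st} u(t) is absolutely integrable on (0,∞) and ∫₀^∞ e^{−st} u(t) dt = f(s). That is, u given by the Riemann–Fourier formula is the inverse Laplace transform of f. -/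
/-!
On a vertical line `Re s = x > μ` the decay bound makes `y ↦ f (x + iy)` integrable, so the
Bromwich integral `∫ e^{(x+iy)t} f(x+iy) dy` is `e^{xt}` times a Fourier transform of it, hence
continuous in `t`. Cauchy's theorem on rectangles, whose horizontal sides vanish in the limit by
the decay of `f`, makes it independent of `x`. For `t < 0` it is at most `e^{xt}` times a constant
that is uniform in `x ≥ 1`, and `x → ∞` gives `u(t) = 0`. So `e^{-xt} u(t)` is integrable, i.e.
the Fourier transform of `y ↦ f(x + iy)` is integrable, and Fourier inversion at `y = Im s`, with
`x = Re s`, reads `∫₀^∞ e^{-st} u(t) dt = f(s)`.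
-/

open MeasureTheory Set Filter Topology Complex Bornology
open scoped Interval Real FourierTransform

theorem Complex.rpow_neg_norm_le {z : ℂ} (hz : 1 ≤ ‖z‖) {α : ℝ} (hα : 0 ≤ α) :
    ‖z‖ ^ (-α) ≤ 2 ^ α * (1 + |z.im|) ^ (-α) := by
  have hhalf : (1 + |z.im|) / 2 ≤ ‖z‖ := by linarith [abs_im_le_norm z]
  calc ‖z‖ ^ (-α) ≤ ((1 + |z.im|) / 2) ^ (-α) :=
        Real.rpow_le_rpow_of_nonpos (by positivity) hhalf (by linarith)
    _ = 2 ^ α * (1 + |z.im|) ^ (-α) := by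
        rw [Real.div_rpow (by positivity) zero_le_two, Real.rpow_neg zero_le_two, div_inv_eq_mul,
          mul_comm]

theorem MeasureTheory.Integrable.cexp_mul_vertical_line {f : ℂ → ℂ} {x : ℝ}
    (hf : Integrable fun y : ℝ => f (x + y * I)) (t : ℝ) :
    Integrable fun y : ℝ => cexp ((x + y * I) * t) * f (x + y * I) :=
  hf.bdd_mul (c := Real.exp (x * t)) (by fun_prop) (ae_of_all _ fun y => by simp [Complex.norm_exp])

theorem tendsto_integral_horizontal_segment {F : ℂ → ℂ} {x₁ x₂ : ℝ}
    (hF : ContinuousOn F (re ⁻¹' [[x₁, x₂]]))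
    (hdecay : Tendsto F (cobounded ℂ ⊓ 𝓟 (re ⁻¹' [[x₁, x₂]])) (𝓝 0))
    {b : ℝ → ℝ} (hb : Tendsto b atTop (cobounded ℝ)) :
    Tendsto (fun T => ∫ σ in x₁..x₂, F (σ + b T * I)) atTop (𝓝 0) := by
  have hmaps : ∀ T : ℝ, MapsTo (fun σ : ℝ => (σ + b T * I : ℂ)) [[x₁, x₂]] (re ⁻¹' [[x₁, x₂]]) :=
    fun T σ hσ => by simpa using hσ
  have hunif : TendstoUniformlyOn (fun (T σ : ℝ) => F (σ + b T * I)) 0 atTop [[x₁, x₂]] := by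
    rw [tendstoUniformlyOn_iff_tendsto]
    refine Uniform.tendsto_nhds_right.1 (hdecay.comp (tendsto_inf.2 ⟨?_, ?_⟩))
    · rw [← tendsto_norm_atTop_iff_cobounded]
      refine tendsto_atTop_mono (fun q => ?_)
        ((tendsto_norm_atTop_iff_cobounded.2 hb).comp tendsto_fst)
      simpa using abs_im_le_norm (q.2 + b q.1 * I : ℂ)
    · exact tendsto_principal.2 (mem_prod_principal.2 (Eventually.of_forall fun T σ hσ =>
        hmaps T hσ))
  simpa using hunif.tendsto_intervalIntegral_of_continuousOn (μ := volume)
    (Eventually.of_forall fun T =>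
      hF.comp (by fun_prop : Continuous fun σ : ℝ => (σ + b T * I : ℂ)).continuousOn (hmaps T))

theorem integral_vertical_line_eq_of_tendsto_zero {F : ℂ → ℂ} {x₁ x₂ : ℝ}
    (hF : DifferentiableOn ℂ F (re ⁻¹' [[x₁, x₂]]))
    (hdecay : Tendsto F (cobounded ℂ ⊓ 𝓟 (re ⁻¹' [[x₁, x₂]])) (𝓝 0))
    (h₁ : Integrable fun y : ℝ => F (x₁ + y * I))
    (h₂ : Integrable fun y : ℝ => F (x₂ + y * I)) :
    ∫ y : ℝ, F (x₁ + y * I) = ∫ y : ℝ, F (x₂ + y * I) := by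
  have hrect : ∀ T : ℝ,
      I • (∫ y in -T..T, F (x₂ + y * I)) - I • (∫ y in -T..T, F (x₁ + y * I)) =
        (∫ σ in x₁..x₂, F (σ + T * I)) - ∫ σ in x₁..x₂, F (σ + (-T : ℝ) * I) := by
    intro T
    have hsub : [[x₁, x₂]] ×ℂ [[-T, T]] ⊆ re ⁻¹' [[x₁, x₂]] := fun z hz => hz.1
    have := integral_boundary_rect_eq_zero_of_differentiableOn F (x₁ + (-T : ℝ) * I) (x₂ + T * I)
      (hF.mono (by simpa using hsub))
    simp only [add_re, ofReal_re, mul_re, I_re, I_im, ofReal_im, add_im, mul_im] at this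
    simp only [mul_zero, sub_zero, mul_one, zero_add, add_zero] at this
    linear_combination this
  have hvert := ((intervalIntegral_tendsto_integral h₂ tendsto_neg_atTop_atBot
    tendsto_id).const_smul I).sub
      ((intervalIntegral_tendsto_integral h₁ tendsto_neg_atTop_atBot tendsto_id).const_smul I)
  have hcob : Tendsto (fun T : ℝ => T) atTop (cobounded ℝ) :=
    tendsto_norm_atTop_iff_cobounded.1 tendsto_abs_atTop_atTop
  have hhor := (tendsto_integral_horizontal_segment hF.continuousOn hdecay hcob).sub
    (tendsto_integral_horizontal_segment hF.continuousOn hdecay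
      (tendsto_neg_cobounded.comp hcob))
  rw [sub_zero] at hhor
  have := tendsto_nhds_unique hvert (hhor.congr fun T => (hrect T).symm)
  rw [sub_eq_zero] at this
  exact (smul_right_injective ℂ I_ne_zero this).symm

-- Fourier inversion in angular frequency; Mathlib's `𝓕` has the kernel `e^{-2πiyτ}`.
theorem integral_cexp_mul_fourier_neg_div {g : ℝ → ℂ} (hg : Integrable g)
    (hFg : Integrable (𝓕 g)) {y : ℝ} (hy : ContinuousAt g y) :
    ∫ t : ℝ, cexp (-(y * t) * I) * 𝓕 g (-t / (2 * π)) = 2 * π * g y := by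
  have hsubst : ∀ t : ℝ, cexp (-(y * t) * I) * 𝓕 g (-t / (2 * π)) =
      cexp (↑(2 * π * inner ℝ (t / -(2 * π)) y) * I) • 𝓕 g (t / -(2 * π)) := by
    intro t
    rw [smul_eq_mul, Real.inner_apply, neg_div, div_neg]
    congr 3
    push_cast
    field_simp
  rw [integral_congr_ae (ae_of_all _ hsubst),
    Measure.integral_comp_div (fun τ => cexp (↑(2 * π * inner ℝ τ y) * I) • 𝓕 g τ),
    ← Real.fourierInv_eq', hg.fourierInv_fourier_eq hFg hy,
    abs_neg, abs_of_pos Real.two_pi_pos, Complex.real_smul]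
  push_cast
  ring

theorem integrable_cexp_neg_mul_of_norm_le {u : ℝ → ℂ} {a C : ℝ} {s : ℂ}
    (hu : AEStronglyMeasurable u) (hneg : ∀ t < 0, u t = 0)
    (hbound : ∀ t, 0 ≤ t → ‖u t‖ ≤ C * Real.exp (a * t)) (hs : a < s.re) :
    Integrable fun t : ℝ => cexp (-s * t) * u t := by
  have hmaj : Integrable ((Ici 0).indicator fun t => C * Real.exp (-(s.re - a) * t)) :=
    ((integrableOn_Ici_iff_integrableOn_Ioi).2
      ((exp_neg_integrableOn_Ioi 0 (sub_pos.2 hs)).const_mul C)).integrable_indicator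
      measurableSet_Ici
  refine hmaj.mono' ((by fun_prop : Continuous fun t : ℝ => cexp (-s * t)).aestronglyMeasurable.mul
    hu) (ae_of_all _ fun t => ?_)
  rcases lt_or_ge t 0 with ht | ht
  · rw [indicator_of_notMem (notMem_Ici.2 ht), hneg t ht, mul_zero, norm_zero]
  · rw [indicator_of_mem (mem_Ici.2 ht), norm_mul, Complex.norm_exp]
    calc Real.exp (-s * t).re * ‖u t‖ ≤ Real.exp (-s.re * t) * (C * Real.exp (a * t)) := by
          simpa using mul_le_mul_of_nonneg_left (hbound t ht) (Real.exp_pos (-s.re * t)).le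
      _ = C * Real.exp (-(s.re - a) * t) := by
          rw [mul_left_comm, ← Real.exp_add]
          ring_nf

noncomputable def bromwichIntegral (f : ℂ → ℂ) (x t : ℝ) : ℂ :=
  ∫ y : ℝ, cexp ((x + y * I) * t) * f (x + y * I)

theorem bromwichIntegral_eq_cexp_mul_fourier (f : ℂ → ℂ) (x t : ℝ) :
    bromwichIntegral f x t = cexp (x * t) * 𝓕 (fun y : ℝ => f (x + y * I)) (-t / (2 * π)) := by
  rw [bromwichIntegral, Real.fourier_real_eq_integral_exp_smul, ← integral_const_mul]
  congr 1 with y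
  rw [smul_eq_mul, ← mul_assoc, ← Complex.exp_add]
  congr 2
  push_cast
  field_simp

theorem norm_bromwichIntegral_le (f : ℂ → ℂ) (x t : ℝ) :
    ‖bromwichIntegral f x t‖ ≤ Real.exp (x * t) * ∫ y : ℝ, ‖f (x + y * I)‖ := by
  rw [bromwichIntegral_eq_cexp_mul_fourier, norm_mul, Complex.norm_exp]
  norm_cast
  exact mul_le_mul_of_nonneg_left
    (VectorFourier.norm_fourierIntegral_le_integral_norm _ _ _ _ _) (Real.exp_pos _).le

theorem continuous_bromwichIntegral {f : ℂ → ℂ} {x : ℝ}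
    (hf : Integrable fun y : ℝ => f (x + y * I)) : Continuous (bromwichIntegral f x) := by
  have hF : Continuous (𝓕 fun y : ℝ => f (x + y * I)) :=
    VectorFourier.fourierIntegral_continuous Real.continuous_fourierChar
      (innerSL ℝ).continuous₂ hf
  simp_rw [funext (bromwichIntegral_eq_cexp_mul_fourier f x)]
  fun_prop

section DecayOnHalfPlane

variable {μ M α : ℝ} {f : ℂ → ℂ}

theorem norm_le_two_rpow_mul_of_one_le_norm (hM : 0 ≤ M) (hα : 0 ≤ α)
    (hbound : ∀ s : ℂ, μ < s.re → ‖f s‖ ≤ M * ‖s‖ ^ (-α)) {s : ℂ} (hs : μ < s.re)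
    (hs₁ : 1 ≤ ‖s‖) : ‖f s‖ ≤ M * 2 ^ α * (1 + |s.im|) ^ (-α) := by
  rw [mul_assoc]
  exact (hbound s hs).trans (mul_le_mul_of_nonneg_left (rpow_neg_norm_le hs₁ hα) hM)

theorem integral_norm_comp_vertical_line_le (hM : 0 ≤ M) (hα : 1 < α)
    (hbound : ∀ s : ℂ, μ < s.re → ‖f s‖ ≤ M * ‖s‖ ^ (-α)) {x : ℝ} (hx : μ < x) (hx₁ : 1 ≤ x) :
    ∫ y : ℝ, ‖f (x + y * I)‖ ≤ M * 2 ^ α * ∫ y : ℝ, (1 + |y|) ^ (-α) := by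
  rw [← integral_const_mul]
  refine integral_mono_of_nonneg (ae_of_all _ fun y => norm_nonneg _)
    ((integrable_one_add_norm (r := α) (by simpa using hα)).const_mul _)
    (ae_of_all _ fun y => ?_)
  have hs₁ : 1 ≤ ‖(x + y * I : ℂ)‖ :=
    hx₁.trans ((le_abs_self x).trans (by simpa using abs_re_le_norm (x + y * I : ℂ)))
  simpa using norm_le_two_rpow_mul_of_one_le_norm hM (by linarith) hbound (by simpa using hx) hs₁

theorem tendsto_cexp_mul_mul_cobounded_strip (hα : 0 < α)
    (hbound : ∀ s : ℂ, μ < s.re → ‖f s‖ ≤ M * ‖s‖ ^ (-α)) {x₁ x₂ : ℝ} (hx₁ : μ < x₁)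
    (hx₂ : μ < x₂) (t : ℝ) :
    Tendsto (fun z : ℂ => cexp (z * t) * f z) (cobounded ℂ ⊓ 𝓟 (re ⁻¹' [[x₁, x₂]])) (𝓝 0) := by
  have hdecay : Tendsto (fun z : ℂ => Real.exp (max (x₁ * t) (x₂ * t)) * (M * ‖z‖ ^ (-α)))
      (cobounded ℂ) (𝓝 0) := by
    simpa using (((tendsto_rpow_neg_atTop hα).comp tendsto_norm_cobounded_atTop).const_mul
      M).const_mul (Real.exp (max (x₁ * t) (x₂ * t)))
  refine squeeze_zero_norm' ?_ (hdecay.mono_left inf_le_left)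
  filter_upwards [mem_inf_of_right (mem_principal_self _)] with z hz
  have hzt : z.re * t ∈ [[x₁ * t, x₂ * t]] := by
    rw [← image_mul_const_uIcc]
    exact mem_image_of_mem _ hz
  rw [norm_mul, Complex.norm_exp]
  exact mul_le_mul (Real.exp_le_exp.2 (by simpa using hzt.2))
    (hbound z ((lt_min hx₁ hx₂).trans_le hz.1)) (norm_nonneg _) (Real.exp_pos _).le

variable (hf : DifferentiableOn ℂ f {s : ℂ | μ < s.re}) (hα : 1 < α) (hM : 0 ≤ M)
  (hbound : ∀ s : ℂ, μ < s.re → ‖f s‖ ≤ M * ‖s‖ ^ (-α))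
include hf hα hM hbound

theorem integrable_comp_vertical_line {x : ℝ} (hx : μ < x) :
    Integrable fun y : ℝ => f (x + y * I) := by
  have hcont : Continuous fun y : ℝ => f (x + y * I) :=
    hf.continuousOn.comp_continuous (by fun_prop) fun y => by simpa using hx
  refine hcont.locallyIntegrable.integrable_of_isBigO_cocompact ?_
    ((integrable_one_add_norm (r := α) (by simpa using hα)).integrableAtFilter _)
  refine Asymptotics.IsBigO.of_bound (M * 2 ^ α) ?_
  filter_upwards [tendsto_norm_cocompact_atTop.eventually_ge_atTop 1] with y hy
  have hs₁ : 1 ≤ ‖(x + y * I : ℂ)‖ := hy.trans (by simpa using abs_im_le_norm (x + y * I : ℂ))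
  simpa [abs_of_nonneg (Real.rpow_nonneg (by positivity) _ : (0 : ℝ) ≤ (1 + |y|) ^ (-α))] using
    norm_le_two_rpow_mul_of_one_le_norm hM (by linarith) hbound (by simpa using hx) hs₁

theorem bromwichIntegral_independent_of_abscissa {x₁ x₂ : ℝ} (hx₁ : μ < x₁) (hx₂ : μ < x₂)
    (t : ℝ) : bromwichIntegral f x₁ t = bromwichIntegral f x₂ t := by
  have hstrip : re ⁻¹' [[x₁, x₂]] ⊆ {s : ℂ | μ < s.re} := fun z hz =>
    (lt_min hx₁ hx₂).trans_le hz.1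
  refine integral_vertical_line_eq_of_tendsto_zero (F := fun z : ℂ => cexp (z * t) * f z)
    ((by fun_prop : Differentiable ℂ fun z : ℂ => cexp (z * t)).differentiableOn.mul
      (hf.mono hstrip))
    (tendsto_cexp_mul_mul_cobounded_strip (by linarith) hbound hx₁ hx₂ t) ?_ ?_
  all_goals exact (integrable_comp_vertical_line hf hα hM hbound ‹_›).cexp_mul_vertical_line t

theorem bromwichIntegral_eq_zero_of_neg {x t : ℝ} (hx : μ < x) (ht : t < 0) :
    bromwichIntegral f x t = 0 := by
  set C := M * 2 ^ α * ∫ y : ℝ, (1 + |y|) ^ (-α)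
  have hlim : Tendsto (fun x' : ℝ => Real.exp (x' * t) * C) atTop (𝓝 0) := by
    simpa using (Real.tendsto_exp_atBot.comp
      ((tendsto_mul_const_atBot_of_neg ht).2 tendsto_id)).mul_const C
  have hle : ∀ᶠ x' in atTop, ‖bromwichIntegral f x t‖ ≤ Real.exp (x' * t) * C := by
    filter_upwards [eventually_gt_atTop μ, eventually_ge_atTop 1] with x' hx' hx'₁
    rw [bromwichIntegral_independent_of_abscissa hf hα hM hbound hx hx' t]
    exact (norm_bromwichIntegral_le f x' t).trans (mul_le_mul_of_nonneg_left
      (integral_norm_comp_vertical_line_le hM hα hbound hx' hx'₁) (Real.exp_pos _).le)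
  exact norm_le_zero_iff.1 (ge_of_tendsto hlim hle)

theorem integrable_cexp_neg_mul_bromwichIntegral {x : ℝ} (hx : μ < x) {s : ℂ} (hs : μ < s.re) :
    Integrable fun t : ℝ => cexp (-s * t) * bromwichIntegral f x t := by
  obtain ⟨x', hx', hx's⟩ := exists_between hs
  refine integrable_cexp_neg_mul_of_norm_le (a := x') (C := ∫ y : ℝ, ‖f (x' + y * I)‖)
    (continuous_bromwichIntegral (integrable_comp_vertical_line hf hα hM hbound
      hx)).aestronglyMeasurable
    (fun t ht => bromwichIntegral_eq_zero_of_neg hf hα hM hbound hx ht) (fun t _ => ?_) hx's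
  rw [bromwichIntegral_independent_of_abscissa hf hα hM hbound hx hx' t, mul_comm]
  exact norm_bromwichIntegral_le f x' t

theorem integral_cexp_neg_mul_bromwichIntegral {x : ℝ} (hx : μ < x) {s : ℂ} (hs : μ < s.re) :
    ∫ t : ℝ, cexp (-s * t) * bromwichIntegral f x t = 2 * π * f s := by
  set g := fun y : ℝ => f (s.re + y * I)
  have hfourier : ∀ (z : ℂ) (t : ℝ), z.re = s.re →
      cexp (-z * t) * bromwichIntegral f x t = cexp (-(z.im * t) * I) * 𝓕 g (-t / (2 * π)) := by
    intro z t hz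
    rw [bromwichIntegral_independent_of_abscissa hf hα hM hbound hx hs t,
      bromwichIntegral_eq_cexp_mul_fourier, ← mul_assoc, ← Complex.exp_add]
    congr 2
    apply Complex.ext <;> simp [hz]
  have hFg : Integrable (𝓕 g) := by
    have hint := integrable_cexp_neg_mul_bromwichIntegral hf hα hM hbound hx (s := s.re)
      (by simpa using hs)
    refine (integrable_comp_div_iff _ (neg_ne_zero.2 Real.two_pi_pos.ne')).1
      (hint.congr (ae_of_all _ fun t => ?_))
    dsimp only
    rw [hfourier _ t (ofReal_re s.re), ofReal_im, div_neg, neg_div]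
    simp
  simp_rw [hfourier s _ rfl]
  rw [integral_cexp_mul_fourier_neg_div (integrable_comp_vertical_line hf hα hM hbound hs) hFg
    (hf.continuousOn.comp_continuous (by fun_prop) fun y => by simpa using hs).continuousAt]
  simp only [re_add_im]

end DecayOnHalfPlane

/-- **Riemann–Fourier inversion formula.** Let f be holomorphic on
{Re s > λ} and suppose |f(s)| ≤ M|s|^{−α} for Re s > μ, with μ ≥ λ, α > 1, M > 0.
Then the function u(t) = (1/2π) ∫_{−∞}^{∞} e^{(x+iy)t} f(x+iy) dy (x > μ) is
well defined by an absolutely convergent integral, independent of x > μ,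
continuous on ℝ, vanishes for t < 0, and for every s with Re s > μ the function
t ↦ e^{−st} u(t) is absolutely integrable on (0,∞) with ∫₀^∞ e^{−st} u(t) dt = f(s);
that is, u is the inverse Laplace transform of f. -/
theorem riemann_fourier_inversion
    (lam : ℝ) (f : ℂ → ℂ)
    (hf : DifferentiableOn ℂ f {s : ℂ | lam < s.re})
    (μ M α : ℝ) (hμ : lam ≤ μ) (hα : 1 < α) (hM : 0 < M)
    (hbound : ∀ s : ℂ, μ < s.re →
      ‖f s‖ ≤ M * ‖s‖ ^ (-α)) :
    ∃ u : ℝ → ℂ,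
      (∀ x : ℝ, μ < x → ∀ t : ℝ,
        Integrable (fun y : ℝ =>
          Complex.exp ((x + y * Complex.I) * t) * f (x + y * Complex.I)) ∧
        u t = (1 / (2 * Real.pi)) *
          ∫ y : ℝ, Complex.exp ((x + y * Complex.I) * t) * f (x + y * Complex.I)) ∧
      Continuous u ∧
      (∀ t : ℝ, t < 0 → u t = 0) ∧
      (∀ s : ℂ, μ < s.re →
        IntegrableOn (fun t : ℝ => Complex.exp (-s * t) * u t) (Set.Ioi 0) ∧
        ∫ t in Set.Ioi (0 : ℝ), Complex.exp (-s * t) * u t = f s) := by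
  have hfμ : DifferentiableOn ℂ f {s : ℂ | μ < s.re} := hf.mono fun s hs => hμ.trans_lt hs
  have hμ₁ : μ < μ + 1 := lt_add_one μ
  have hline : ∀ x : ℝ, μ < x → Integrable fun y : ℝ => f (x + y * I) := fun x hx =>
    integrable_comp_vertical_line hfμ hα hM.le hbound hx
  have hvanish : ∀ t : ℝ, t < 0 → bromwichIntegral f (μ + 1) t = 0 := fun t ht =>
    bromwichIntegral_eq_zero_of_neg hfμ hα hM.le hbound hμ₁ ht
  refine ⟨fun t => 1 / (2 * π) * bromwichIntegral f (μ + 1) t,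
    fun x hx t => ⟨(hline x hx).cexp_mul_vertical_line t,
      congrArg _ (bromwichIntegral_independent_of_abscissa hfμ hα hM.le hbound hμ₁ hx t)⟩,
    continuous_const.mul (continuous_bromwichIntegral (hline _ hμ₁)),
    fun t ht => mul_eq_zero_of_right _ (hvanish t ht), fun s hs => ?_⟩
  have hint := integrable_cexp_neg_mul_bromwichIntegral hfμ hα hM.le hbound hμ₁ hs
  simp_rw [mul_left_comm (cexp _)]
  refine ⟨(hint.const_mul _).integrableOn, ?_⟩
  rw [← integral_Ici_eq_integral_Ioi, setIntegral_eq_integral_of_forall_compl_eq_zero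
    fun t ht => by rw [hvanish t (not_le.1 ht), mul_zero, mul_zero], integral_const_mul,
    integral_cexp_neg_mul_bromwichIntegral hfμ hα hM.le hbound hμ₁ hs]
  field_simp
end
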